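/- arXiv:1207.2475 — 5 statements merged into one kernel-verified Lean document; each statement's English description precedes it below -/
import Mathlib

section
/- Let {a_{nk} : 1 ≤ k ≤ n, n ∈ ℕ} be a triangular array of nonnegative integers. Suppose there exist nonnegative reals {p_j : j ≥ 0} with ∑_j p_j = 1 such that for every j, (1/n)∑_{k=1}^n 1(a_{nk} = j) → p_j as n → ∞, and (1/n)∑_{k=1}^n a_{nk} → ∑_j j p_j < ∞. Then max_{1≤k≤n} a_{nk}/n → 0 as n → ∞. -/
open Filter

/-- Triangular array lemma: if the empirical distribution of a triangular array of
nonnegative integers converges pointwise to a probability mass function `p` and the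
empirical means converge to the (finite) mean of `p`, then the maximal entry is `o(n)`. -/
theorem stmt3 (a : ℕ → ℕ → ℕ) (p : ℕ → ℝ)
    (hp : ∀ j, 0 ≤ p j) (hpsum : Summable p) (hp1 : ∑' j, p j = 1)
    (hmean : Summable (fun j : ℕ => (j : ℝ) * p j))
    (hconv : ∀ j : ℕ,
      Tendsto (fun n => (((Finset.range n).filter (fun k => a n k = j)).card : ℝ) / n)
        atTop (nhds (p j)))
    (hmeanconv :
      Tendsto (fun n => (∑ k ∈ Finset.range n, (a n k : ℝ)) / n)
        atTop (nhds (∑' (j : ℕ), (j : ℝ) * p j))) :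
    Tendsto (fun n => (((Finset.range n).sup (a n) : ℕ) : ℝ) / n) atTop (nhds 0) := by
  set μ := ∑' (j : ℕ), (j:ℝ) * p j with hμ
  rw [Metric.tendsto_atTop]
  intro ε hε
  -- choose M with small tail
  have hpartial : Tendsto (fun M => ∑ j ∈ Finset.range M, (j:ℝ) * p j) atTop (nhds μ) :=
    hmean.hasSum.tendsto_sum_nat
  have htail : Tendsto (fun M => μ - ∑ j ∈ Finset.range M, (j:ℝ) * p j) atTop (nhds 0) := by
    simpa using ((tendsto_const_nhds (x := μ)).sub hpartial)
  obtain ⟨M, hM⟩ := (htail.eventually_lt_const (show (0:ℝ) < ε/4 by linarith)).exists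
  -- T n : weighted partial empirical sum
  set T : ℕ → ℝ := fun n => ∑ j ∈ Finset.range M,
      (j:ℝ) * ((Finset.range n).filter (fun k => a n k = j)).card with hTdef
  have hT : Tendsto (fun n => T n / n) atTop (nhds (∑ j ∈ Finset.range M, (j:ℝ) * p j)) := by
    have heq : ∀ n : ℕ, T n / n = ∑ j ∈ Finset.range M,
        (j:ℝ) * ((((Finset.range n).filter (fun k => a n k = j)).card : ℝ) / n) := by
      intro n
      rw [hTdef, Finset.sum_div]
      exact Finset.sum_congr rfl fun j _ => mul_div_assoc _ _ _
    simp_rw [heq]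
    exact tendsto_finset_sum _ fun j _ => ((hconv j).const_mul _)
  -- key identity: T n equals the sum of small entries
  have key : ∀ n : ℕ, T n = ∑ k ∈ (Finset.range n).filter (fun k => a n k < M), (a n k : ℝ) := by
    intro n
    have h1 : ∑ k ∈ (Finset.range n).filter (fun k => a n k < M), (a n k : ℝ)
        = ∑ j ∈ Finset.range M, ∑ k ∈ ((Finset.range n).filter (fun k => a n k < M)).filter
            (fun k => a n k = j), (a n k : ℝ) :=
      (Finset.sum_fiberwise_of_maps_to
        (fun k hk => Finset.mem_range.mpr ((Finset.mem_filter.mp hk).2)) _).symm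
    rw [h1, hTdef]
    apply Finset.sum_congr rfl
    intro j hj
    rw [Finset.filter_filter]
    have hset : (Finset.range n).filter (fun k => a n k < M ∧ a n k = j)
        = (Finset.range n).filter (fun k => a n k = j) := by
      apply Finset.filter_congr
      intro k _
      simp only [Finset.mem_range] at hj
      constructor
      · exact fun h => h.2
      · exact fun h => ⟨h ▸ hj, h⟩
    rw [hset]
    rw [Finset.sum_congr rfl (fun k hk => by rw [(Finset.mem_filter.mp hk).2])]
    rw [Finset.sum_const, nsmul_eq_mul, mul_comm]
  -- tail sum nonneg
  have htail_nonneg : ∀ n : ℕ,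
      0 ≤ ∑ k ∈ (Finset.range n).filter (fun k => ¬ a n k < M), (a n k : ℝ) :=
    fun n => Finset.sum_nonneg fun k _ => by positivity
  -- split of total sum
  have hsplit : ∀ n : ℕ, (∑ k ∈ Finset.range n, (a n k : ℝ)) - T n
      = ∑ k ∈ (Finset.range n).filter (fun k => ¬ a n k < M), (a n k : ℝ) := by
    intro n
    rw [key n, ← Finset.sum_filter_add_sum_filter_not (Finset.range n) (fun k => a n k < M)
      (fun k => (a n k : ℝ))]
    ring
  -- sup bound
  have hsup : ∀ n : ℕ, (((Finset.range n).sup (a n) : ℕ) : ℝ)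
      ≤ M + ((∑ k ∈ Finset.range n, (a n k : ℝ)) - T n) := by
    intro n
    rw [hsplit n]
    by_cases h : (Finset.range n).sup (a n) < M
    · have : (((Finset.range n).sup (a n) : ℕ) : ℝ) ≤ M := by exact_mod_cast h.le
      linarith [htail_nonneg n]
    · push_neg at h
      rcases Nat.eq_zero_or_pos n with hn | hn
      · subst hn; simp
      · obtain ⟨k0, hk0mem, hk0⟩ := Finset.exists_mem_eq_sup (Finset.range n)
          (Finset.nonempty_range_iff.mpr hn.ne') (a n)
        have hk0f : k0 ∈ (Finset.range n).filter (fun k => ¬ a n k < M) := by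
          refine Finset.mem_filter.mpr ⟨hk0mem, ?_⟩
          rw [hk0] at h; omega
        have hle : (a n k0 : ℝ) ≤ ∑ k ∈ (Finset.range n).filter (fun k => ¬ a n k < M),
            (a n k : ℝ) :=
          Finset.single_le_sum (f := fun k => (a n k : ℝ)) (fun k _ => by positivity) hk0f
        rw [hk0]
        have : (0:ℝ) ≤ M := by positivity
        linarith
  -- convergence of the difference
  have hdiff : Tendsto (fun n => (∑ k ∈ Finset.range n, (a n k : ℝ)) / n - T n / n) atTop
      (nhds (μ - ∑ j ∈ Finset.range M, (j:ℝ) * p j)) := hmeanconv.sub hT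
  have hev1 : ∀ᶠ n in atTop, (∑ k ∈ Finset.range n, (a n k : ℝ)) / n - T n / n < ε/2 :=
    hdiff.eventually_lt_const (by linarith)
  have hMn : Tendsto (fun n : ℕ => (M:ℝ) / n) atTop (nhds 0) :=
    tendsto_const_div_atTop_nhds_zero_nat (M:ℝ)
  have hev2 : ∀ᶠ n : ℕ in atTop, (M:ℝ) / n < ε/2 := by
    have := hMn.eventually_lt_const (show (0:ℝ) < ε/2 by linarith)
    exact this
  have hev3 : ∀ᶠ n : ℕ in atTop, 1 ≤ n := eventually_ge_atTop 1
  obtain ⟨N, hN⟩ := ((hev1.and hev2).and hev3).exists_forall_of_atTop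
  refine ⟨N, fun n hn => ?_⟩
  obtain ⟨⟨h1, h2⟩, h3⟩ := hN n hn
  have hnpos : (0:ℝ) < n := by exact_mod_cast h3
  have hb : (((Finset.range n).sup (a n) : ℕ) : ℝ) / n
      ≤ (M:ℝ)/n + ((∑ k ∈ Finset.range n, (a n k : ℝ)) / n - T n / n) := by
    calc (((Finset.range n).sup (a n) : ℕ) : ℝ) / n
        ≤ (M + ((∑ k ∈ Finset.range n, (a n k : ℝ)) - T n)) / n := by
          gcongr
          exact hsup n
      _ = (M:ℝ)/n + ((∑ k ∈ Finset.range n, (a n k : ℝ)) / n - T n / n) := by ring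
  have hnn : 0 ≤ (((Finset.range n).sup (a n) : ℕ) : ℝ) / n := by positivity
  rw [Real.dist_eq, sub_zero, abs_of_nonneg hnn]
  linarith
end

section
/- Under the hypotheses of the triangular array lemma (empirical distribution of {a_{nk}} converges to {p_j} with convergent means), if X_n has distribution F_n(x) = (1/n)∑_{k=1}^n 1(a_{nk} ≤ x) and X has distribution F(x) = ∑_{j≤x} p_j, realized as X_n = F_n^{-1}(U), X = F^{-1}(U) for a common Uniform(0,1) variable U, then X_n → X almost surely and E[X_n 1(X_n > √n)] → 0 as n → ∞. -/
open Filter MeasureTheory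
open scoped ENNReal

/-- Generalized inverse `h⁻¹(u) = inf {x ≥ 0 : u ≤ h(x)}`. -/
noncomputable def genInv (h : ℝ → ℝ) (u : ℝ) : ℝ := sInf {x : ℝ | 0 ≤ x ∧ u ≤ h x}

lemma genInv_eq (h : ℝ → ℝ) (u : ℝ) (j : ℕ) (h1 : u ≤ h j)
    (h2 : ∀ x : ℝ, 0 ≤ x → x < j → h x < u) : genInv h u = j := by
  have hmem : (j : ℝ) ∈ {x : ℝ | 0 ≤ x ∧ u ≤ h x} := ⟨Nat.cast_nonneg j, h1⟩
  have hlb : ∀ x ∈ {x : ℝ | 0 ≤ x ∧ u ≤ h x}, (j : ℝ) ≤ x := by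
    intro x hx
    by_contra hc
    exact absurd hx.2 (not_le.mpr (h2 x hx.1 (not_le.mp hc)))
  exact le_antisymm (csInf_le ⟨j, hlb⟩ hmem) (le_csInf ⟨j, hmem⟩ hlb)

lemma genInv_nonneg (h : ℝ → ℝ) (u : ℝ) : 0 ≤ genInv h u := by
  unfold genInv
  rcases Set.eq_empty_or_nonempty {x : ℝ | 0 ≤ x ∧ u ≤ h x} with he | hne
  · rw [he, Real.sInf_empty]
  · exact le_csInf hne fun x hx => hx.1

/-- Quantile coupling for the triangular array lemma: with `X_n = F_n^{-1}(U)` and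
`X = F^{-1}(U)` for a common uniform `U` on `(0,1)`, one has `X_n → X` a.s. and
`E[X_n 1(X_n > √n)] → 0`. -/
theorem stmt4 (a : ℕ → ℕ → ℕ) (p : ℕ → ℝ)
    (hp : ∀ j, 0 ≤ p j) (hpsum : Summable p) (hp1 : ∑' (j : ℕ), p j = 1)
    (hmean : Summable (fun j : ℕ => (j : ℝ) * p j))
    (hconv : ∀ j : ℕ,
      Tendsto (fun n => (((Finset.range n).filter (fun k => a n k = j)).card : ℝ) / n)
        atTop (nhds (p j)))
    (hmeanconv :
      Tendsto (fun n => (∑ k ∈ Finset.range n, (a n k : ℝ)) / n)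
        atTop (nhds (∑' (j : ℕ), (j : ℝ) * p j)))
    (Fn : ℕ → ℝ → ℝ) (F : ℝ → ℝ)
    (hFn : ∀ n x, Fn n x = (((Finset.range n).filter (fun k => (a n k : ℝ) ≤ x)).card : ℝ) / n)
    (hF : ∀ x, F x = ∑' (j : ℕ), (if (j : ℝ) ≤ x then p j else 0)) :
    (∀ᵐ u ∂(volume.restrict (Set.Ioo (0 : ℝ) 1)),
        Tendsto (fun n => genInv (Fn n) u) atTop (nhds (genInv F u)))
    ∧ Tendsto
        (fun n : ℕ => ∫ u in Set.Ioo (0 : ℝ) 1,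
          (if Real.sqrt n < genInv (Fn n) u then genInv (Fn n) u else 0))
        atTop (nhds 0) := by
  classical
  -- partial sums
  set s : ℕ → ℝ := fun j => ∑ i ∈ Finset.range (j+1), p i with hs_def
  -- F at naturals
  have hF_nat : ∀ j : ℕ, F (j : ℝ) = s j := by
    intro j
    rw [hF]
    rw [tsum_eq_sum (s := Finset.range (j+1)) (by
      intro i hi
      rw [if_neg]
      simp only [Finset.mem_range, not_lt] at hi
      push_cast
      exact not_le.mpr (by exact_mod_cast Nat.lt_of_succ_le hi))]
    apply Finset.sum_congr rfl
    intro i hi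
    rw [if_pos]
    simp only [Finset.mem_range] at hi
    exact_mod_cast Nat.lt_succ_iff.mp hi
  -- monotone step bound for Fn
  have hFn_step : ∀ n (m : ℕ) (x : ℝ), x < (m : ℝ) + 1 → Fn n x ≤ Fn n (m : ℝ) := by
    intro n m x hx
    rw [hFn, hFn]
    rcases Nat.eq_zero_or_pos n with h0 | hn
    · simp [h0]
    have hsub : (Finset.range n).filter (fun k => (a n k : ℝ) ≤ x) ⊆
        (Finset.range n).filter (fun k => (a n k : ℝ) ≤ (m : ℝ)) := by
      intro k hk
      simp only [Finset.mem_filter] at hk ⊢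
      refine ⟨hk.1, ?_⟩
      have : (a n k : ℝ) < (m : ℝ) + 1 := lt_of_le_of_lt hk.2 hx
      exact_mod_cast Nat.lt_succ_iff.mp (by exact_mod_cast this)
    have := Finset.card_le_card hsub
    gcongr
  -- step bound for F
  have hsummable_ite : ∀ x : ℝ, Summable (fun j : ℕ => if (j:ℝ) ≤ x then p j else 0) := by
    intro x
    apply Summable.of_nonneg_of_le (fun j => by split <;> simp [hp _]) (fun j => ?_) hpsum
    split <;> simp [hp _]
  have hF_step : ∀ (m : ℕ) (x : ℝ), x < (m : ℝ) + 1 → F x ≤ F (m : ℝ) := by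
    intro m x hx
    rw [hF, hF]
    apply Summable.tsum_le_tsum ?_ (hsummable_ite x) (hsummable_ite m)
    intro i
    by_cases h : (i:ℝ) ≤ x
    · rw [if_pos h, if_pos]
      have : (i : ℝ) < (m : ℝ) + 1 := lt_of_le_of_lt h hx
      exact_mod_cast Nat.lt_succ_iff.mp (by exact_mod_cast this)
    · rw [if_neg h]
      split <;> simp [hp _]
  -- Fn at naturals
  have hcard_nat : ∀ n (j : ℕ), ((Finset.range n).filter (fun k => (a n k : ℝ) ≤ (j:ℝ))).card
      = ∑ i ∈ Finset.range (j+1), ((Finset.range n).filter (fun k => a n k = i)).card := by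
    intro n j
    have h1 : (Finset.range n).filter (fun k => (a n k : ℝ) ≤ (j:ℝ))
        = (Finset.range n).filter (fun k => a n k ≤ j) := by
      apply Finset.filter_congr
      intro k _
      constructor <;> intro h <;> exact_mod_cast h
    rw [h1]
    rw [Finset.card_eq_sum_card_fiberwise (f := a n) (t := Finset.range (j+1))
      (fun k hk => Finset.mem_range.mpr (Nat.lt_succ_of_le (Finset.mem_filter.mp hk).2))]
    apply Finset.sum_congr rfl
    intro i hi
    congr 1
    rw [Finset.filter_filter]
    apply Finset.filter_congr
    intro k _
    simp only [Finset.mem_range] at hi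
    constructor
    · rintro ⟨_, h⟩; exact h
    · intro h; exact ⟨h ▸ Nat.lt_succ_iff.mp hi, h⟩
  -- convergence of Fn at naturals
  have hFnj_conv : ∀ j : ℕ, Tendsto (fun n => Fn n (j:ℝ)) atTop (nhds (s j)) := by
    intro j
    have : ∀ n, Fn n (j:ℝ) = ∑ i ∈ Finset.range (j+1),
        (((Finset.range n).filter (fun k => a n k = i)).card : ℝ) / n := by
      intro n
      rw [hFn, hcard_nat]
      push_cast
      rw [Finset.sum_div]
    simp only [this]
    exact tendsto_finset_sum _ (fun i _ => hconv i)
  -- s tends to 1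
  have hs_lim : Tendsto s atTop (nhds 1) := by
    rw [← hp1]
    have h1 := hpsum.hasSum.tendsto_sum_nat
    have := h1.comp (tendsto_add_atTop_nat 1)
    exact this
  have hs_mono : Monotone s := by
    intro i j hij
    apply Finset.sum_le_sum_of_subset_of_nonneg
    · exact Finset.range_subset_range.mpr (by omega)
    · intro k _ _; exact hp k
  have hN : volume (Set.range s) = 0 := (Set.countable_range s).measure_zero volume
  have hae2 : ∀ᵐ u ∂(volume.restrict (Set.Ioo (0 : ℝ) 1)), u ∉ Set.range s :=
    ae_restrict_of_ae (measure_eq_zero_iff_ae_notMem.mp hN)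
  have hkey : ∀ u ∈ Set.Ioo (0:ℝ) 1, u ∉ Set.range s → ∃ j : ℕ, u < s j ∧
      (∀ m, m < j → s m < u) ∧ genInv F u = j ∧
      (∀ᶠ n in atTop, genInv (Fn n) u = (j:ℝ)) := by
    intro u hu huN
    have hex : ∃ j, u < s j := (hs_lim.eventually (eventually_gt_nhds hu.2)).exists
    set j := Nat.find hex with hj_def
    have hju : u < s j := Nat.find_spec hex
    have hjmin : ∀ m, m < j → s m < u := by
      intro m hm
      exact lt_of_le_of_ne (not_lt.mp (Nat.find_min hex hm)) (fun h => huN ⟨m, h⟩)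
    have hFinv : genInv F u = j := by
      apply genInv_eq F u j (by rw [hF_nat]; exact hju.le)
      intro x hx hxj
      have hj1 : 1 ≤ j := by
        rcases Nat.eq_zero_or_pos j with h0 | h1
        · rw [h0] at hxj; norm_num at hxj; linarith
        · exact h1
      have hcast : ((j - 1 : ℕ) : ℝ) + 1 = (j : ℝ) := by
        have : j - 1 + 1 = j := by omega
        exact_mod_cast congrArg (Nat.cast : ℕ → ℝ) this
      calc F x ≤ F ((j-1 : ℕ) : ℝ) := hF_step (j-1) x (by rw [hcast]; exact hxj)
        _ = s (j-1) := hF_nat _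
        _ < u := hjmin _ (by omega)
    refine ⟨j, hju, hjmin, hFinv, ?_⟩
    have e1 : ∀ᶠ n in atTop, u < Fn n (j:ℝ) :=
      (hFnj_conv j).eventually (eventually_gt_nhds hju)
    rcases Nat.eq_zero_or_pos j with h0 | hj1
    · filter_upwards [e1] with n hn
      rw [h0] at hn ⊢
      apply genInv_eq _ u 0 (by exact_mod_cast hn.le)
      intro x hx hxj
      norm_num at hxj
      linarith
    · have e2 : ∀ᶠ n in atTop, Fn n ((j-1 : ℕ):ℝ) < u :=
        (hFnj_conv (j-1)).eventually (eventually_lt_nhds (hjmin _ (by omega)))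
      have hcast : ((j - 1 : ℕ) : ℝ) + 1 = (j : ℝ) := by
        have : j - 1 + 1 = j := by omega
        exact_mod_cast congrArg (Nat.cast : ℕ → ℝ) this
      filter_upwards [e1, e2] with n h1 h2
      apply genInv_eq _ u j h1.le
      intro x hx hxj
      calc Fn n x ≤ Fn n ((j-1 : ℕ) : ℝ) := hFn_step n (j-1) x (by rw [hcast]; exact hxj)
        _ < u := h2
  have part1 : ∀ᵐ u ∂(volume.restrict (Set.Ioo (0 : ℝ) 1)),
      Tendsto (fun n => genInv (Fn n) u) atTop (nhds (genInv F u)) := by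
    filter_upwards [ae_restrict_mem measurableSet_Ioo, hae2] with u hu huN
    obtain ⟨j, _, _, hFinv, hFninv⟩ := hkey u hu huN
    rw [hFinv]
    exact tendsto_const_nhds.congr' (by filter_upwards [hFninv] with n hn; exact hn.symm)
  -- Part 2 setup
  set A : ℕ → ℕ := fun n => (Finset.range n).sup (a n) with hA_def
  set M : ℕ → ℕ := fun n => A n + 1 with hM_def
  set gstep : ℕ → ℝ → ℝ :=
    fun n u => ∑ m ∈ Finset.range (M n), (if Fn n (m:ℝ) < u then (1:ℝ) else 0) with hg_def
  have hFn_nonneg : ∀ n (x : ℝ), 0 ≤ Fn n x := by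
    intro n x; rw [hFn]; positivity
  have hFn_le_one : ∀ n (x : ℝ), Fn n x ≤ 1 := by
    intro n x
    rw [hFn]
    rcases Nat.eq_zero_or_pos n with h0 | hn
    · simp [h0]
    · rw [div_le_one (by exact_mod_cast hn)]
      exact_mod_cast Finset.card_le_card (Finset.filter_subset _ _) |>.trans
        (le_of_eq (Finset.card_range n))
  have hFn_mono_nat : ∀ n (m m' : ℕ), m ≤ m' → Fn n (m:ℝ) ≤ Fn n (m':ℝ) := by
    intro n m m' h
    apply hFn_step n m' (m:ℝ)
    have : (m:ℝ) ≤ (m':ℝ) := by exact_mod_cast h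
    linarith
  have hFn_top : ∀ n, 1 ≤ n → Fn n ((A n : ℕ):ℝ) = 1 := by
    intro n hn
    rw [hFn]
    have : (Finset.range n).filter (fun k => (a n k : ℝ) ≤ ((A n : ℕ):ℝ)) = Finset.range n := by
      apply Finset.filter_true_of_mem
      intro k hk
      exact_mod_cast Finset.le_sup (f := a n) hk
    rw [this, Finset.card_range, div_self (by positivity)]
  have hgstep_meas : ∀ n, Measurable (gstep n) := by
    intro n
    apply Finset.measurable_sum
    intro m _
    exact Measurable.ite (measurableSet_lt measurable_const measurable_id) measurable_const
      measurable_const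
  -- representation of genInv (Fn n) on (0,1)
  have hrep : ∀ n, 1 ≤ n → ∀ u ∈ Set.Ioo (0:ℝ) 1,
      ∃ j : ℕ, j < M n ∧ genInv (Fn n) u = j ∧ gstep n u = j := by
    intro n hn u hu
    have hexn : ∃ m : ℕ, u ≤ Fn n (m:ℝ) := ⟨A n, by rw [hFn_top n hn]; exact hu.2.le⟩
    set j := Nat.find hexn with hj_def
    have hju : u ≤ Fn n (j:ℝ) := Nat.find_spec hexn
    have hjmin : ∀ m, m < j → Fn n (m:ℝ) < u := fun m hm => not_le.mp (Nat.find_min hexn hm)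
    have hjA : j ≤ A n := Nat.find_min' hexn (by rw [hFn_top n hn]; exact hu.2.le)
    refine ⟨j, by simpa [hM_def] using Nat.lt_succ_of_le hjA, ?_, ?_⟩
    · apply genInv_eq _ u j hju
      intro x hx hxj
      have hj1 : 1 ≤ j := by
        rcases Nat.eq_zero_or_pos j with h0 | h1
        · rw [h0] at hxj; norm_num at hxj; linarith
        · exact h1
      have hcast : ((j - 1 : ℕ) : ℝ) + 1 = (j : ℝ) := by
        have : j - 1 + 1 = j := by omega
        exact_mod_cast congrArg (Nat.cast : ℕ → ℝ) this
      calc Fn n x ≤ Fn n ((j-1 : ℕ):ℝ) := hFn_step n (j-1) x (by rw [hcast]; exact hxj)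
        _ < u := hjmin _ (by omega)
    · show (∑ m ∈ Finset.range (M n), if Fn n (m:ℝ) < u then (1:ℝ) else 0) = (j:ℝ)
      have hterm : ∀ m ∈ Finset.range (M n),
          (if Fn n (m:ℝ) < u then (1:ℝ) else 0) = (if m < j then (1:ℝ) else 0) := by
        intro m _
        by_cases h : m < j
        · rw [if_pos (hjmin m h), if_pos h]
        · rw [if_neg, if_neg h]
          push_neg at h
          exact not_lt.mpr (le_trans hju (hFn_mono_nat n j m h))
      rw [Finset.sum_congr rfl hterm, Finset.sum_boole]
      congr 1
      have hjM : j < M n := by simpa [hM_def] using Nat.lt_succ_of_le hjA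
      have : Finset.filter (fun m => m < j) (Finset.range (M n)) = Finset.range j := by
        ext m
        simp only [Finset.mem_filter, Finset.mem_range]
        omega
      rw [this, Finset.card_range]
  -- lintegral of indicator step sums
  have hind_int : ∀ c : ℝ, 0 ≤ c →
      ∫⁻ u in Set.Ioo (0:ℝ) 1, ENNReal.ofReal (if c < u then (1:ℝ) else 0)
        = ENNReal.ofReal (1 - c) := by
    intro c hc
    have hpt : ∀ u : ℝ, ENNReal.ofReal (if c < u then (1:ℝ) else 0)
        = (Set.Ioi c).indicator (fun _ => (1:ℝ≥0∞)) u := by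
      intro u
      by_cases h : c < u
      · rw [if_pos h, Set.indicator_of_mem (Set.mem_Ioi.mpr h)]; simp
      · rw [if_neg h, Set.indicator_of_notMem (fun hc' => h (Set.mem_Ioi.mp hc'))]; simp
    rw [lintegral_congr hpt, lintegral_indicator measurableSet_Ioi]
    rw [Measure.restrict_restrict measurableSet_Ioi, lintegral_one, Measure.restrict_apply_univ]
    have hset : Set.Ioi c ∩ Set.Ioo (0:ℝ) 1 = Set.Ioo c 1 := by
      ext x
      simp only [Set.mem_inter_iff, Set.mem_Ioi, Set.mem_Ioo]
      constructor
      · rintro ⟨h1, _, h3⟩; exact ⟨h1, h3⟩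
      · rintro ⟨h1, h2⟩; exact ⟨h1, lt_of_le_of_lt hc h1, h2⟩
    rw [hset, Real.volume_Ioo]
  have hsum_int : ∀ (Mx : ℕ) (c : ℕ → ℝ), (∀ m, 0 ≤ c m) →
      ∫⁻ u in Set.Ioo (0:ℝ) 1,
          ENNReal.ofReal (∑ m ∈ Finset.range Mx, if c m < u then (1:ℝ) else 0)
        = ∑ m ∈ Finset.range Mx, ENNReal.ofReal (1 - c m) := by
    intro Mx c hc
    have h1 : ∀ u : ℝ, ENNReal.ofReal (∑ m ∈ Finset.range Mx, if c m < u then (1:ℝ) else 0)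
        = ∑ m ∈ Finset.range Mx, ENNReal.ofReal (if c m < u then (1:ℝ) else 0) := by
      intro u
      exact ENNReal.ofReal_sum_of_nonneg (fun m _ => by positivity)
    rw [lintegral_congr h1, lintegral_finset_sum]
    · exact Finset.sum_congr rfl (fun m _ => hind_int (c m) (hc m))
    · intro m _
      exact ENNReal.measurable_ofReal.comp
        (Measurable.ite (measurableSet_lt measurable_const measurable_id) measurable_const
          measurable_const)
  -- the mean identity
  have hMn : ∀ n, 1 ≤ n → ∫⁻ u in Set.Ioo (0:ℝ) 1, ENNReal.ofReal (gstep n u)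
      = ENNReal.ofReal ((∑ k ∈ Finset.range n, (a n k : ℝ)) / n) := by
    intro n hn
    rw [hsum_int (M n) (fun m => Fn n (m:ℝ)) (fun m => hFn_nonneg n m)]
    have h2 : ∀ m ∈ Finset.range (M n), ENNReal.ofReal (1 - Fn n (m:ℝ))
        = ENNReal.ofReal (1 - Fn n (m:ℝ)) := fun _ _ => rfl
    rw [← ENNReal.ofReal_sum_of_nonneg (fun m _ => by linarith [hFn_le_one n (m:ℝ)])]
    congr 1
    -- combinatorial identity
    have hnpos : (0:ℝ) < n := by exact_mod_cast hn
    have hterm : ∀ m : ℕ, 1 - Fn n (m:ℝ)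
        = (((Finset.range n).filter (fun k => ¬((a n k : ℝ) ≤ (m:ℝ)))).card : ℝ) / n := by
      intro m
      rw [hFn]
      have hsplit := Finset.card_filter_add_card_filter_not
        (s := Finset.range n) (p := fun k => (a n k : ℝ) ≤ (m:ℝ))
      rw [Finset.card_range] at hsplit
      have : ((((Finset.range n).filter (fun k => (a n k : ℝ) ≤ (m:ℝ))).card : ℝ))
          + ((((Finset.range n).filter (fun k => ¬((a n k : ℝ) ≤ (m:ℝ)))).card : ℝ)) = n := by
        exact_mod_cast hsplit
      rw [eq_div_iff (ne_of_gt hnpos), sub_mul, one_mul, div_mul_cancel₀ _ (ne_of_gt hnpos)]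
      linarith
    rw [Finset.sum_congr rfl (fun m _ => hterm m), ← Finset.sum_div]
    congr 1
    have hnat : ∑ m ∈ Finset.range (M n),
        (((Finset.range n).filter (fun k => ¬((a n k : ℝ) ≤ (m:ℝ)))).card)
        = ∑ k ∈ Finset.range n, a n k := by
      have hcond : ∀ m k, (¬((a n k : ℝ) ≤ (m:ℝ))) ↔ m < a n k := by
        intro m k
        rw [not_le]
      calc ∑ m ∈ Finset.range (M n),
            (((Finset.range n).filter (fun k => ¬((a n k : ℝ) ≤ (m:ℝ)))).card)
          = ∑ m ∈ Finset.range (M n), ∑ k ∈ Finset.range n, (if m < a n k then 1 else 0) := by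
            apply Finset.sum_congr rfl
            intro m _
            rw [Finset.card_filter]
            apply Finset.sum_congr rfl
            intro k _
            simp only [hcond m k, Nat.cast_lt]
        _ = ∑ k ∈ Finset.range n, ∑ m ∈ Finset.range (M n), (if m < a n k then 1 else 0) :=
            Finset.sum_comm
        _ = ∑ k ∈ Finset.range n, a n k := by
            apply Finset.sum_congr rfl
            intro k hk
            have hkA : a n k ≤ A n := Finset.le_sup (f := a n) hk
            have hkM : a n k < M n := by simp only [hM_def]; omega
            have hfil : (Finset.range (M n)).filter (fun m => m < a n k)
                = Finset.range (a n k) := by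
              ext m
              simp only [Finset.mem_filter, Finset.mem_range]
              omega
            calc ∑ m ∈ Finset.range (M n), (if m < a n k then 1 else 0)
                = ∑ m ∈ (Finset.range (M n)).filter (fun m => m < a n k), 1 :=
                  (Finset.sum_filter _ _).symm
              _ = a n k := by rw [hfil]; simp
    calc ∑ m ∈ Finset.range (M n),
          ((((Finset.range n).filter (fun k => ¬((a n k : ℝ) ≤ (m:ℝ)))).card) : ℝ)
        = ((∑ m ∈ Finset.range (M n),
            (((Finset.range n).filter (fun k => ¬((a n k : ℝ) ≤ (m:ℝ)))).card) : ℕ) : ℝ) := by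
          push_cast; rfl
      _ = ((∑ k ∈ Finset.range n, a n k : ℕ) : ℝ) := by rw [hnat]
      _ = ∑ k ∈ Finset.range n, (a n k : ℝ) := by push_cast; rfl
  -- bounds on s
  have hs_nonneg : ∀ m, 0 ≤ s m := fun m => Finset.sum_nonneg (fun i _ => hp i)
  have hs_le_one : ∀ m, s m ≤ 1 := by
    intro m
    rw [← hp1]
    exact Summable.sum_le_tsum (Finset.range (m+1)) (fun i _ => hp i) hpsum
  -- tail-sum identity
  have htail : ∀ m : ℕ, ENNReal.ofReal (1 - s m)
      = ∑' i : ℕ, (if m < i then ENNReal.ofReal (p i) else 0) := by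
    intro m
    have hPsum : (∑' i : ℕ, ENNReal.ofReal (p i)) = 1 := by
      rw [← ENNReal.ofReal_tsum_of_nonneg hp hpsum, hp1, ENNReal.ofReal_one]
    have hsplit : ∀ i : ℕ, ENNReal.ofReal (p i)
        = (if i ≤ m then ENNReal.ofReal (p i) else 0)
          + (if m < i then ENNReal.ofReal (p i) else 0) := by
      intro i
      by_cases h : i ≤ m
      · rw [if_pos h, if_neg (not_lt.mpr h), add_zero]
      · rw [if_neg h, if_pos (not_le.mp h), zero_add]
    have hfst : (∑' i : ℕ, (if i ≤ m then ENNReal.ofReal (p i) else 0))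
        = ENNReal.ofReal (s m) := by
      rw [tsum_eq_sum (s := Finset.range (m+1)) (by
        intro i hi
        simp only [Finset.mem_range, not_lt] at hi
        rw [if_neg (by omega)])]
      rw [ENNReal.ofReal_sum_of_nonneg (fun i _ => hp i)]
      apply Finset.sum_congr rfl
      intro i hi
      rw [if_pos (Nat.lt_succ_iff.mp (Finset.mem_range.mp hi))]
    have heq : ENNReal.ofReal (s m) + (∑' i : ℕ, (if m < i then ENNReal.ofReal (p i) else 0))
        = 1 := by
      rw [← hfst, ← ENNReal.tsum_add]
      rw [← hPsum]
      exact (tsum_congr (fun i => (hsplit i).symm))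
    rw [ENNReal.ofReal_sub 1 (hs_nonneg m), ENNReal.ofReal_one, ← heq,
      ENNReal.add_sub_cancel_left ENNReal.ofReal_ne_top]
  have htail_sum : (∑' m : ℕ, ENNReal.ofReal (1 - s m))
      = ENNReal.ofReal (∑' j : ℕ, (j:ℝ) * p j) := by
    calc (∑' m : ℕ, ENNReal.ofReal (1 - s m))
        = ∑' m : ℕ, ∑' i : ℕ, (if m < i then ENNReal.ofReal (p i) else 0) := tsum_congr htail
      _ = ∑' i : ℕ, ∑' m : ℕ, (if m < i then ENNReal.ofReal (p i) else 0) := ENNReal.tsum_comm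
      _ = ∑' i : ℕ, (i : ℝ≥0∞) * ENNReal.ofReal (p i) := by
          apply tsum_congr
          intro i
          rw [tsum_eq_sum (s := Finset.range i) (by
            intro m hm
            simp only [Finset.mem_range, not_lt] at hm
            rw [if_neg (by omega)])]
          rw [Finset.sum_congr rfl (fun m hm => if_pos (Finset.mem_range.mp hm)),
            Finset.sum_const, Finset.card_range, nsmul_eq_mul]
      _ = ENNReal.ofReal (∑' j : ℕ, (j:ℝ) * p j) := by
          rw [ENNReal.ofReal_tsum_of_nonneg (fun j => mul_nonneg (Nat.cast_nonneg j) (hp j))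
            hmean]
          apply tsum_congr
          intro i
          rw [ENNReal.ofReal_mul (Nat.cast_nonneg i), ENNReal.ofReal_natCast]
  -- truncations
  set L : ℝ≥0∞ := ENNReal.ofReal (∑' j : ℕ, (j:ℝ) * p j) with hL_def
  have hL_ne_top : L ≠ ⊤ := ENNReal.ofReal_ne_top
  set bstep : ℕ → ℝ → ℝ :=
    fun n u => if Real.sqrt n < gstep n u then 0 else gstep n u with hb_def
  set tstep : ℕ → ℝ → ℝ :=
    fun n u => if Real.sqrt n < gstep n u then gstep n u else 0 with ht_def
  have hbmeas : ∀ n, Measurable (fun u => ENNReal.ofReal (bstep n u)) := by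
    intro n
    exact ENNReal.measurable_ofReal.comp
      (Measurable.ite (measurableSet_lt measurable_const (hgstep_meas n)) measurable_const
        (hgstep_meas n))
  have htmeas : ∀ n, Measurable (fun u => ENNReal.ofReal (tstep n u)) := by
    intro n
    exact ENNReal.measurable_ofReal.comp
      (Measurable.ite (measurableSet_lt measurable_const (hgstep_meas n)) (hgstep_meas n)
        measurable_const)
  set B : ℕ → ℝ≥0∞ :=
    fun n => ∫⁻ u in Set.Ioo (0:ℝ) 1, ENNReal.ofReal (bstep n u) with hB_def
  set T : ℕ → ℝ≥0∞ :=
    fun n => ∫⁻ u in Set.Ioo (0:ℝ) 1, ENNReal.ofReal (tstep n u) with hT_def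
  have hTB : ∀ n, T n + B n = ∫⁻ u in Set.Ioo (0:ℝ) 1, ENNReal.ofReal (gstep n u) := by
    intro n
    rw [hT_def, hB_def]
    rw [← lintegral_add_left (htmeas n)]
    apply lintegral_congr
    intro u
    by_cases h : Real.sqrt n < gstep n u
    · simp only [hb_def, ht_def, if_pos h, ENNReal.ofReal_zero, add_zero]
    · simp only [hb_def, ht_def, if_neg h, ENNReal.ofReal_zero, zero_add]
  have hMlim : Tendsto (fun n => ∫⁻ u in Set.Ioo (0:ℝ) 1, ENNReal.ofReal (gstep n u))
      atTop (nhds L) := by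
    refine Tendsto.congr' ?_ (ENNReal.tendsto_ofReal hmeanconv)
    filter_upwards [eventually_ge_atTop 1] with n hn
    exact (hMn n hn).symm
  -- Fatou lower bound
  have hB_liminf : ∀ Mx : ℕ,
      (∑ m ∈ Finset.range Mx, ENNReal.ofReal (1 - s m)) ≤ liminf B atTop := by
    intro Mx
    rw [← hsum_int Mx s hs_nonneg]
    refine le_trans (lintegral_mono_ae ?_) (lintegral_liminf_le hbmeas)
    filter_upwards [ae_restrict_mem measurableSet_Ioo, hae2] with u hu huN
    obtain ⟨j, hju, hjmin, _, hgi⟩ := hkey u hu huN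
    have hgs : ∀ᶠ n in atTop, gstep n u = (j:ℝ) := by
      filter_upwards [hgi, eventually_ge_atTop 1] with n h1 h2
      obtain ⟨j', _, e1, e2⟩ := hrep n h2 u hu
      rw [e2, ← e1, h1]
    have hsq : ∀ᶠ n : ℕ in atTop, (j:ℝ) ≤ Real.sqrt n := by
      refine eventually_atTop.mpr ⟨j^2, fun n hn => ?_⟩
      have h1 : ((j:ℝ))^2 ≤ (n:ℝ) := by exact_mod_cast hn
      calc (j:ℝ) = Real.sqrt ((j:ℝ)^2) := (Real.sqrt_sq (Nat.cast_nonneg j)).symm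
        _ ≤ Real.sqrt n := Real.sqrt_le_sqrt h1
    have hbev : ∀ᶠ n in atTop,
        ENNReal.ofReal (bstep n u) = ENNReal.ofReal ((j:ℝ)) := by
      filter_upwards [hgs, hsq] with n h1 h2
      simp only [hb_def]
      rw [h1, if_neg (not_lt.mpr h2)]
    rw [liminf_congr hbev, liminf_const]
    apply ENNReal.ofReal_le_ofReal
    calc (∑ m ∈ Finset.range Mx, if s m < u then (1:ℝ) else 0)
        ≤ ∑ m ∈ Finset.range Mx, (if m < j then (1:ℝ) else 0) := by
          apply Finset.sum_le_sum
          intro m _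
          by_cases h : s m < u
          · rw [if_pos h, if_pos]
            by_contra hc
            push_neg at hc
            have : u < s m := lt_of_lt_of_le hju (hs_mono hc)
            linarith
          · rw [if_neg h]
            split <;> norm_num
      _ = ((Finset.filter (fun m => m < j) (Finset.range Mx)).card : ℝ) := by
          rw [Finset.sum_boole]
      _ ≤ (j:ℝ) := by
          have : (Finset.filter (fun m => m < j) (Finset.range Mx)).card ≤ j := by
            calc (Finset.filter (fun m => m < j) (Finset.range Mx)).card
                ≤ (Finset.range j).card := Finset.card_le_card (by
                  intro m hm
                  simp only [Finset.mem_filter, Finset.mem_range] at hm ⊢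
                  exact hm.2)
              _ = j := Finset.card_range j
          exact_mod_cast this
  have hLB : L ≤ liminf B atTop := by
    rw [← htail_sum, ENNReal.tsum_eq_iSup_sum]
    apply iSup_le
    intro fs
    rcases Finset.eq_empty_or_nonempty fs with h0 | hne
    · simp [h0]
    calc ∑ m ∈ fs, ENNReal.ofReal (1 - s m)
        ≤ ∑ m ∈ Finset.range (fs.sup id + 1), ENNReal.ofReal (1 - s m) := by
          apply Finset.sum_le_sum_of_subset
          intro m hm
          simp only [Finset.mem_range]
          exact Nat.lt_succ_of_le (Finset.le_sup (f := id) hm)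
      _ ≤ liminf B atTop := hB_liminf _
  -- T tends to zero
  have hT0 : Tendsto T atTop (nhds 0) := by
    rw [ENNReal.tendsto_atTop_zero]
    intro ε hε
    set δ := min ε 1 with hδ_def
    have hδpos : 0 < δ := lt_min hε one_pos
    have hδtop : δ ≠ ⊤ := ne_top_of_le_ne_top ENNReal.one_ne_top (min_le_right _ _)
    have hδε : δ ≤ ε := min_le_left _ _
    have hTle : ∀ n, T n ≤ ∫⁻ u in Set.Ioo (0:ℝ) 1, ENNReal.ofReal (gstep n u) := by
      intro n
      rw [← hTB n]
      exact le_self_add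
    rcases eq_or_ne L 0 with hL0 | hL0
    · have : ∀ᶠ n in atTop, (∫⁻ u in Set.Ioo (0:ℝ) 1, ENNReal.ofReal (gstep n u)) < δ := by
        apply hMlim.eventually_lt_const
        rw [hL0]
        exact hδpos
      obtain ⟨N, hN⟩ := eventually_atTop.mp this
      exact ⟨N, fun n hn => le_trans (hTle n) (le_trans (hN n hn).le hδε)⟩
    · have hhalf_pos : (0:ℝ≥0∞) < δ/2 := ENNReal.div_pos hδpos.ne' ENNReal.ofNat_ne_top
      have hb_lt : L - δ/2 < L :=
        ENNReal.sub_lt_self hL_ne_top hL0 hhalf_pos.ne'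
      have hev1 : ∀ᶠ n in atTop, L - δ/2 < B n :=
        eventually_lt_of_lt_liminf (lt_of_lt_of_le hb_lt hLB)
      have hev2 : ∀ᶠ n in atTop,
          (∫⁻ u in Set.Ioo (0:ℝ) 1, ENNReal.ofReal (gstep n u)) < L + δ/2 :=
        hMlim.eventually_lt_const (ENNReal.lt_add_right hL_ne_top hhalf_pos.ne')
      have : ∀ᶠ n in atTop, T n ≤ ε := by
        filter_upwards [hev1, hev2] with n h1 h2
        have hBfin : B n ≠ ⊤ := by
          refine ne_top_of_le_ne_top (lt_of_lt_of_le h2 le_top).ne ?_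
          rw [← hTB n]
          exact le_add_self
        have h3 : T n + B n ≤ δ + B n := by
          calc T n + B n = ∫⁻ u in Set.Ioo (0:ℝ) 1, ENNReal.ofReal (gstep n u) := hTB n
            _ ≤ L + δ/2 := h2.le
            _ ≤ (L - δ/2 + δ/2) + δ/2 := add_le_add_left le_tsub_add _
            _ = (L - δ/2) + δ := by rw [add_assoc, ENNReal.add_halves]
            _ ≤ B n + δ := add_le_add_left h1.le _
            _ = δ + B n := add_comm _ _
        exact le_trans ((ENNReal.add_le_add_iff_right hBfin).mp h3) hδε
      obtain ⟨N, hN⟩ := eventually_atTop.mp this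
      exact ⟨N, hN⟩
  -- conclusion
  have hreal : ∀ n : ℕ, 1 ≤ n → (∫ u in Set.Ioo (0:ℝ) 1,
      (if Real.sqrt n < genInv (Fn n) u then genInv (Fn n) u else 0)) = (T n).toReal := by
    intro n hn
    have haeeq : (fun u => if Real.sqrt n < genInv (Fn n) u then genInv (Fn n) u else 0)
        =ᵐ[volume.restrict (Set.Ioo (0:ℝ) 1)] (tstep n) := by
      filter_upwards [ae_restrict_mem measurableSet_Ioo] with u hu
      obtain ⟨j, _, e1, e2⟩ := hrep n hn u hu
      simp only [ht_def]
      rw [e1, e2]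
    have hnn : 0 ≤ᵐ[volume.restrict (Set.Ioo (0:ℝ) 1)]
        (fun u => if Real.sqrt n < genInv (Fn n) u then genInv (Fn n) u else 0) := by
      apply ae_of_all
      intro u
      dsimp only
      split
      · exact genInv_nonneg _ _
      · exact le_refl 0
    have hmeas : AEStronglyMeasurable
        (fun u => if Real.sqrt n < genInv (Fn n) u then genInv (Fn n) u else 0)
        (volume.restrict (Set.Ioo (0:ℝ) 1)) := by
      have hm : Measurable (tstep n) :=
        Measurable.ite (measurableSet_lt measurable_const (hgstep_meas n)) (hgstep_meas n)
          measurable_const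
      exact hm.aestronglyMeasurable.congr haeeq.symm
    rw [integral_eq_lintegral_of_nonneg_ae hnn hmeas]
    congr 1
    apply lintegral_congr_ae
    filter_upwards [haeeq] with u hu
    rw [hu]
  have hTr : Tendsto (fun n => (T n).toReal) atTop (nhds 0) := by
    have h := (ENNReal.tendsto_toReal (a := 0) (by simp)).comp hT0
    exact h
  have part2 : Tendsto (fun n : ℕ => ∫ u in Set.Ioo (0:ℝ) 1,
      (if Real.sqrt n < genInv (Fn n) u then genInv (Fn n) u else 0)) atTop (nhds 0) := by
    refine Tendsto.congr' ?_ hTr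
    filter_upwards [eventually_ge_atTop 1] with n hn
    exact (hreal n hn).symm
  exact ⟨part1, part2⟩
end

section
/- Given a set of n vertices with bi-degree-sequence (m, d) = ({m_1,...,m_n}, {d_1,...,d_n}) of nonnegative integers, there exists a simple directed graph (no self-loops, at most one edge in each direction between any ordered pair) realizing (m, d) as its in- and out-degree sequences if and only if (1) ∑_i m_i = ∑_i d_i and (2) for every subset A of vertices, ∑_{i=1}^n min{d_i, |A \ {v_i}|} ≥ ∑_{v_i ∈ A} m_i. -/
open Finset

namespace Stmt8Aux

variable {n : ℕ}

/-- Neighborhood function of the gadget bipartite graph. -/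
def nbhd (m d : Fin n → ℕ) :
    (Σ i : Fin n, Fin (d i)) ⊕ (Fin n × Fin n) →
      Finset ((Σ j : Fin n, Fin (m j)) ⊕ (Fin n × Fin n))
  | Sum.inl x => (Finset.univ.erase x.1).image fun j => Sum.inr (x.1, j)
  | Sum.inr p =>
      if p.1 = p.2 then {Sum.inr p}
      else insert (Sum.inr p) (Finset.univ.image fun b : Fin (m p.2) => Sum.inl ⟨p.2, b⟩)

lemma hall_cond (m d : Fin n → ℕ)
    (hsum : ∑ i, m i = ∑ i, d i)
    (hberge : ∀ A : Finset (Fin n), ∑ i ∈ A, m i ≤ ∑ i, min (d i) ((A.erase i).card))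
    (X : Finset ((Σ i : Fin n, Fin (d i)) ⊕ (Fin n × Fin n))) :
    X.card ≤ (X.biUnion (nbhd m d)).card := by
  classical
  set I : Finset (Fin n) := univ.filter (fun i => ∃ a : Fin (d i), Sum.inl ⟨i, a⟩ ∈ X) with hI
  set X2 : Finset (Fin n × Fin n) := univ.filter (fun p => Sum.inr p ∈ X) with hX2
  set J : Finset (Fin n) := univ.filter (fun j => ∃ i, i ≠ j ∧ (i, j) ∈ X2) with hJ
  set pairsI : Finset (Fin n × Fin n) :=
    I.biUnion (fun i => (univ.erase i).image fun j => (i, j)) with hpairsI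
  set X2' : Finset ((Σ i : Fin n, Fin (d i)) ⊕ (Fin n × Fin n)) :=
    X2.image Sum.inr with hX2'
  set RC : Finset ((Σ i : Fin n, Fin (d i)) ⊕ (Fin n × Fin n)) :=
    I.biUnion (fun i => univ.image fun a : Fin (d i) => Sum.inl ⟨i, a⟩) with hRC
  set PU : Finset ((Σ j : Fin n, Fin (m j)) ⊕ (Fin n × Fin n)) :=
    (pairsI ∪ X2).image Sum.inr with hPU
  set CC : Finset ((Σ j : Fin n, Fin (m j)) ⊕ (Fin n × Fin n)) :=
    J.biUnion (fun j => univ.image fun b : Fin (m j) => Sum.inl ⟨j, b⟩) with hCC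
  -- Step A : |X| ≤ ∑_{i∈I} d i + |X2|
  have stepA : X.card ≤ (∑ i ∈ I, d i) + X2.card := by
    have hsub : X ⊆ RC ∪ X2' := by
      intro x hx
      rcases x with ⟨i, a⟩ | p
      · apply mem_union_left
        rw [hRC, mem_biUnion]
        refine ⟨i, ?_, by simp⟩
        rw [hI, mem_filter]
        exact ⟨mem_univ _, a, hx⟩
      · apply mem_union_right
        rw [hX2', mem_image]
        refine ⟨p, ?_, rfl⟩
        rw [hX2, mem_filter]
        exact ⟨mem_univ _, hx⟩
    have h1 := card_le_card hsub
    have h2 : (RC ∪ X2').card ≤ RC.card + X2'.card := card_union_le _ _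
    have h3 : RC.card ≤ ∑ i ∈ I, d i := by
      rw [hRC]
      refine le_trans card_biUnion_le (sum_le_sum ?_)
      intro i _
      exact le_trans card_image_le (by simp)
    have h4 : X2'.card ≤ X2.card := by rw [hX2']; exact card_image_le
    omega
  -- Step B : PU ∪ CC ⊆ N(X)
  have stepB : PU ∪ CC ⊆ X.biUnion (nbhd m d) := by
    intro y hy
    rw [mem_union] at hy
    rcases hy with hy | hy
    · rw [hPU, mem_image] at hy
      obtain ⟨p, hp, rfl⟩ := hy
      rw [mem_union] at hp
      rcases hp with hp | hp
      · rw [hpairsI, mem_biUnion] at hp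
        obtain ⟨i, hi, hp⟩ := hp
        rw [mem_image] at hp
        obtain ⟨j, hj, rfl⟩ := hp
        rw [hI, mem_filter] at hi
        obtain ⟨-, a, ha⟩ := hi
        rw [mem_biUnion]
        refine ⟨Sum.inl ⟨i, a⟩, ha, ?_⟩
        simp only [nbhd, mem_image]
        exact ⟨j, hj, rfl⟩
      · rw [hX2, mem_filter] at hp
        rw [mem_biUnion]
        refine ⟨Sum.inr p, hp.2, ?_⟩
        simp only [nbhd]
        split
        · simp
        · simp
    · rw [hCC, mem_biUnion] at hy
      obtain ⟨j, hj, hy⟩ := hy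
      rw [mem_image] at hy
      obtain ⟨b, -, rfl⟩ := hy
      rw [hJ, mem_filter] at hj
      obtain ⟨-, i, hij, hmem⟩ := hj
      rw [hX2, mem_filter] at hmem
      rw [mem_biUnion]
      refine ⟨Sum.inr (i, j), hmem.2, ?_⟩
      simp only [nbhd]
      rw [if_neg hij]
      apply mem_insert_of_mem
      simp
  -- Step C : |PU ∪ CC| = |pairsI ∪ X2| + ∑_{j∈J} m j
  have hCCcard : CC.card = ∑ j ∈ J, m j := by
    rw [hCC, card_biUnion]
    · apply sum_congr rfl
      intro j _
      rw [card_image_of_injective]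
      · simp
      · intro a b h
        simpa using h
    · intro a _ b _ hab
      simp only [disjoint_left, mem_image]
      rintro y ⟨x, -, rfl⟩ ⟨x', -, h⟩
      exact hab (congrArg Sigma.fst (Sum.inl_injective h)).symm
  have stepC : (PU ∪ CC).card = (pairsI ∪ X2).card + ∑ j ∈ J, m j := by
    rw [card_union_of_disjoint]
    · rw [hCCcard, hPU, card_image_of_injective _ Sum.inr_injective]
    · rw [hPU, hCC]
      simp only [disjoint_left, mem_image, mem_biUnion]
      rintro y ⟨p, -, rfl⟩ ⟨j, -, hy⟩
      obtain ⟨b, -, h⟩ := hy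
      exact Sum.inl_ne_inr h
  -- Step D : arithmetic core
  have hX2split : (X2 ∩ pairsI).card + (X2 \ pairsI).card = X2.card :=
    card_inter_add_card_sdiff _ _
  have hUnion : (pairsI ∪ X2).card = pairsI.card + (X2 \ pairsI).card := by
    rw [union_comm, ← card_sdiff_add_card]
    omega
  have hpairsIcard : pairsI.card = ∑ i ∈ I, (univ.erase i).card := by
    rw [hpairsI, card_biUnion]
    · apply sum_congr rfl
      intro i _
      apply card_image_of_injective
      intro a b hab
      exact congrArg Prod.snd hab
    · intro a _ b _ hab
      simp only [disjoint_left, mem_image]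
      rintro y ⟨x, -, rfl⟩ ⟨x', -, h⟩
      exact hab (congrArg Prod.fst h).symm
  have hint : (X2 ∩ pairsI).card ≤ ∑ i ∈ I, (J.erase i).card := by
    have hsub : X2 ∩ pairsI ⊆ I.biUnion fun i => (J.erase i).image fun j => (i, j) := by
      intro p hp
      rw [mem_inter] at hp
      obtain ⟨hp2, hpI⟩ := hp
      rw [hpairsI, mem_biUnion] at hpI
      obtain ⟨i, hi, hpI⟩ := hpI
      rw [mem_image] at hpI
      obtain ⟨j, hj, rfl⟩ := hpI
      rw [mem_biUnion]
      refine ⟨i, hi, ?_⟩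
      rw [mem_image]
      refine ⟨j, ?_, rfl⟩
      rw [mem_erase] at hj ⊢
      refine ⟨hj.1, ?_⟩
      rw [hJ, mem_filter]
      exact ⟨mem_univ _, i, (Ne.symm hj.1), hp2⟩
    refine le_trans (card_le_card hsub) (le_trans card_biUnion_le (sum_le_sum ?_))
    intro i _
    exact card_image_le
  have herasesplit : ∀ i : Fin n, (univ.erase i).card
      = (J.erase i).card + ((Jᶜ).erase i).card := by
    intro i
    rw [← card_union_of_disjoint]
    · congr 1
      ext x
      simp only [mem_union, mem_erase, mem_compl, mem_univ, and_true]
      constructor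
      · intro hx
        by_cases hxJ : x ∈ J
        · exact Or.inl ⟨hx, hxJ⟩
        · exact Or.inr ⟨hx, hxJ⟩
      · rintro (⟨hx, -⟩ | ⟨hx, -⟩) <;> exact hx
    · simp only [disjoint_left, mem_erase, mem_compl]
      rintro x ⟨-, hxJ⟩ ⟨-, hxJ'⟩
      exact hxJ' hxJ
  -- key Berge consequence
  have hkey : ∑ i ∈ I, d i ≤ (∑ i ∈ I, ((Jᶜ).erase i).card) + ∑ j ∈ J, m j := by
    have h1 : ∑ i ∈ Jᶜ, m i ≤ (∑ i ∈ I, ((Jᶜ).erase i).card) + ∑ i ∈ Iᶜ, d i := by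
      have hb := hberge Jᶜ
      have hsplit : ∑ i, min (d i) (((Jᶜ).erase i).card)
          = (∑ i ∈ I, min (d i) (((Jᶜ).erase i).card))
            + ∑ i ∈ Iᶜ, min (d i) (((Jᶜ).erase i).card) := (sum_add_sum_compl I _).symm
      have hle1 : ∑ i ∈ I, min (d i) (((Jᶜ).erase i).card)
          ≤ ∑ i ∈ I, ((Jᶜ).erase i).card := sum_le_sum fun i _ => min_le_right _ _
      have hle2 : ∑ i ∈ Iᶜ, min (d i) (((Jᶜ).erase i).card)
          ≤ ∑ i ∈ Iᶜ, d i := sum_le_sum fun i _ => min_le_left _ _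
      omega
    have h2 : (∑ i ∈ I, d i) + ∑ i ∈ Iᶜ, d i = (∑ j ∈ J, m j) + ∑ j ∈ Jᶜ, m j := by
      rw [sum_add_sum_compl, sum_add_sum_compl, hsum]
    omega
  have h3 : ∑ i ∈ I, (univ.erase i).card
      = (∑ i ∈ I, (J.erase i).card) + ∑ i ∈ I, ((Jᶜ).erase i).card := by
    rw [← sum_add_distrib]
    exact sum_congr rfl fun i _ => herasesplit i
  -- assemble
  have final : X.card ≤ (PU ∪ CC).card := by
    have hc := stepC
    omega
  exact le_trans final (card_le_card stepB)

lemma exists_realization (m d : Fin n → ℕ)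
    (hsum : ∑ i, m i = ∑ i, d i)
    (hberge : ∀ A : Finset (Fin n), ∑ i ∈ A, m i ≤ ∑ i, min (d i) ((A.erase i).card)) :
    ∃ A : Fin n → Fin n → Bool,
      (∀ i, A i i = false)
      ∧ (∀ v, (∑ u, if A u v then 1 else 0) = m v)
      ∧ (∀ v, (∑ u, if A v u then 1 else 0) = d v) := by
  classical
  obtain ⟨f, hinj, hf⟩ :=
    (Finset.all_card_le_biUnion_card_iff_exists_injective (nbhd m d)).mp
      (hall_cond m d hsum hberge)
  have hcard : Fintype.card ((Σ i : Fin n, Fin (d i)) ⊕ (Fin n × Fin n))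
      = Fintype.card ((Σ j : Fin n, Fin (m j)) ⊕ (Fin n × Fin n)) := by
    simp [hsum]
  have hsurj : Function.Surjective f :=
    ((Fintype.bijective_iff_injective_and_card f).mpr ⟨hinj, hcard⟩).2
  -- basic facts about f
  have hfl : ∀ (i : Fin n) (a : Fin (d i)),
      ∃ j, j ≠ i ∧ f (Sum.inl ⟨i, a⟩) = Sum.inr (i, j) := by
    intro i a
    have h := hf (Sum.inl ⟨i, a⟩)
    simp only [nbhd, mem_image, mem_erase] at h
    obtain ⟨j, hj, h⟩ := h
    exact ⟨j, hj.1, h.symm⟩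
  have hfr : ∀ i j : Fin n, i ≠ j →
      f (Sum.inr (i, j)) = Sum.inr (i, j)
        ∨ ∃ b : Fin (m j), f (Sum.inr (i, j)) = Sum.inl ⟨j, b⟩ := by
    intro i j hij
    have h := hf (Sum.inr (i, j))
    simp only [nbhd] at h
    rw [if_neg hij] at h
    rw [mem_insert] at h
    rcases h with h | h
    · exact Or.inl h
    · rw [mem_image] at h
      obtain ⟨b, -, hb⟩ := h
      exact Or.inr ⟨b, hb.symm⟩
  set A : Fin n → Fin n → Bool :=
    fun i j => decide (i ≠ j) && (f (Sum.inr (i, j))).isLeft with hA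
  have hAdiag : ∀ i, A i i = false := by
    intro i; simp [hA]
  have hAiff : ∀ i j : Fin n, A i j = true ↔
      (i ≠ j ∧ ∃ b : Fin (m j), f (Sum.inr (i, j)) = Sum.inl ⟨j, b⟩) := by
    intro i j
    rw [hA]
    simp only [Bool.and_eq_true, decide_eq_true_eq]
    constructor
    · rintro ⟨hij, hleft⟩
      refine ⟨hij, ?_⟩
      rcases hfr i j hij with h | h
      · rw [h] at hleft; simp at hleft
      · exact h
    · rintro ⟨hij, b, hb⟩
      refine ⟨hij, ?_⟩
      rw [hb]; rfl
  refine ⟨A, hAdiag, ?_, ?_⟩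
  · -- column sums
    intro v
    rw [Finset.sum_boole]
    have himg : (univ.filter fun u => A u v).image (fun u => f (Sum.inr (u, v)))
        = univ.image (fun b : Fin (m v) =>
            (Sum.inl ⟨v, b⟩ : (Σ j : Fin n, Fin (m j)) ⊕ (Fin n × Fin n))) := by
      apply Subset.antisymm
      · intro y hy
        rw [mem_image] at hy
        obtain ⟨u, hu, rfl⟩ := hy
        rw [mem_filter] at hu
        obtain ⟨-, hu⟩ := hu
        rw [hAiff] at hu
        obtain ⟨-, b, hb⟩ := hu
        rw [hb, mem_image]
        exact ⟨b, mem_univ _, rfl⟩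
      · intro y hy
        rw [mem_image] at hy
        obtain ⟨b, -, rfl⟩ := hy
        obtain ⟨x, hx⟩ := hsurj (Sum.inl ⟨v, b⟩)
        rcases x with ⟨i, a⟩ | ⟨i, j⟩
        · obtain ⟨j, -, hj⟩ := hfl i a
          rw [hx] at hj
          exact absurd hj (by simp)
        · by_cases hij : i = j
          · have h := hf (Sum.inr (i, j))
            simp only [nbhd, if_pos hij, mem_singleton] at h
            rw [hx] at h
            exact absurd h (by simp)
          · rcases hfr i j hij with h | h
            · rw [hx] at h
              exact absurd h (by simp)
            · obtain ⟨b', hb'⟩ := h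
              have hveq : j = v := by
                rw [hx] at hb'
                have := (Sum.inl_injective hb'.symm)
                exact (Sigma.mk.inj_iff.mp this).1
              subst hveq
              rw [mem_image]
              refine ⟨i, ?_, hx⟩
              rw [mem_filter]
              refine ⟨mem_univ _, ?_⟩
              rw [hAiff]
              exact ⟨hij, b', hb'⟩
    have hinj2 : Set.InjOn (fun u => f (Sum.inr (u, v)))
        ↑(univ.filter fun u => A u v) := by
      intro a _ b _ hab
      have := hinj hab
      have := Sum.inr_injective this
      exact congrArg Prod.fst this
    calc (univ.filter fun u => A u v).card
        = ((univ.filter fun u => A u v).image (fun u => f (Sum.inr (u, v)))).card :=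
          (card_image_of_injOn hinj2).symm
      _ = (univ.image (fun b : Fin (m v) =>
            (Sum.inl ⟨v, b⟩ : (Σ j : Fin n, Fin (m j)) ⊕ (Fin n × Fin n)))).card := by
          rw [himg]
      _ = m v := by
          rw [card_image_of_injective]
          · simp
          · intro a b h
            simpa using h
  · -- row sums
    intro i
    rw [Finset.sum_boole]
    set g : Fin (d i) → Fin n := fun a =>
      Sum.elim (fun _ => i) (fun p => p.2) (f (Sum.inl ⟨i, a⟩)) with hg
    have hgspec : ∀ a : Fin (d i), g a ≠ i ∧ f (Sum.inl ⟨i, a⟩) = Sum.inr (i, g a) := by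
      intro a
      obtain ⟨j, hj, hfa⟩ := hfl i a
      have : g a = j := by rw [hg]; simp [hfa]
      rw [this]
      exact ⟨hj, hfa⟩
    have himg : univ.image g = univ.filter (fun j => A i j) := by
      apply Subset.antisymm
      · intro j hj
        rw [mem_image] at hj
        obtain ⟨a, -, rfl⟩ := hj
        obtain ⟨hne, hfa⟩ := hgspec a
        rw [mem_filter]
        refine ⟨mem_univ _, ?_⟩
        rw [hAiff]
        refine ⟨Ne.symm hne, ?_⟩
        rcases hfr i (g a) (Ne.symm hne) with h | h
        · exfalso
          rw [← hfa] at h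
          have := hinj h
          exact absurd this (by simp)
        · exact h
      · intro j hj
        rw [mem_filter] at hj
        obtain ⟨-, hj⟩ := hj
        rw [hAiff] at hj
        obtain ⟨hij, b, hb⟩ := hj
        obtain ⟨x, hx⟩ := hsurj (Sum.inr (i, j))
        rcases x with ⟨i', a⟩ | ⟨i', j'⟩
        · obtain ⟨j'', -, hj''⟩ := hfl i' a
          rw [hx] at hj''
          have heq : (i', j'') = (i, j) := Sum.inr_injective hj''.symm
          have hi' : i' = i := congrArg Prod.fst heq
          subst hi'
          rw [mem_image]
          refine ⟨a, mem_univ _, ?_⟩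
          obtain ⟨-, hfa⟩ := hgspec a
          rw [hx] at hfa
          exact congrArg Prod.snd (Sum.inr_injective hfa.symm)
        · have h := hf (Sum.inr (i', j'))
          simp only [nbhd] at h
          by_cases hij' : i' = j'
          · rw [if_pos hij', mem_singleton] at h
            rw [hx] at h
            have heq : (i, j) = (i', j') := Sum.inr_injective h
            have h1 : i = i' := congrArg Prod.fst heq
            have h2 : j = j' := congrArg Prod.snd heq
            exact absurd (h1.trans (hij'.trans h2.symm)) hij
          · rw [if_neg hij', mem_insert] at h
            rcases h with h | h
            · rw [hx] at h
              have heq : (i, j) = (i', j') := Sum.inr_injective h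
              rw [← heq] at hx
              rw [hx] at hb
              exact absurd hb (by simp)
            · rw [mem_image] at h
              obtain ⟨b', -, hb'⟩ := h
              rw [hx] at hb'
              exact absurd hb' (by simp)
    have hginj : Function.Injective g := by
      intro a b hab
      obtain ⟨-, ha⟩ := hgspec a
      obtain ⟨-, hb⟩ := hgspec b
      rw [hab] at ha
      rw [← hb] at ha
      have := hinj ha
      simpa using this
    calc (univ.filter fun j => A i j).card
        = (univ.image g).card := by rw [himg]
      _ = d i := by rw [card_image_of_injective _ hginj]; simp

end Stmt8Aux

/-- Berge's criterion: a bi-degree-sequence `(m, d)` on `n` vertices is realized by a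
simple directed graph (no self-loops, at most one edge in each direction between any
ordered pair of vertices) if and only if the in- and out-degree sums agree and for
every vertex subset `A`, `∑_{v_i ∈ A} m_i ≤ ∑_i min{d_i, |A \ {v_i}|}`. -/
theorem stmt8 (n : ℕ) (m d : Fin n → ℕ) :
    (∃ A : Fin n → Fin n → Bool,
        (∀ i, A i i = false)
        ∧ (∀ v, (∑ u, if A u v then 1 else 0) = m v)
        ∧ (∀ v, (∑ u, if A v u then 1 else 0) = d v))
    ↔ ((∑ i, m i = ∑ i, d i)
        ∧ ∀ A : Finset (Fin n),
            ∑ i ∈ A, m i ≤ ∑ i : Fin n, min (d i) ((A.erase i).card)) := by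
  classical
  constructor
  · rintro ⟨A, hdiag, hin, hout⟩
    constructor
    · calc ∑ i, m i = ∑ v, ∑ u, (if A u v then 1 else 0) :=
            (Finset.sum_congr rfl fun v _ => (hin v).symm)
        _ = ∑ u, ∑ v, (if A u v then 1 else 0) := Finset.sum_comm
        _ = ∑ i, d i := Finset.sum_congr rfl fun u _ => hout u
    · intro B
      calc ∑ i ∈ B, m i = ∑ v ∈ B, ∑ u, (if A u v then 1 else 0) :=
            Finset.sum_congr rfl fun v _ => (hin v).symm
        _ = ∑ u, ∑ v ∈ B, (if A u v then 1 else 0) := Finset.sum_comm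
        _ ≤ ∑ u, min (d u) ((B.erase u).card) := by
            apply Finset.sum_le_sum
            intro u _
            apply le_min
            · rw [← hout u]
              apply Finset.sum_le_sum_of_subset (Finset.subset_univ B)
            · rw [← Finset.card_filter]
              apply Finset.card_le_card
              intro v hv
              rw [Finset.mem_filter] at hv
              rw [Finset.mem_erase]
              refine ⟨?_, hv.1⟩
              intro hvu
              rw [hvu] at hv
              rw [hdiag u] at hv
              exact Bool.noConfusion hv.2
  · rintro ⟨hsum, hberge⟩
    exact Stmt8Aux.exists_realization m d hsum hberge
end

section
/- For the bi-degree-sequence (N, D) produced by the balancing algorithm, the empirical joint distribution converges in probability: (1/n)∑_{k=1}^n 1(N_k = i, D_k = j) → f_i g_j for all nonnegative integers i, j, as n → ∞, where f_i = P(γ_1 = i) and g_j = P(ξ_1 = j). -/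
open MeasureTheory ProbabilityTheory Filter

section Helpers

variable {Ω : Type*} [MeasurableSpace Ω] {P : Measure Ω} [IsProbabilityMeasure P]

/-- Mean value bound for rpow. -/
lemma rpow_sub_rpow_le_mvt {a b p : ℝ} (hp : 1 ≤ p) (ha : 0 ≤ a) (hab : a ≤ b) :
    b ^ p - a ^ p ≤ p * b ^ (p - 1) * (b - a) := by
  rcases eq_or_lt_of_le hab with h | h
  · simp [h]
  · have hcont : Continuous fun x : ℝ => x ^ p :=
      continuous_iff_continuousAt.2 fun x =>
        Real.continuousAt_rpow_const x p (Or.inr (by linarith))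
    obtain ⟨c, hc, hslope⟩ :=
      exists_hasDerivAt_eq_slope (fun x : ℝ => x ^ p) (fun x => p * x ^ (p - 1)) h
        hcont.continuousOn
        (fun x _ => Real.hasDerivAt_rpow_const (Or.inr hp))
    have hc0 : 0 ≤ c := le_trans ha hc.1.le
    have h1 : p * c ^ (p - 1) ≤ p * b ^ (p - 1) :=
      mul_le_mul_of_nonneg_left (Real.rpow_le_rpow hc0 hc.2.le (by linarith)) (by linarith)
    rw [hslope] at h1
    have hba : 0 < b - a := sub_pos.2 h
    calc b ^ p - a ^ p = (b ^ p - a ^ p) / (b - a) * (b - a) := by field_simp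
    _ ≤ p * b ^ (p - 1) * (b - a) := mul_le_mul_of_nonneg_right h1 hba.le

lemma markov_toReal {f : Ω → ℝ} (hf : Measurable f) (hnn : ∀ ω, 0 ≤ f ω)
    (hfi : Integrable f P) {t : ℝ} (ht : 0 < t) :
    (P {ω | t < f ω}).toReal ≤ (∫ ω, f ω ∂P) / t := by
  have hA : MeasurableSet {ω | t < f ω} := measurableSet_lt measurable_const hf
  have hind : ∫ ω, Set.indicator {ω' | t < f ω'} (fun _ => t) ω ∂P
      = (P {ω' | t < f ω'}).toReal • t := integral_indicator_const t hA
  have hmono : ∀ ω, Set.indicator {ω' | t < f ω'} (fun _ => t) ω ≤ f ω := by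
    intro ω
    by_cases h : ω ∈ {ω' | t < f ω'}
    · rw [Set.indicator_of_mem h]; exact le_of_lt h
    · rw [Set.indicator_of_notMem h]; exact hnn ω
  have hint : Integrable (Set.indicator {ω' | t < f ω'} (fun _ => t)) P :=
    (integrable_const t).indicator hA
  have hle := integral_mono hint hfi hmono
  rw [hind] at hle
  rw [le_div_iff₀ ht]
  simpa [smul_eq_mul] using hle

lemma chebyshev_toReal {f : Ω → ℝ} (hf : Measurable f)
    (hfi : Integrable (fun ω => f ω ^ 2) P) {t : ℝ} (ht : 0 < t) :
    (P {ω | t < |f ω|}).toReal ≤ (∫ ω, f ω ^ 2 ∂P) / t ^ 2 := by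
  have hsub : {ω | t < |f ω|} ⊆ {ω | t ^ 2 < f ω ^ 2} := by
    intro ω (h : t < |f ω|)
    have h2 : t ^ 2 < |f ω| ^ 2 := by
      apply pow_lt_pow_left₀ h ht.le
      norm_num
    simpa [sq_abs] using h2
  have h1 : (P {ω | t < |f ω|}).toReal ≤ (P {ω | t ^ 2 < f ω ^ 2}).toReal :=
    ENNReal.toReal_mono (measure_ne_top _ _) (measure_mono hsub)
  have h2 := markov_toReal (P := P) (hf.pow_const 2) (fun ω => sq_nonneg _) hfi
    (t := t ^ 2) (by positivity)
  exact le_trans h1 h2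

lemma integral_sq_sum_le {Z : ℕ → Ω → ℝ} {n : ℕ} {V : ℝ}
    (hprod : ∀ k l, k ∈ Finset.range n → l ∈ Finset.range n →
      Integrable (fun ω => Z k ω * Z l ω) P)
    (hoff : ∀ k l, k ∈ Finset.range n → l ∈ Finset.range n → k ≠ l →
      ∫ ω, Z k ω * Z l ω ∂P = 0)
    (hdiag : ∀ k, k ∈ Finset.range n → ∫ ω, Z k ω * Z k ω ∂P ≤ V) :
    ∫ ω, (∑ k ∈ Finset.range n, Z k ω) ^ 2 ∂P ≤ n * V := by
  have hexpand : ∀ ω : Ω, (∑ k ∈ Finset.range n, Z k ω) ^ 2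
      = ∑ k ∈ Finset.range n, ∑ l ∈ Finset.range n, Z k ω * Z l ω := by
    intro ω; rw [sq, Finset.sum_mul_sum]
  calc ∫ ω, (∑ k ∈ Finset.range n, Z k ω) ^ 2 ∂P
      = ∫ ω, ∑ k ∈ Finset.range n, ∑ l ∈ Finset.range n, Z k ω * Z l ω ∂P := by
        simp_rw [hexpand]
    _ = ∑ k ∈ Finset.range n, ∫ ω, ∑ l ∈ Finset.range n, Z k ω * Z l ω ∂P := by
        exact integral_finset_sum _ fun k hk =>
          integrable_finset_sum _ fun l hl => hprod k l hk hl
    _ = ∑ k ∈ Finset.range n, ∑ l ∈ Finset.range n, ∫ ω, Z k ω * Z l ω ∂P :=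
        Finset.sum_congr rfl fun k hk =>
          integral_finset_sum _ fun l hl => hprod k l hk hl
    _ = ∑ k ∈ Finset.range n, ∫ ω, Z k ω * Z k ω ∂P := by
        refine Finset.sum_congr rfl fun k hk => ?_
        exact Finset.sum_eq_single_of_mem k hk fun l hl hlk => hoff k l hk hl (Ne.symm hlk)
    _ ≤ ∑ _k ∈ Finset.range n, V := Finset.sum_le_sum fun k hk => hdiag k hk
    _ = n * V := by simp [Finset.sum_const, Finset.card_range, nsmul_eq_mul]


lemma tail_poly {X : Ω → ℕ} {αr q : ℝ} (hq : 0 < q) (hqα : q < αr) {L : ℝ → ℝ}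
    (hLpos : ∀ x > (0:ℝ), 0 < L x)
    (hLslow : ∀ t > (0:ℝ), Tendsto (fun x => L (t * x) / L x) atTop (nhds 1))
    (htail : ∀ x : ℝ, 0 < x → (P {ω | x < (X ω : ℝ)}).toReal ≤ x ^ (-αr) * L x) :
    ∃ C : ℝ, 0 < C ∧ ∀ x : ℝ, 1 ≤ x → (P {ω | x < (X ω : ℝ)}).toReal ≤ C * x ^ (-q) := by
  set η := αr - q with hη
  have hη0 : 0 < η := sub_pos.2 hqα
  set B := (2:ℝ) ^ η with hB
  have hB1 : 1 < B := (Real.one_lt_rpow_iff_of_pos two_pos).2 (Or.inl ⟨one_lt_two, hη0⟩)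
  have hB0 : 0 < B := lt_trans one_pos hB1
  have hev : ∀ᶠ x in atTop, L (2 * x) / L x ≤ B :=
    (hLslow 2 two_pos).eventually (eventually_le_nhds hB1)
  obtain ⟨R0, hR0⟩ := eventually_atTop.1 hev
  set R := max R0 1 with hRdef
  have hR1 : (1:ℝ) ≤ R := le_max_right _ _
  have hRpos : (0:ℝ) < R := lt_of_lt_of_le one_pos hR1
  have hstep : ∀ x, R ≤ x → L (2 * x) ≤ B * L x := by
    intro x hx
    have hx0 : 0 < x := lt_of_lt_of_le hRpos hx
    have h := hR0 x (le_trans (le_max_left _ _) hx)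
    have hLx : L x ≠ 0 := (hLpos x hx0).ne'
    calc L (2 * x) = L (2 * x) / L x * L x := by field_simp
    _ ≤ B * L x := mul_le_mul_of_nonneg_right h (hLpos x hx0).le
  have hdyad : ∀ m : ℕ, L (R * 2 ^ m) ≤ L R * B ^ m := by
    intro m; induction m with
    | zero => simp
    | succ m ih =>
      have h2m : (1:ℝ) ≤ 2 ^ m := one_le_pow₀ one_le_two
      have hge : R ≤ R * 2 ^ m := le_mul_of_one_le_right hRpos.le h2m
      have harg : R * 2 ^ (m + 1) = 2 * (R * 2 ^ m) := by ring
      rw [harg]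
      calc L (2 * (R * 2 ^ m)) ≤ B * L (R * 2 ^ m) := hstep _ hge
      _ ≤ B * (L R * B ^ m) := mul_le_mul_of_nonneg_left ih hB0.le
      _ = L R * B ^ (m + 1) := by ring
  have hC1 : 0 < 2 ^ αr * L R := mul_pos (Real.rpow_pos_of_pos two_pos _) (hLpos R hRpos)
  have key : ∀ x, R ≤ x → (P {ω | x < (X ω : ℝ)}).toReal ≤ (2 ^ αr * L R) * x ^ (-q) := by
    intro x hx
    have hx0 : 0 < x := lt_of_lt_of_le hRpos hx
    have hxR : 1 ≤ x / R := (one_le_div hRpos).2 hx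
    set m := ⌊Real.logb 2 (x / R)⌋₊ with hm
    have hlog0 : 0 ≤ Real.logb 2 (x / R) := Real.logb_nonneg one_lt_two hxR
    have hxreq : (2:ℝ) ^ Real.logb 2 (x / R) = x / R :=
      Real.rpow_logb two_pos (by norm_num) (by positivity)
    have h2m_le : (2:ℝ) ^ m ≤ x / R := by
      rw [← Real.rpow_natCast 2 m, ← hxreq]
      exact Real.rpow_le_rpow_of_exponent_le one_le_two (Nat.floor_le hlog0)
    have h_lt : x / R < (2:ℝ) ^ (m + 1) := by
      rw [← Real.rpow_natCast 2 (m + 1), ← hxreq]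
      apply Real.rpow_lt_rpow_of_exponent_lt one_lt_two
      push_cast
      exact Nat.lt_floor_add_one _
    have hx1 : R * 2 ^ m ≤ x := by
      rw [mul_comm]; exact (le_div_iff₀ hRpos).1 h2m_le
    have hx2 : x < 2 * (R * 2 ^ m) := by
      have h := (div_lt_iff₀ hRpos).1 h_lt
      calc x < 2 ^ (m + 1) * R := h
      _ = 2 * (R * 2 ^ m) := by ring
    have hRm0 : (0:ℝ) < R * 2 ^ m := by positivity
    have hmono : (P {ω | x < (X ω : ℝ)}).toReal ≤ (P {ω | R * 2 ^ m < (X ω : ℝ)}).toReal :=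
      ENNReal.toReal_mono (measure_ne_top _ _)
        (measure_mono fun ω h => lt_of_le_of_lt hx1 h)
    have hbase : (R * 2 ^ m) ^ (-αr) ≤ (x / 2) ^ (-αr) := by
      apply Real.rpow_le_rpow_of_nonpos (by positivity) (by linarith) (by linarith)
    have hBm : B ^ m ≤ x ^ η := by
      have h1 : B ^ m = ((2:ℝ) ^ m) ^ η := by
        rw [← Real.rpow_natCast B m, ← Real.rpow_natCast 2 m, hB,
          ← Real.rpow_mul (by norm_num), ← Real.rpow_mul (by norm_num), mul_comm]
      rw [h1]
      have h2 : ((2:ℝ) ^ m) ≤ x := le_trans h2m_le (div_le_self hx0.le hR1)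
      exact Real.rpow_le_rpow (by positivity) h2 hη0.le
    calc (P {ω | x < (X ω : ℝ)}).toReal
        ≤ (R * 2 ^ m) ^ (-αr) * L (R * 2 ^ m) := le_trans hmono (htail _ hRm0)
      _ ≤ (x / 2) ^ (-αr) * (L R * B ^ m) := by
          apply mul_le_mul hbase (hdyad m) (hLpos _ hRm0).le (by positivity)
      _ ≤ (x / 2) ^ (-αr) * (L R * x ^ η) := by
          apply mul_le_mul_of_nonneg_left
            (mul_le_mul_of_nonneg_left hBm (hLpos R hRpos).le) (by positivity)
      _ = (2 ^ αr * L R) * (x ^ (-αr) * x ^ η) := by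
          rw [Real.div_rpow hx0.le (by norm_num), Real.rpow_neg (by norm_num : (0:ℝ) ≤ 2)]
          field_simp
      _ = (2 ^ αr * L R) * x ^ (-q) := by
          rw [← Real.rpow_add hx0]
          congr 1
          rw [hη]; ring
  refine ⟨max (2 ^ αr * L R) (R ^ q), lt_max_of_lt_left hC1, fun x hx1x => ?_⟩
  have hx0 : (0:ℝ) < x := lt_of_lt_of_le one_pos hx1x
  have hxq : (0:ℝ) ≤ x ^ (-q) := Real.rpow_nonneg hx0.le _
  rcases le_or_gt R x with h | h
  · exact le_trans (key x h) (mul_le_mul_of_nonneg_right (le_max_left _ _) hxq)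
  · have hT1 : (P {ω | x < (X ω : ℝ)}).toReal ≤ 1 := by
      rw [← ENNReal.toReal_one]
      exact ENNReal.toReal_mono (by norm_num) prob_le_one
    have hxq0 : (0:ℝ) < x ^ q := Real.rpow_pos_of_pos hx0 _
    have h1 : x ^ q ≤ R ^ q := Real.rpow_le_rpow hx0.le h.le hq.le
    have h2 : (1:ℝ) ≤ R ^ q * x ^ (-q) := by
      rw [Real.rpow_neg hx0.le]
      calc (1:ℝ) = x ^ q * (x ^ q)⁻¹ := (mul_inv_cancel₀ hxq0.ne').symm
      _ ≤ R ^ q * (x ^ q)⁻¹ := mul_le_mul_of_nonneg_right h1 (inv_nonneg.2 hxq0.le)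
    calc (P {ω | x < (X ω : ℝ)}).toReal ≤ 1 := hT1
    _ ≤ R ^ q * x ^ (-q) := h2
    _ ≤ max (2 ^ αr * L R) (R ^ q) * x ^ (-q) :=
        mul_le_mul_of_nonneg_right (le_max_right _ _) hxq
lemma integrable_rpow_of_tail {X : Ω → ℕ} (hX : Measurable X) {C q p : ℝ}
    (hp1 : 1 ≤ p) (hpq : p < q)
    (htail : ∀ x : ℝ, 1 ≤ x → (P {ω | x < (X ω : ℝ)}).toReal ≤ C * x ^ (-q)) :
    Integrable (fun ω => (X ω : ℝ) ^ p) P := by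
  have hq0 : 0 < q := lt_of_le_of_lt (by linarith : (0:ℝ) ≤ p) hpq
  have hC0 : 0 ≤ C := by
    have h := htail 1 le_rfl
    have h0 : (0:ℝ) ≤ (P {ω | (1:ℝ) < (X ω : ℝ)}).toReal := ENNReal.toReal_nonneg
    simpa [Real.one_rpow] using le_trans h0 h
  have hXR : Measurable fun ω => (X ω : ℝ) := measurable_from_top.comp hX
  have hF : Measurable fun ω => (X ω : ℝ) ^ p :=
    (measurable_from_top (f := fun m : ℕ => (m : ℝ) ^ p)).comp hX
  have hset : ∀ m : ℕ, MeasurableSet {ω | (m : ℝ) < (X ω : ℝ)} := fun m =>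
    measurableSet_lt measurable_const hXR
  have hd0 : ∀ m : ℕ, (0:ℝ) ≤ ((m : ℝ) + 1) ^ p - (m : ℝ) ^ p := fun m =>
    sub_nonneg.2 (Real.rpow_le_rpow (by positivity) (by linarith) (by linarith))
  -- pointwise layer-cake identity
  have hpt : ∀ ω : Ω, ENNReal.ofReal ((X ω : ℝ) ^ p)
      = ∑' m : ℕ, Set.indicator {ω' | (m : ℝ) < (X ω' : ℝ)}
          (fun _ => ENNReal.ofReal (((m : ℝ) + 1) ^ p - (m : ℝ) ^ p)) ω := by
    intro ω
    have hsupp : ∀ m : ℕ, m ∉ Finset.range (X ω) →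
        Set.indicator {ω' | (m : ℝ) < (X ω' : ℝ)}
          (fun _ => ENNReal.ofReal (((m : ℝ) + 1) ^ p - (m : ℝ) ^ p)) ω = 0 := by
      intro m hm
      rw [Finset.mem_range, not_lt] at hm
      apply Set.indicator_of_notMem
      simp only [Set.mem_setOf_eq, not_lt]
      exact_mod_cast hm
    rw [tsum_eq_sum hsupp]
    have hval : ∀ m ∈ Finset.range (X ω),
        Set.indicator {ω' | (m : ℝ) < (X ω' : ℝ)}
          (fun _ => ENNReal.ofReal (((m : ℝ) + 1) ^ p - (m : ℝ) ^ p)) ω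
        = ENNReal.ofReal (((m : ℝ) + 1) ^ p - (m : ℝ) ^ p) := by
      intro m hm
      rw [Finset.mem_range] at hm
      apply Set.indicator_of_mem
      simp only [Set.mem_setOf_eq]
      exact_mod_cast hm
    rw [Finset.sum_congr rfl hval, ← ENNReal.ofReal_sum_of_nonneg (fun m _ => hd0 m)]
    congr 1
    have htel := Finset.sum_range_sub (fun m : ℕ => (m : ℝ) ^ p) (X ω)
    have h0 : ((0:ℕ) : ℝ) ^ p = 0 := by
      simp [Real.zero_rpow (by linarith : p ≠ 0)]
    rw [h0, sub_zero] at htel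
    rw [← htel]
    refine Finset.sum_congr rfl fun m _ => ?_
    push_cast
    ring_nf
  -- lintegral computation
  have hlint : (∫⁻ ω, ENNReal.ofReal ((X ω : ℝ) ^ p) ∂P)
      = ∑' m : ℕ, ENNReal.ofReal (((m : ℝ) + 1) ^ p - (m : ℝ) ^ p)
          * P {ω | (m : ℝ) < (X ω : ℝ)} := by
    simp_rw [hpt]
    rw [lintegral_tsum (fun m => (measurable_const.indicator (hset m)).aemeasurable)]
    refine tsum_congr fun m => ?_
    rw [lintegral_indicator_const (hset m)]
  -- bound the sum
  set E : ℝ := max 1 (p * 2 ^ (p - 1) * C * 2 ^ (q + 1 - p)) with hE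
  have hE1 : (1:ℝ) ≤ E := le_max_left _ _
  have hterm : ∀ m : ℕ, ENNReal.ofReal (((m : ℝ) + 1) ^ p - (m : ℝ) ^ p)
      * P {ω | (m : ℝ) < (X ω : ℝ)} ≤ ENNReal.ofReal (E * ((m : ℝ) + 1) ^ (p - 1 - q)) := by
    intro m
    rcases Nat.eq_zero_or_pos m with hm | hm
    · subst hm
      have e1 : (((0:ℕ):ℝ) + 1) ^ p - ((0:ℕ):ℝ) ^ p = 1 := by
        norm_num [Real.one_rpow, Real.zero_rpow (show p ≠ 0 by linarith)]
      have e2 : E * (((0:ℕ):ℝ) + 1) ^ (p - 1 - q) = E := by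
        norm_num [Real.one_rpow]
      rw [e1, e2, ENNReal.ofReal_one, one_mul]
      calc P {ω | (((0:ℕ)):ℝ) < (X ω : ℝ)} ≤ 1 := prob_le_one
      _ ≤ ENNReal.ofReal E := ENNReal.one_le_ofReal.2 hE1
    · have hm1 : (1:ℝ) ≤ (m : ℝ) := by exact_mod_cast hm
      have hmpos : (0:ℝ) < (m : ℝ) := by linarith
      -- bound on increment
      have hmvt : ((m : ℝ) + 1) ^ p - (m : ℝ) ^ p ≤ p * 2 ^ (p - 1) * (m : ℝ) ^ (p - 1) := by
        have h := rpow_sub_rpow_le_mvt (a := (m:ℝ)) (b := (m:ℝ)+1) hp1 hmpos.le (by linarith)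
        have h2 : ((m:ℝ) + 1) ^ (p - 1) ≤ (2 * (m:ℝ)) ^ (p - 1) :=
          Real.rpow_le_rpow (by linarith) (by linarith) (by linarith)
        have h3 : (2 * (m:ℝ)) ^ (p - 1) = 2 ^ (p - 1) * (m : ℝ) ^ (p - 1) :=
          Real.mul_rpow (by norm_num) hmpos.le
        calc ((m : ℝ) + 1) ^ p - (m : ℝ) ^ p
            ≤ p * ((m:ℝ) + 1) ^ (p - 1) * (((m:ℝ) + 1) - (m:ℝ)) := h
          _ = p * ((m:ℝ) + 1) ^ (p - 1) := by ring_nf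
          _ ≤ p * (2 ^ (p - 1) * (m : ℝ) ^ (p - 1)) := by
              rw [← h3]
              exact mul_le_mul_of_nonneg_left h2 (by linarith)
          _ = p * 2 ^ (p - 1) * (m : ℝ) ^ (p - 1) := by ring
      have htl : P {ω | (m : ℝ) < (X ω : ℝ)} ≤ ENNReal.ofReal (C * (m : ℝ) ^ (-q)) := by
        rw [← ENNReal.ofReal_toReal (measure_ne_top P _)]
        exact ENNReal.ofReal_le_ofReal (htail (m : ℝ) hm1)
      calc ENNReal.ofReal (((m : ℝ) + 1) ^ p - (m : ℝ) ^ p) * P {ω | (m : ℝ) < (X ω : ℝ)}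
          ≤ ENNReal.ofReal (p * 2 ^ (p - 1) * (m : ℝ) ^ (p - 1))
            * ENNReal.ofReal (C * (m : ℝ) ^ (-q)) :=
            mul_le_mul' (ENNReal.ofReal_le_ofReal hmvt) htl
        _ = ENNReal.ofReal ((p * 2 ^ (p - 1) * (m : ℝ) ^ (p - 1)) * (C * (m : ℝ) ^ (-q))) :=
            (ENNReal.ofReal_mul (by positivity)).symm
        _ ≤ ENNReal.ofReal (E * ((m : ℝ) + 1) ^ (p - 1 - q)) := by
            apply ENNReal.ofReal_le_ofReal
            have hmm : (m : ℝ) ^ (p - 1) * (m : ℝ) ^ (-q) = (m : ℝ) ^ (p - 1 - q) := by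
              rw [← Real.rpow_add hmpos, show p - 1 + -q = p - 1 - q by ring]
            have hmono : (m : ℝ) ^ (p - 1 - q) ≤ 2 ^ (q + 1 - p) * ((m:ℝ) + 1) ^ (p - 1 - q) := by
              have h4 : ((m:ℝ) + 1) ^ (p - 1 - q) ≥ (2 * (m:ℝ)) ^ (p - 1 - q) :=
                Real.rpow_le_rpow_of_nonpos (by linarith) (by linarith) (by linarith)
              have h5 : (2 * (m:ℝ)) ^ (p - 1 - q) = 2 ^ (p - 1 - q) * (m:ℝ) ^ (p - 1 - q) :=
                Real.mul_rpow (by norm_num) hmpos.le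
              have h6 : (0:ℝ) < 2 ^ (q + 1 - p) := Real.rpow_pos_of_pos two_pos _
              have h7 : (2:ℝ) ^ (q + 1 - p) * 2 ^ (p - 1 - q) = 1 := by
                rw [← Real.rpow_add two_pos, show q + 1 - p + (p - 1 - q) = 0 by ring,
                  Real.rpow_zero]
              calc (m : ℝ) ^ (p - 1 - q)
                  = 2 ^ (q + 1 - p) * (2 ^ (p - 1 - q) * (m:ℝ) ^ (p - 1 - q)) := by
                    rw [← mul_assoc, h7, one_mul]
                _ ≤ 2 ^ (q + 1 - p) * ((m:ℝ) + 1) ^ (p - 1 - q) := by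
                    rw [← h5]
                    exact mul_le_mul_of_nonneg_left h4 h6.le
            calc p * 2 ^ (p - 1) * (m : ℝ) ^ (p - 1) * (C * (m : ℝ) ^ (-q))
                = (p * 2 ^ (p - 1) * C) * ((m : ℝ) ^ (p - 1 - q)) := by
                  rw [← hmm]; ring
              _ ≤ (p * 2 ^ (p - 1) * C) * (2 ^ (q + 1 - p) * ((m:ℝ) + 1) ^ (p - 1 - q)) := by
                  apply mul_le_mul_of_nonneg_left hmono (by positivity)
              _ = (p * 2 ^ (p - 1) * C * 2 ^ (q + 1 - p)) * ((m:ℝ) + 1) ^ (p - 1 - q) := by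
                  ring
              _ ≤ E * ((m:ℝ) + 1) ^ (p - 1 - q) := by
                  exact mul_le_mul_of_nonneg_right (le_max_right _ _) (by positivity)
  -- summability of the bounding series
  have hsum : Summable (fun m : ℕ => E * ((m : ℝ) + 1) ^ (p - 1 - q)) := by
    apply Summable.mul_left
    have h1 : Summable (fun n : ℕ => (n : ℝ) ^ (p - 1 - q)) :=
      Real.summable_nat_rpow.2 (by linarith)
    have h2 := (summable_nat_add_iff 1).2 h1
    apply h2.congr
    intro n
    push_cast
    ring_nf
  have hg0 : ∀ m : ℕ, (0:ℝ) ≤ E * ((m : ℝ) + 1) ^ (p - 1 - q) := fun m => by positivity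
  have hfin : (∫⁻ ω, ENNReal.ofReal ((X ω : ℝ) ^ p) ∂P) < ⊤ := by
    rw [hlint]
    calc (∑' m : ℕ, ENNReal.ofReal (((m : ℝ) + 1) ^ p - (m : ℝ) ^ p)
          * P {ω | (m : ℝ) < (X ω : ℝ)})
        ≤ ∑' m : ℕ, ENNReal.ofReal (E * ((m : ℝ) + 1) ^ (p - 1 - q)) :=
          ENNReal.tsum_le_tsum hterm
      _ = ENNReal.ofReal (∑' m : ℕ, E * ((m : ℝ) + 1) ^ (p - 1 - q)) :=
          (ENNReal.ofReal_tsum_of_nonneg hg0 hsum).symm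
      _ < ⊤ := ENNReal.ofReal_lt_top
  refine ⟨hF.aestronglyMeasurable, ?_⟩
  rw [hasFiniteIntegral_iff_ofReal (ae_of_all _ fun ω => by positivity)]
  exact hfin

lemma wlln_trunc {X : ℕ → Ω → ℕ} (hmeas : ∀ k, Measurable (X k))
    (hindep : ∀ k l, k ≠ l → IndepFun (X k) (X l) P)
    (hid : ∀ k, Measure.map (X k) P = Measure.map (X 0) P)
    {μm : ℝ} (hint : Integrable (fun ω => (X 0 ω : ℝ)) P)
    (hE : ∫ ω, (X 0 ω : ℝ) ∂P = μm)
    {p K c : ℝ} (hp1 : 1 < p) (hp2 : p < 2) (hcp : 1 < c * p) (hc0 : 0 < c)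
    (hmom : Integrable (fun ω => (X 0 ω : ℝ) ^ p) P)
    (hK0 : 0 ≤ K) (hKb : ∫ ω, (X 0 ω : ℝ) ^ p ∂P ≤ K) :
    Tendsto (fun n : ℕ => (P {ω | (n : ℝ) ^ c / 2
        < |(∑ k ∈ Finset.range n, (X k ω : ℝ)) - (n : ℝ) * μm|}).toReal) atTop (nhds 0) := by
  have hXR : ∀ k, Measurable fun ω => (X k ω : ℝ) := fun k =>
    measurable_from_top.comp (hmeas k)
  -- transfer of integrals and events to index 0
  have htrans : ∀ (g : ℕ → ℝ) (k : ℕ), ∫ ω, g (X k ω) ∂P = ∫ ω, g (X 0 ω) ∂P := by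
    intro g k
    have hg : Measurable g := measurable_from_top
    rw [← integral_map (hmeas k).aemeasurable hg.aestronglyMeasurable, hid k,
      integral_map (hmeas 0).aemeasurable hg.aestronglyMeasurable]
  have hevt : ∀ (S : Set ℕ) (k : ℕ), P (X k ⁻¹' S) = P (X 0 ⁻¹' S) := by
    intro S k
    have hS : MeasurableSet S := (Set.to_countable S).measurableSet
    rw [← Measure.map_apply (hmeas k) hS, hid k, Measure.map_apply (hmeas 0) hS]
  -- the quantitative bound, for n large
  have hconv : Tendsto (fun n : ℕ => K * (n : ℝ) ^ (1 - c * p)) atTop (nhds 0) := by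
    have h1 : Tendsto (fun x : ℝ => x ^ (-(c * p - 1))) atTop (nhds 0) :=
      tendsto_rpow_neg_atTop (by linarith)
    have h2 : Tendsto (fun n : ℕ => ((n : ℝ)) ^ (1 - c * p)) atTop (nhds 0) := by
      have := h1.comp tendsto_natCast_atTop_atTop (α := ℕ)
      simpa [Function.comp_def, neg_sub] using this
    simpa using h2.const_mul K
  have hg : Tendsto (fun n : ℕ => 17 * (K * (n : ℝ) ^ (1 - c * p))) atTop (nhds 0) := by
    simpa using hconv.const_mul (17 : ℝ)
  refine squeeze_zero' (Filter.Eventually.of_forall fun n => ENNReal.toReal_nonneg) ?_ hg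
  have hev14 : ∀ᶠ n : ℕ in atTop, K * (n : ℝ) ^ (1 - c * p) ≤ 1 / 4 :=
    hconv.eventually (eventually_le_nhds (by norm_num))
  filter_upwards [hev14, eventually_ge_atTop 1] with n h14 hn1
  -- setup
  have hn0 : (0 : ℝ) < n := by exact_mod_cast hn1
  have hn1' : (1 : ℝ) ≤ n := by exact_mod_cast hn1
  set b : ℝ := (n : ℝ) ^ c with hbdef
  have hb1 : 1 ≤ b := by
    rw [hbdef, ← Real.one_rpow c]
    exact Real.rpow_le_rpow zero_le_one hn1' hc0.le
  have hb0 : (0 : ℝ) < b := lt_of_lt_of_le one_pos hb1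
  set φ : ℕ → ℝ := fun m => min (m : ℝ) b with hφdef
  have hφm : Measurable φ := measurable_from_top
  set Y : ℕ → Ω → ℝ := fun k ω => φ (X k ω) with hYdef
  have hYmeas : ∀ k, Measurable (Y k) := fun k => hφm.comp (hmeas k)
  have hY0 : ∀ k ω, 0 ≤ Y k ω := fun k ω => le_min (Nat.cast_nonneg _) hb0.le
  have hYb : ∀ k ω, Y k ω ≤ b := fun k ω => min_le_right _ _
  have hYint : ∀ k, Integrable (Y k) P := fun k =>
    (integrable_const b).mono' (hYmeas k).aestronglyMeasurable
      (ae_of_all _ fun ω => by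
        rw [Real.norm_eq_abs, abs_of_nonneg (hY0 k ω)]; exact hYb k ω)
  set ν : ℝ := ∫ ω, Y 0 ω ∂P with hνdef
  have hYν : ∀ k, ∫ ω, Y k ω ∂P = ν := fun k => htrans φ k
  have hν0 : 0 ≤ ν := integral_nonneg (hY0 0)
  have hνμ : ν ≤ μm := by
    rw [hνdef, ← hE]
    exact integral_mono (hYint 0) hint fun ω => min_le_left _ _
  -- power facts
  have hbp : b ^ p = (n : ℝ) ^ (c * p) := by
    rw [hbdef]
    exact (Real.rpow_mul (Nat.cast_nonneg n) c p).symm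
  have hbppos : (0:ℝ) < b ^ p := Real.rpow_pos_of_pos hb0 _
  have hnb : (n : ℝ) * b ^ (1 - p) = (n : ℝ) ^ (1 - c * p) * b := by
    rw [hbdef, ← Real.rpow_mul (Nat.cast_nonneg n)]
    nth_rewrite 1 [← Real.rpow_one (n:ℝ)]
    rw [← Real.rpow_add hn0, ← Real.rpow_add hn0]
    congr 1; ring
  -- bias bound
  have hbias : μm - ν ≤ K * b ^ (1 - p) := by
    have hdint : Integrable (fun ω => (X 0 ω : ℝ) - Y 0 ω) P := hint.sub (hYint 0)
    have hpt : ∀ ω, (X 0 ω : ℝ) - Y 0 ω ≤ (X 0 ω : ℝ) ^ p * b ^ (1 - p) := by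
      intro ω
      rcases le_or_gt ((X 0 ω : ℝ)) b with h | h
      · have : Y 0 ω = (X 0 ω : ℝ) := min_eq_left h
        rw [this, sub_self]
        positivity
      · have hx0 : (0:ℝ) < (X 0 ω : ℝ) := lt_trans hb0 h
        have hY : Y 0 ω = b := min_eq_right h.le
        have hxsplit : (X 0 ω : ℝ) = (X 0 ω : ℝ) ^ p * (X 0 ω : ℝ) ^ (1 - p) := by
          rw [← Real.rpow_add hx0, show p + (1 - p) = 1 by ring, Real.rpow_one]
        have hxe : (X 0 ω : ℝ) ^ (1 - p) ≤ b ^ (1 - p) :=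
          Real.rpow_le_rpow_of_nonpos hb0 h.le (by linarith)
        calc (X 0 ω : ℝ) - Y 0 ω ≤ (X 0 ω : ℝ) := by
              rw [hY]; linarith
          _ = (X 0 ω : ℝ) ^ p * (X 0 ω : ℝ) ^ (1 - p) := hxsplit
          _ ≤ (X 0 ω : ℝ) ^ p * b ^ (1 - p) :=
              mul_le_mul_of_nonneg_left hxe (Real.rpow_nonneg hx0.le _)
    have h1 : ∫ ω, ((X 0 ω : ℝ) - Y 0 ω) ∂P ≤ ∫ ω, (X 0 ω : ℝ) ^ p * b ^ (1 - p) ∂P :=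
      integral_mono hdint (hmom.mul_const _) hpt
    rw [integral_sub hint (hYint 0), hE, ← hνdef] at h1
    rw [integral_mul_const] at h1
    calc μm - ν ≤ (∫ ω, (X 0 ω : ℝ) ^ p ∂P) * b ^ (1 - p) := h1
    _ ≤ K * b ^ (1 - p) :=
        mul_le_mul_of_nonneg_right hKb (Real.rpow_nonneg hb0.le _)
  -- truncated second moment
  have hsq : ∫ ω, Y 0 ω * Y 0 ω ∂P ≤ K * b ^ (2 - p) := by
    have hYsqint : Integrable (fun ω => Y 0 ω * Y 0 ω) P :=
      (integrable_const (b * b)).mono' ((hYmeas 0).mul (hYmeas 0)).aestronglyMeasurable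
        (ae_of_all _ fun ω => by
          rw [Real.norm_eq_abs, abs_of_nonneg (mul_nonneg (hY0 0 ω) (hY0 0 ω))]
          exact mul_le_mul (hYb 0 ω) (hYb 0 ω) (hY0 0 ω) hb0.le)
    have hpt : ∀ ω, Y 0 ω * Y 0 ω ≤ (X 0 ω : ℝ) ^ p * b ^ (2 - p) := by
      intro ω
      rcases le_or_gt ((X 0 ω : ℝ)) b with h | h
      · have hYx : Y 0 ω = (X 0 ω : ℝ) := min_eq_left h
        rcases Nat.eq_zero_or_pos (X 0 ω) with h0 | h0
        · rw [hYx, h0]; simp; positivity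
        · have hx1 : (1:ℝ) ≤ (X 0 ω : ℝ) := by exact_mod_cast h0
          have hx0 : (0:ℝ) < (X 0 ω : ℝ) := by linarith
          have hsplit : (X 0 ω : ℝ) * (X 0 ω : ℝ)
              = (X 0 ω : ℝ) ^ p * (X 0 ω : ℝ) ^ (2 - p) := by
            rw [← Real.rpow_add hx0, show p + (2 - p) = 2 by ring]
            rw [show (2:ℝ) = ((2:ℕ):ℝ) by norm_num, Real.rpow_natCast]
            ring
          rw [hYx, hsplit]
          apply mul_le_mul_of_nonneg_left
            (Real.rpow_le_rpow hx0.le h (by linarith)) (Real.rpow_nonneg hx0.le _)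
      · have hY : Y 0 ω = b := min_eq_right h.le
        have hsplit : b * b = b ^ p * b ^ (2 - p) := by
          rw [← Real.rpow_add hb0, show p + (2 - p) = 2 by ring]
          rw [show (2:ℝ) = ((2:ℕ):ℝ) by norm_num, Real.rpow_natCast]
          ring
        rw [hY, hsplit]
        apply mul_le_mul_of_nonneg_right
          (Real.rpow_le_rpow hb0.le h.le (by linarith)) (Real.rpow_nonneg hb0.le _)
    calc ∫ ω, Y 0 ω * Y 0 ω ∂P ≤ ∫ ω, (X 0 ω : ℝ) ^ p * b ^ (2 - p) ∂P :=
        integral_mono hYsqint (hmom.mul_const _) hpt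
    _ = (∫ ω, (X 0 ω : ℝ) ^ p ∂P) * b ^ (2 - p) := integral_mul_const _ _
    _ ≤ K * b ^ (2 - p) :=
        mul_le_mul_of_nonneg_right hKb (Real.rpow_nonneg hb0.le _)
  -- tail bound
  have htail0 : (P {ω | b < (X 0 ω : ℝ)}).toReal ≤ K / b ^ p := by
    have hsub : {ω | b < (X 0 ω : ℝ)} ⊆ {ω | b ^ p < (X 0 ω : ℝ) ^ p} := by
      intro ω (h : b < (X 0 ω : ℝ))
      exact Real.rpow_lt_rpow hb0.le h (by linarith)
    have h1 : (P {ω | b < (X 0 ω : ℝ)}).toReal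
        ≤ (P {ω | b ^ p < (X 0 ω : ℝ) ^ p}).toReal :=
      ENNReal.toReal_mono (measure_ne_top _ _) (measure_mono hsub)
    have h2 := markov_toReal (P := P)
      ((measurable_from_top (f := fun m : ℕ => (m:ℝ) ^ p)).comp (hmeas 0))
      (fun ω => Real.rpow_nonneg (Nat.cast_nonneg _) _) hmom hbppos
    refine le_trans h1 (le_trans h2 ?_)
    exact (div_le_div_iff_of_pos_right hbppos).2 hKb
  have htailk : ∀ k, P {ω | b < (X k ω : ℝ)} = P {ω | b < (X 0 ω : ℝ)} := fun k =>
    hevt {m : ℕ | b < (m : ℝ)} k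
  -- event decomposition
  set Bu : Set Ω := ⋃ k ∈ Finset.range n, {ω | b < (X k ω : ℝ)} with hBu
  set Cs : Set Ω := {ω | b / 4 < |∑ k ∈ Finset.range n, (Y k ω - ν)|} with hCs
  have hbias4 : (n : ℝ) * (μm - ν) ≤ b / 4 := by
    calc (n : ℝ) * (μm - ν) ≤ (n : ℝ) * (K * b ^ (1 - p)) :=
        mul_le_mul_of_nonneg_left hbias (Nat.cast_nonneg n)
    _ = K * ((n : ℝ) * b ^ (1 - p)) := by ring
    _ = K * ((n : ℝ) ^ (1 - c * p) * b) := by rw [hnb]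
    _ = (K * (n : ℝ) ^ (1 - c * p)) * b := by ring
    _ ≤ (1 / 4) * b := mul_le_mul_of_nonneg_right h14 hb0.le
    _ = b / 4 := by ring
  have hsubset : {ω | (n : ℝ) ^ c / 2
      < |(∑ k ∈ Finset.range n, (X k ω : ℝ)) - n * μm|} ⊆ Bu ∪ Cs := by
    intro ω hω
    by_cases hB : ω ∈ Bu
    · exact Or.inl hB
    · right
      simp only [hBu, Set.mem_iUnion, Set.mem_setOf_eq, not_exists, exists_prop,
        not_and, not_lt] at hB
      have hXb : ∀ k ∈ Finset.range n, (X k ω : ℝ) ≤ b := fun k hk => hB k hk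
      have hYX : ∀ k ∈ Finset.range n, Y k ω = (X k ω : ℝ) := fun k hk =>
        min_eq_left (hXb k hk)
      have hsum : ∑ k ∈ Finset.range n, (Y k ω - ν)
          = (∑ k ∈ Finset.range n, (X k ω : ℝ)) - n * ν := by
        rw [Finset.sum_sub_distrib, Finset.sum_congr rfl hYX]
        simp [Finset.sum_const, Finset.card_range, nsmul_eq_mul]
      have htri : |(∑ k ∈ Finset.range n, (X k ω : ℝ)) - n * μm|
          ≤ |(∑ k ∈ Finset.range n, (X k ω : ℝ)) - n * ν| + |(n:ℝ) * ν - n * μm| :=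
        abs_sub_le _ _ _
      have habs : |(n:ℝ) * ν - n * μm| = (n:ℝ) * (μm - ν) := by
        rw [abs_of_nonpos (by nlinarith : (n:ℝ) * ν - n * μm ≤ 0)]
        ring
      have hω' : (n : ℝ) ^ c / 2 < |(∑ k ∈ Finset.range n, (X k ω : ℝ)) - n * μm| := hω
      show b / 4 < |∑ k ∈ Finset.range n, (Y k ω - ν)|
      rw [hsum]
      have hb2 : b / 2 < |(∑ k ∈ Finset.range n, (X k ω : ℝ)) - n * μm| := hω'
      rw [habs] at htri
      linarith
  -- Chebyshev for the truncated sum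
  have hnull : ∀ k, ∫ ω, (Y k ω - ν) ∂P = 0 := by
    intro k
    rw [integral_sub (hYint k) (integrable_const ν), hYν k, integral_const]
    simp
  have hZbd : ∀ k ω, |Y k ω - ν| ≤ b + ν := by
    intro k ω
    rw [abs_le]
    constructor
    · have := hY0 k ω; linarith
    · have := hYb k ω; linarith
  have hZint : ∀ k, Integrable (fun ω => Y k ω - ν) P := fun k =>
    (hYint k).sub (integrable_const ν)
  have hZm : ∀ k, Measurable fun ω => Y k ω - ν := fun k => (hYmeas k).sub measurable_const
  have hprod : ∀ k l, k ∈ Finset.range n → l ∈ Finset.range n →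
      Integrable (fun ω => (Y k ω - ν) * (Y l ω - ν)) P := by
    intro k l _ _
    refine (integrable_const ((b + ν) * (b + ν))).mono'
      ((hZm k).mul (hZm l)).aestronglyMeasurable (ae_of_all _ fun ω => ?_)
    rw [Real.norm_eq_abs, abs_mul]
    have hbν : (0:ℝ) ≤ b + ν := by linarith
    exact mul_le_mul (hZbd k ω) (hZbd l ω) (abs_nonneg _) hbν
  have hoff : ∀ k l, k ∈ Finset.range n → l ∈ Finset.range n → k ≠ l →
      ∫ ω, (Y k ω - ν) * (Y l ω - ν) ∂P = 0 := by
    intro k l _ _ hkl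
    have hind : IndepFun (fun ω => Y k ω - ν) (fun ω => Y l ω - ν) P :=
      (hindep k l hkl).comp (show Measurable fun m : ℕ => φ m - ν from measurable_from_top)
        (show Measurable fun m : ℕ => φ m - ν from measurable_from_top)
    have h' : ∫ ω, (Y k ω - ν) * (Y l ω - ν) ∂P
        = (∫ ω, (Y k ω - ν) ∂P) * ∫ ω, (Y l ω - ν) ∂P :=
      hind.integral_mul_eq_mul_integral (hZint k).aestronglyMeasurable (hZint l).aestronglyMeasurable
    rw [h', hnull k, hnull l, mul_zero]
  have hdiag : ∀ k, k ∈ Finset.range n →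
      ∫ ω, (Y k ω - ν) * (Y k ω - ν) ∂P ≤ K * b ^ (2 - p) := by
    intro k _
    have htr : ∫ ω, (Y k ω - ν) * (Y k ω - ν) ∂P
        = ∫ ω, (Y 0 ω - ν) * (Y 0 ω - ν) ∂P :=
      htrans (fun m => (φ m - ν) * (φ m - ν)) k
    rw [htr]
    have hexp : ∀ ω : Ω, (Y 0 ω - ν) * (Y 0 ω - ν)
        = Y 0 ω * Y 0 ω - 2 * ν * Y 0 ω + ν * ν := fun ω => by ring
    have hYsqint : Integrable (fun ω => Y 0 ω * Y 0 ω) P :=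
      (integrable_const (b * b)).mono' ((hYmeas 0).mul (hYmeas 0)).aestronglyMeasurable
        (ae_of_all _ fun ω => by
          rw [Real.norm_eq_abs, abs_of_nonneg (mul_nonneg (hY0 0 ω) (hY0 0 ω))]
          exact mul_le_mul (hYb 0 ω) (hYb 0 ω) (hY0 0 ω) hb0.le)
    calc ∫ ω, (Y 0 ω - ν) * (Y 0 ω - ν) ∂P
        = ∫ ω, (Y 0 ω * Y 0 ω - 2 * ν * Y 0 ω + ν * ν) ∂P := by simp_rw [hexp]
      _ = (∫ ω, Y 0 ω * Y 0 ω ∂P) - 2 * ν * ν + ν * ν := by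
          have hsub1 : Integrable (fun ω => Y 0 ω * Y 0 ω - 2 * ν * Y 0 ω) P :=
            hYsqint.sub ((hYint 0).const_mul (2 * ν))
          rw [integral_add hsub1 (integrable_const (ν * ν)),
            integral_sub hYsqint ((hYint 0).const_mul (2 * ν)),
            integral_const_mul, hYν 0, integral_const]
          simp
      _ ≤ (∫ ω, Y 0 ω * Y 0 ω ∂P) := by nlinarith [sq_nonneg ν]
      _ ≤ K * b ^ (2 - p) := hsq
  have hfmeas : Measurable fun ω => ∑ k ∈ Finset.range n, (Y k ω - ν) :=
    Finset.measurable_sum _ fun k _ => hZm k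
  have hfsqint : Integrable (fun ω => (∑ k ∈ Finset.range n, (Y k ω - ν)) ^ 2) P := by
    refine (integrable_const (((n:ℝ) * (b + ν)) ^ 2)).mono'
      (hfmeas.pow_const 2).aestronglyMeasurable (ae_of_all _ fun ω => ?_)
    rw [Real.norm_eq_abs, abs_of_nonneg (sq_nonneg _)]
    have h1 : |∑ k ∈ Finset.range n, (Y k ω - ν)| ≤ (n:ℝ) * (b + ν) := by
      calc |∑ k ∈ Finset.range n, (Y k ω - ν)|
          ≤ ∑ k ∈ Finset.range n, |Y k ω - ν| := Finset.abs_sum_le_sum_abs _ _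
        _ ≤ ∑ _k ∈ Finset.range n, (b + ν) := Finset.sum_le_sum fun k _ => hZbd k ω
        _ = (n:ℝ) * (b + ν) := by
            simp [Finset.sum_const, Finset.card_range, nsmul_eq_mul, mul_add]
    calc (∑ k ∈ Finset.range n, (Y k ω - ν)) ^ 2
        = |∑ k ∈ Finset.range n, (Y k ω - ν)| ^ 2 := (sq_abs _).symm
      _ ≤ ((n:ℝ) * (b + ν)) ^ 2 := by
          apply pow_le_pow_left₀ (abs_nonneg _) h1
  -- Chebyshev bound on the truncated sum
  have hcheb := chebyshev_toReal (P := P) hfmeas hfsqint (t := b / 4) (by positivity)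
  have hvar := integral_sq_sum_le (P := P) hprod hoff hdiag
  have hbpne : b ^ p ≠ 0 := hbppos.ne'
  have hb2pne : b ^ (2 - p) ≠ 0 := (Real.rpow_pos_of_pos hb0 _).ne'
  have hndiv : (n:ℝ) / (n:ℝ) ^ (c * p) = (n:ℝ) ^ (1 - c * p) := by
    rw [Real.rpow_sub hn0, Real.rpow_one]
  have hCs_bound : (P Cs).toReal ≤ 16 * (K * (n : ℝ) ^ (1 - c * p)) := by
    have hb2 : (b / 4) ^ 2 = b ^ p * b ^ (2 - p) / 16 := by
      rw [← Real.rpow_add hb0, show p + (2 - p) = 2 by ring,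
        show (2:ℝ) = ((2:ℕ):ℝ) by norm_num, Real.rpow_natCast]
      ring
    calc (P Cs).toReal
        ≤ (∫ ω, (∑ k ∈ Finset.range n, (Y k ω - ν)) ^ 2 ∂P) / (b / 4) ^ 2 := hcheb
      _ ≤ ((n:ℝ) * (K * b ^ (2 - p))) / (b / 4) ^ 2 := by gcongr
      _ = 16 * K * ((n:ℝ) / b ^ p) := by
          rw [hb2]
          field_simp
      _ = 16 * (K * (n : ℝ) ^ (1 - c * p)) := by
          rw [hbp, hndiv]
          ring
  have hBu_bound : (P Bu).toReal ≤ K * (n : ℝ) ^ (1 - c * p) := by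
    have h1 : P Bu ≤ ∑ k ∈ Finset.range n, P {ω | b < (X k ω : ℝ)} :=
      measure_biUnion_finset_le _ _
    have h2 : ∑ k ∈ Finset.range n, P {ω | b < (X k ω : ℝ)}
        = (n : ENNReal) * P {ω | b < (X 0 ω : ℝ)} := by
      rw [Finset.sum_congr rfl fun k _ => htailk k]
      simp [Finset.sum_const, Finset.card_range, nsmul_eq_mul]
    rw [h2] at h1
    have h3 : (P Bu).toReal ≤ ((n : ENNReal) * P {ω | b < (X 0 ω : ℝ)}).toReal :=
      ENNReal.toReal_mono (ENNReal.mul_ne_top (ENNReal.natCast_ne_top n)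
        (measure_ne_top _ _)) h1
    rw [ENNReal.toReal_mul, ENNReal.toReal_natCast] at h3
    calc (P Bu).toReal ≤ (n:ℝ) * (P {ω | b < (X 0 ω : ℝ)}).toReal := h3
      _ ≤ (n:ℝ) * (K / b ^ p) := mul_le_mul_of_nonneg_left htail0 (Nat.cast_nonneg n)
      _ = K * ((n:ℝ) / b ^ p) := by ring
      _ = K * (n : ℝ) ^ (1 - c * p) := by rw [hbp, hndiv]
  -- combine
  have hPA : (P {ω | (n : ℝ) ^ c / 2
      < |(∑ k ∈ Finset.range n, (X k ω : ℝ)) - n * μm|}).toReal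
      ≤ (P Bu).toReal + (P Cs).toReal := by
    have h1 : P {ω | (n : ℝ) ^ c / 2
        < |(∑ k ∈ Finset.range n, (X k ω : ℝ)) - n * μm|} ≤ P Bu + P Cs :=
      le_trans (measure_mono hsubset) (measure_union_le _ _)
    have h2 := ENNReal.toReal_mono
      (ENNReal.add_ne_top.2 ⟨measure_ne_top _ _, measure_ne_top _ _⟩) h1
    rwa [ENNReal.toReal_add (measure_ne_top _ _) (measure_ne_top _ _)] at h2
  calc (P {ω | (n : ℝ) ^ c / 2
      < |(∑ k ∈ Finset.range n, (X k ω : ℝ)) - n * μm|}).toReal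
      ≤ (P Bu).toReal + (P Cs).toReal := hPA
    _ ≤ K * (n : ℝ) ^ (1 - c * p) + 16 * (K * (n : ℝ) ^ (1 - c * p)) :=
        add_le_add hBu_bound hCs_bound
    _ = 17 * (K * (n : ℝ) ^ (1 - c * p)) := by ring
end Helpers

/-- `Δ_n = ∑_{i<n} γ_i − ∑_{i<n} ξ_i`. -/
def Delta {Ω : Type*} (γ ξ : ℕ → Ω → ℕ) (n : ℕ) (ω : Ω) : ℤ :=
  (∑ i ∈ Finset.range n, (γ i ω : ℤ)) - ∑ i ∈ Finset.range n, (ξ i ω : ℤ)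

/-- Indicator that node `i` receives an extra inbound stub: this happens when
`Δ_n < 0` and `i` is among the `|Δ_n|` nodes selected uniformly at random (the nodes
placed by the auxiliary uniform permutation `π_n` in the first `|Δ_n|` positions). -/
def tauF {Ω : Type*} (γ ξ : ℕ → Ω → ℕ) (π : ℕ → Ω → ℕ → ℕ) (n i : ℕ) (ω : Ω) : ℕ :=
  if Delta γ ξ n ω < 0 ∧ i < n ∧ π n ω i < (Delta γ ξ n ω).natAbs then 1 else 0

/-- Indicator that node `i` receives an extra outbound stub (case `Δ_n ≥ 0`). -/
def chiF {Ω : Type*} (γ ξ : ℕ → Ω → ℕ) (π : ℕ → Ω → ℕ → ℕ) (n i : ℕ) (ω : Ω) : ℕ :=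
  if 0 ≤ Delta γ ξ n ω ∧ i < n ∧ π n ω i < (Delta γ ξ n ω).natAbs then 1 else 0

/-- The in-degree `N_i = γ_i + τ_i` produced by the balancing algorithm. -/
def NF {Ω : Type*} (γ ξ : ℕ → Ω → ℕ) (π : ℕ → Ω → ℕ → ℕ) (n i : ℕ) (ω : Ω) : ℕ :=
  γ i ω + tauF γ ξ π n i ω

/-- The out-degree `D_i = ξ_i + χ_i` produced by the balancing algorithm. -/
def DF {Ω : Type*} (γ ξ : ℕ → Ω → ℕ) (π : ℕ → Ω → ℕ → ℕ) (n i : ℕ) (ω : Ω) : ℕ :=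
  ξ i ω + chiF γ ξ π n i ω

/-- The conditioning event `D_n = {|Δ_n| ≤ n^{1-κ+δ₀}}` of the algorithm. -/
def DsetF {Ω : Type*} (γ ξ : ℕ → Ω → ℕ) (κ δ0 : ℝ) (n : ℕ) : Set Ω :=
  {ω | (|Delta γ ξ n ω| : ℝ) ≤ (n : ℝ) ^ (1 - κ + δ0)}

set_option maxHeartbeats 1600000 in
/-- The empirical joint degree distribution of the bi-degree-sequence `(N, D)`
produced by the balancing algorithm converges in probability (under the conditional
algorithm measure) to `f_i g_j`, where `f_i = P(γ = i)` and `g_j = P(ξ = j)`. -/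
theorem stmt15
    {Ω : Type*} [MeasurableSpace Ω] (P : Measure Ω) [IsProbabilityMeasure P]
    (γ ξ : ℕ → Ω → ℕ)
    (hγmeas : ∀ i, Measurable (γ i)) (hξmeas : ∀ i, Measurable (ξ i))
    (hindep : iIndepFun (Sum.elim γ ξ) P)
    (hidγ : ∀ i, Measure.map (γ i) P = Measure.map (γ 0) P)
    (hidξ : ∀ i, Measure.map (ξ i) P = Measure.map (ξ 0) P)
    (μ : ℝ) (hμ : 0 < μ)
    (hintγ : Integrable (fun ω => (γ 0 ω : ℝ)) P)
    (hintξ : Integrable (fun ω => (ξ 0 ω : ℝ)) P)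
    (hEγ : ∫ ω, (γ 0 ω : ℝ) ∂P = μ) (hEξ : ∫ ω, (ξ 0 ω : ℝ) ∂P = μ)
    (α β : ℝ) (hα : 1 < α) (hβ : 1 < β)
    (LF LG : ℝ → ℝ)
    (hLFpos : ∀ x > (0 : ℝ), 0 < LF x) (hLGpos : ∀ x > (0 : ℝ), 0 < LG x)
    (hLFslow : ∀ t > (0 : ℝ), Tendsto (fun x => LF (t * x) / LF x) atTop (nhds 1))
    (hLGslow : ∀ t > (0 : ℝ), Tendsto (fun x => LG (t * x) / LG x) atTop (nhds 1))
    (htailF : ∀ x : ℝ, 0 < x → (P {ω | x < (γ 0 ω : ℝ)}).toReal ≤ x ^ (-α) * LF x)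
    (htailG : ∀ x : ℝ, 0 < x → (P {ω | x < (ξ 0 ω : ℝ)}).toReal ≤ x ^ (-β) * LG x)
    (κ δ0 : ℝ) (hκ : κ = min (min (1 - α⁻¹) (1 - β⁻¹)) (1 / 2))
    (hδ0 : 0 < δ0) (hδ0κ : δ0 < κ)
    (π : ℕ → Ω → ℕ → ℕ) (hπmeas : ∀ n, Measurable (π n))
    (hπbij : ∀ n ω, Set.BijOn (π n ω) (Set.Iio n) (Set.Iio n))
    (hπunif : ∀ n (g : Equiv.Perm (Fin n)),
      P {ω | ∀ i (h : i < n), π n ω i = (g ⟨i, h⟩ : Fin n)} = ((Nat.factorial n : ENNReal))⁻¹)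
    (hπindep : ∀ n, IndepFun (π n) (fun ω (i : ℕ) => (γ i ω, ξ i ω)) P)
    (i j : ℕ) (ε : ℝ) (hε : 0 < ε) :
    Tendsto
      (fun n =>
        ((ProbabilityTheory.cond P (DsetF γ ξ κ δ0 n))
          {ω | ε <
            |(∑ k ∈ Finset.range n,
                (if NF γ ξ π n k ω = i ∧ DF γ ξ π n k ω = j then (1 : ℝ) else 0)) / n
              - (P {ω | γ 0 ω = i}).toReal * (P {ω | ξ 0 ω = j}).toReal|}).toReal)
      atTop (nhds 0) := by
  classical
  -- exponent facts
  have hκpos : 0 < κ := lt_trans hδ0 hδ0κ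
  have hκhalf : κ ≤ 1 / 2 := by rw [hκ]; exact min_le_right _ _
  have hκα : κ ≤ 1 - α⁻¹ := by
    rw [hκ]; exact le_trans (min_le_left _ _) (min_le_left _ _)
  have hκβ : κ ≤ 1 - β⁻¹ := by
    rw [hκ]; exact le_trans (min_le_left _ _) (min_le_right _ _)
  set c : ℝ := 1 - κ + δ0 with hc
  have hα0 : (0:ℝ) < α := by linarith
  have hβ0 : (0:ℝ) < β := by linarith
  have hαinv : (0:ℝ) < α⁻¹ := inv_pos.2 hα0
  have hβinv : (0:ℝ) < β⁻¹ := inv_pos.2 hβ0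
  have hc1 : c < 1 := by rw [hc]; linarith
  have hchalf : 1 / 2 < c := by rw [hc]; linarith
  have hc0 : (0:ℝ) < c := by linarith
  have hcα : α⁻¹ < c := by rw [hc]; linarith
  have hcβ : β⁻¹ < c := by rw [hc]; linarith
  -- measurability of Delta and the conditioning event
  have hΔmeas : ∀ n, Measurable fun ω => Delta γ ξ n ω := by
    intro n
    apply Measurable.sub
    · exact Finset.measurable_sum _ fun k _ =>
        (measurable_from_top (f := fun m : ℕ => (m : ℤ))).comp (hγmeas k)
    · exact Finset.measurable_sum _ fun k _ =>
        (measurable_from_top (f := fun m : ℕ => (m : ℤ))).comp (hξmeas k)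
  have hΔR : ∀ n, Measurable fun ω => ((Delta γ ξ n ω : ℤ) : ℝ) := fun n =>
    (measurable_from_top (f := fun z : ℤ => (z : ℝ))).comp (hΔmeas n)
  have hDmeas : ∀ n, MeasurableSet (DsetF γ ξ κ δ0 n) := by
    intro n
    have heq : DsetF γ ξ κ δ0 n
        = (fun ω => |((Delta γ ξ n ω : ℤ) : ℝ)|) ⁻¹' Set.Iic ((n : ℝ) ^ (1 - κ + δ0)) := by
      ext ω
      simp [DsetF, Int.cast_abs]
    rw [heq]
    exact (hΔR n).abs measurableSet_Iic
  -- pairwise independence within each family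
  have hindγ : ∀ k l, k ≠ l → IndepFun (γ k) (γ l) P := fun k l h =>
    hindep.indepFun (show (Sum.inl k : ℕ ⊕ ℕ) ≠ Sum.inl l by simpa using h)
  have hindξ : ∀ k l, k ≠ l → IndepFun (ξ k) (ξ l) P := fun k l h =>
    hindep.indepFun (show (Sum.inr k : ℕ ⊕ ℕ) ≠ Sum.inr l by simpa using h)
  -- moment exponent for γ
  have hcinv2 : c⁻¹ < 2 := by
    have h := inv_strictAnti₀ (by norm_num : (0:ℝ) < 1/2) hchalf
    norm_num at h
    linarith
  have hcinvα : c⁻¹ < α := by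
    have h := inv_strictAnti₀ hαinv hcα
    rwa [inv_inv] at h
  have hcinvβ : c⁻¹ < β := by
    have h := inv_strictAnti₀ hβinv hcβ
    rwa [inv_inv] at h
  -- weak law for the γ family
  have hwγ : Tendsto (fun n : ℕ => (P {ω | (n : ℝ) ^ c / 2
      < |(∑ k ∈ Finset.range n, (γ k ω : ℝ)) - (n : ℝ) * μ|}).toReal) atTop (nhds 0) := by
    set p : ℝ := (max 1 c⁻¹ + min α 2) / 2 with hp
    have hlo : max 1 c⁻¹ < min α 2 := max_lt (lt_min hα one_lt_two) (lt_min hcinvα hcinv2)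
    have hp1 : 1 < p := by
      have h1 : (1:ℝ) ≤ max 1 c⁻¹ := le_max_left _ _
      rw [hp]; linarith
    have hpmin : p < min α 2 := by rw [hp]; linarith
    have hp2 : p < 2 := lt_of_lt_of_le hpmin (min_le_right _ _)
    have hpα : p < α := lt_of_lt_of_le hpmin (min_le_left _ _)
    have hcp : 1 < c * p := by
      have h1 : c⁻¹ < p := by
        have h2 : c⁻¹ ≤ max 1 c⁻¹ := le_max_right _ _
        rw [hp]; linarith
      calc (1:ℝ) = c * c⁻¹ := (mul_inv_cancel₀ hc0.ne').symm
      _ < c * p := mul_lt_mul_of_pos_left h1 hc0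
    set q : ℝ := (p + α) / 2 with hq
    have hq0 : 0 < q := by rw [hq]; linarith
    have hpq : p < q := by rw [hq]; linarith
    have hqα : q < α := by rw [hq]; linarith
    obtain ⟨C, hC0, hCt⟩ := tail_poly (P := P) (X := γ 0) hq0 hqα hLFpos hLFslow htailF
    have hmom : Integrable (fun ω => (γ 0 ω : ℝ) ^ p) P :=
      integrable_rpow_of_tail (hγmeas 0) hp1.le hpq hCt
    exact wlln_trunc (P := P) hγmeas hindγ hidγ hintγ hEγ hp1 hp2 hcp hc0 hmom
      (integral_nonneg fun ω => Real.rpow_nonneg (Nat.cast_nonneg _) _) le_rfl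
  -- weak law for the ξ family
  have hwξ : Tendsto (fun n : ℕ => (P {ω | (n : ℝ) ^ c / 2
      < |(∑ k ∈ Finset.range n, (ξ k ω : ℝ)) - (n : ℝ) * μ|}).toReal) atTop (nhds 0) := by
    set p : ℝ := (max 1 c⁻¹ + min β 2) / 2 with hp
    have hlo : max 1 c⁻¹ < min β 2 := max_lt (lt_min hβ one_lt_two) (lt_min hcinvβ hcinv2)
    have hp1 : 1 < p := by
      have h1 : (1:ℝ) ≤ max 1 c⁻¹ := le_max_left _ _
      rw [hp]; linarith
    have hpmin : p < min β 2 := by rw [hp]; linarith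
    have hp2 : p < 2 := lt_of_lt_of_le hpmin (min_le_right _ _)
    have hpβ : p < β := lt_of_lt_of_le hpmin (min_le_left _ _)
    have hcp : 1 < c * p := by
      have h1 : c⁻¹ < p := by
        have h2 : c⁻¹ ≤ max 1 c⁻¹ := le_max_right _ _
        rw [hp]; linarith
      calc (1:ℝ) = c * c⁻¹ := (mul_inv_cancel₀ hc0.ne').symm
      _ < c * p := mul_lt_mul_of_pos_left h1 hc0
    set q : ℝ := (p + β) / 2 with hq
    have hq0 : 0 < q := by rw [hq]; linarith
    have hpq : p < q := by rw [hq]; linarith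
    have hqβ : q < β := by rw [hq]; linarith
    obtain ⟨C, hC0, hCt⟩ := tail_poly (P := P) (X := ξ 0) hq0 hqβ hLGpos hLGslow htailG
    have hmom : Integrable (fun ω => (ξ 0 ω : ℝ) ^ p) P :=
      integrable_rpow_of_tail (hξmeas 0) hp1.le hpq hCt
    exact wlln_trunc (P := P) hξmeas hindξ hidξ hintξ hEξ hp1 hp2 hcp hc0 hmom
      (integral_nonneg fun ω => Real.rpow_nonneg (Nat.cast_nonneg _) _) le_rfl
  -- convergence of the conditioning event to probability one
  have hDc : Tendsto (fun n => (P (DsetF γ ξ κ δ0 n)ᶜ).toReal) atTop (nhds 0) := by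
    have hgg : Tendsto (fun n : ℕ =>
        (P {ω | (n : ℝ) ^ c / 2 < |(∑ k ∈ Finset.range n, (γ k ω : ℝ)) - (n : ℝ) * μ|}).toReal
        + (P {ω | (n : ℝ) ^ c / 2
            < |(∑ k ∈ Finset.range n, (ξ k ω : ℝ)) - (n : ℝ) * μ|}).toReal)
        atTop (nhds 0) := by simpa using hwγ.add hwξ
    apply squeeze_zero' (Filter.Eventually.of_forall fun n => ENNReal.toReal_nonneg) ?_ hgg
    apply Filter.Eventually.of_forall
    intro n
    have hsub : (DsetF γ ξ κ δ0 n)ᶜ ⊆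
        {ω | (n : ℝ) ^ c / 2 < |(∑ k ∈ Finset.range n, (γ k ω : ℝ)) - (n : ℝ) * μ|} ∪
        {ω | (n : ℝ) ^ c / 2 < |(∑ k ∈ Finset.range n, (ξ k ω : ℝ)) - (n : ℝ) * μ|} := by
      intro ω hω
      simp only [DsetF, Set.mem_compl_iff, Set.mem_setOf_eq, not_le] at hω
      by_contra hcon
      simp only [Set.mem_union, Set.mem_setOf_eq, not_or, not_lt] at hcon
      obtain ⟨h1, h2⟩ := hcon
      have hcast : |((Delta γ ξ n ω : ℤ) : ℝ)|
          = |(∑ k ∈ Finset.range n, (γ k ω : ℝ)) - ∑ k ∈ Finset.range n, (ξ k ω : ℝ)| := by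
        congr 1
        simp only [Delta]
        push_cast
        ring
      have htri : |(∑ k ∈ Finset.range n, (γ k ω : ℝ)) - ∑ k ∈ Finset.range n, (ξ k ω : ℝ)|
          ≤ |(∑ k ∈ Finset.range n, (γ k ω : ℝ)) - (n : ℝ) * μ|
            + |(∑ k ∈ Finset.range n, (ξ k ω : ℝ)) - (n : ℝ) * μ| := by
        have h3 := abs_sub_le (∑ k ∈ Finset.range n, (γ k ω : ℝ)) ((n : ℝ) * μ)
          (∑ k ∈ Finset.range n, (ξ k ω : ℝ))
        rwa [abs_sub_comm ((n : ℝ) * μ)] at h3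
      rw [hcast] at hω
      rw [← hc] at hω
      linarith
    have h1 : P (DsetF γ ξ κ δ0 n)ᶜ
        ≤ P {ω | (n : ℝ) ^ c / 2 < |(∑ k ∈ Finset.range n, (γ k ω : ℝ)) - (n : ℝ) * μ|}
          + P {ω | (n : ℝ) ^ c / 2 < |(∑ k ∈ Finset.range n, (ξ k ω : ℝ)) - (n : ℝ) * μ|} :=
      le_trans (measure_mono hsub) (measure_union_le _ _)
    have h2 := ENNReal.toReal_mono
      (ENNReal.add_ne_top.2 ⟨measure_ne_top _ _, measure_ne_top _ _⟩) h1
    rwa [ENNReal.toReal_add (measure_ne_top _ _) (measure_ne_top _ _)] at h2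
  have hev_half : ∀ᶠ n in atTop, (2 : ENNReal)⁻¹ ≤ P (DsetF γ ξ κ δ0 n) := by
    have h := hDc.eventually (eventually_le_nhds (by norm_num : (0:ℝ) < 1/2))
    filter_upwards [h] with n hn
    have h1 : P (DsetF γ ξ κ δ0 n)ᶜ ≤ (2 : ENNReal)⁻¹ := by
      rw [← ENNReal.ofReal_toReal (measure_ne_top P _)]
      calc ENNReal.ofReal ((P (DsetF γ ξ κ δ0 n)ᶜ).toReal) ≤ ENNReal.ofReal (1/2) :=
          ENNReal.ofReal_le_ofReal hn
      _ = (2 : ENNReal)⁻¹ := by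
          rw [show (1:ℝ)/2 = (2:ℝ)⁻¹ by norm_num, ENNReal.ofReal_inv_of_pos two_pos,
            ENNReal.ofReal_ofNat]
    have hcompl := prob_compl_eq_one_sub (μ := P) (hDmeas n).compl
    rw [compl_compl] at hcompl
    have hhalf : (1 : ENNReal) - 2⁻¹ = 2⁻¹ := by
      rw [← ENNReal.inv_two_add_inv_two, ENNReal.add_sub_cancel_right
        (by simp : (2 : ENNReal)⁻¹ ≠ ⊤)]
    rw [hcompl, ← hhalf]
    exact tsub_le_tsub_left h1 1
    -- the unperturbed empirical indicators
  set pp : ℝ := (P {ω | γ 0 ω = i}).toReal * (P {ω | ξ 0 ω = j}).toReal with hppdef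
  set W : ℕ → Ω → ℝ := fun k ω => if γ k ω = i ∧ ξ k ω = j then (1:ℝ) else 0 with hWdef
  have hsingle : ∀ m : ℕ, MeasurableSet ({m} : Set ℕ) := fun m => measurableSet_singleton m
  have hAmeas : ∀ k, MeasurableSet {ω | γ k ω = i ∧ ξ k ω = j} := fun k =>
    ((hγmeas k) (hsingle i)).inter ((hξmeas k) (hsingle j))
  have hWmeas : ∀ k, Measurable (W k) := fun k =>
    Measurable.ite (hAmeas k) measurable_const measurable_const
  have hW01 : ∀ k ω, 0 ≤ W k ω ∧ W k ω ≤ 1 := by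
    intro k ω
    rw [hWdef]; dsimp only; split_ifs <;> norm_num
  have hWint : ∀ k, Integrable (W k) P := fun k =>
    (integrable_const (1:ℝ)).mono' (hWmeas k).aestronglyMeasurable
      (ae_of_all _ fun ω => by
        rw [Real.norm_eq_abs, abs_of_nonneg (hW01 k ω).1]; exact (hW01 k ω).2)
  have hPγi : ∀ k, P (γ k ⁻¹' {i}) = P (γ 0 ⁻¹' {i}) := fun k => by
    rw [← Measure.map_apply (hγmeas k) (hsingle i), hidγ k,
      Measure.map_apply (hγmeas 0) (hsingle i)]
  have hPξj : ∀ k, P (ξ k ⁻¹' {j}) = P (ξ 0 ⁻¹' {j}) := fun k => by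
    rw [← Measure.map_apply (hξmeas k) (hsingle j), hidξ k,
      Measure.map_apply (hξmeas 0) (hsingle j)]
  have hWmean : ∀ k, ∫ ω, W k ω ∂P = pp := by
    intro k
    have hWind : W k = Set.indicator {ω | γ k ω = i ∧ ξ k ω = j} (fun _ => (1:ℝ)) := by
      funext ω
      by_cases h : γ k ω = i ∧ ξ k ω = j
      · show (if γ k ω = i ∧ ξ k ω = j then (1:ℝ) else 0) = _
        rw [if_pos h,
          Set.indicator_of_mem (show ω ∈ {ω' | γ k ω' = i ∧ ξ k ω' = j} from h)]
      · show (if γ k ω = i ∧ ξ k ω = j then (1:ℝ) else 0) = _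
        rw [if_neg h,
          Set.indicator_of_notMem (show ω ∉ {ω' | γ k ω' = i ∧ ξ k ω' = j} from h)]
    rw [hWind, integral_indicator_const _ (hAmeas k)]
    have hik : IndepFun (γ k) (ξ k) P :=
      hindep.indepFun (show (Sum.inl k : ℕ ⊕ ℕ) ≠ Sum.inr k by simp)
    have hfact : P {ω | γ k ω = i ∧ ξ k ω = j} = P (γ k ⁻¹' {i}) * P (ξ k ⁻¹' {j}) :=
      (indepFun_iff_measure_inter_preimage_eq_mul.1 hik) {i} {j} (hsingle i) (hsingle j)
    rw [smul_eq_mul, mul_one, measureReal_def, hfact, hPγi k, hPξj k, ENNReal.toReal_mul]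
    rfl
  have hSmeas : ∀ s : ℕ ⊕ ℕ, Measurable (Sum.elim γ ξ s) := by
    intro s
    cases s with
    | inl k => exact hγmeas k
    | inr k => exact hξmeas k
  have hWindep : ∀ k l, k ≠ l → IndepFun (W k) (W l) P := by
    intro k l hkl
    have hpair := hindep.indepFun_prodMk_prodMk hSmeas
      (Sum.inl k) (Sum.inr k) (Sum.inl l) (Sum.inr l)
      (by simp [hkl]) (by simp) (by simp) (by simp [hkl])
    have hφ : Measurable (fun y : ℕ × ℕ => if y.1 = i ∧ y.2 = j then (1:ℝ) else 0) := by
      apply Measurable.ite ?_ measurable_const measurable_const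
      exact (measurable_fst (hsingle i)).inter (measurable_snd (hsingle j))
    exact hpair.comp hφ hφ
  have hWmul : ∀ k l, k ≠ l → ∫ ω, W k ω * W l ω ∂P = pp * pp := by
    intro k l hkl
    have h' : ∫ ω, W k ω * W l ω ∂P = (∫ ω, W k ω ∂P) * ∫ ω, W l ω ∂P :=
      (hWindep k l hkl).integral_mul_eq_mul_integral (hWint k).aestronglyMeasurable (hWint l).aestronglyMeasurable
    rw [h', hWmean k, hWmean l]
  have hpp0 : 0 ≤ pp := mul_nonneg ENNReal.toReal_nonneg ENNReal.toReal_nonneg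
  have hpp1 : pp ≤ 1 := by
    have h1 : (P {ω | γ 0 ω = i}).toReal ≤ 1 := by
      rw [← ENNReal.toReal_one]
      exact ENNReal.toReal_mono (by norm_num) prob_le_one
    have h2 : (P {ω | ξ 0 ω = j}).toReal ≤ 1 := by
      rw [← ENNReal.toReal_one]
      exact ENNReal.toReal_mono (by norm_num) prob_le_one
    rw [hppdef]
    exact mul_le_one₀ h1 ENNReal.toReal_nonneg h2
  -- convergence of the empirical distribution of (γ, ξ)
  have hbad' : Tendsto (fun n : ℕ =>
      (P {ω | ε / 2 < |(∑ k ∈ Finset.range n, W k ω) / (n:ℝ) - pp|}).toReal)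
      atTop (nhds 0) := by
    have hg : Tendsto (fun n : ℕ => (4 / ε ^ 2) * (1 / (n:ℝ))) atTop (nhds 0) := by
      have := tendsto_one_div_atTop_nhds_zero_nat.const_mul (4 / ε ^ 2); rwa [mul_zero] at this
    apply squeeze_zero' (Filter.Eventually.of_forall fun n => ENNReal.toReal_nonneg) ?_ hg
    filter_upwards [eventually_ge_atTop 1] with n hn1
    have hn0 : (0:ℝ) < n := by exact_mod_cast hn1
    have hsumeq : ∀ ω, ∑ k ∈ Finset.range n, (W k ω - pp)
        = (∑ k ∈ Finset.range n, W k ω) - (n:ℝ) * pp := by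
      intro ω
      rw [Finset.sum_sub_distrib]
      simp [Finset.sum_const, Finset.card_range, nsmul_eq_mul]
    have hsub : {ω | ε / 2 < |(∑ k ∈ Finset.range n, W k ω) / (n:ℝ) - pp|}
        ⊆ {ω | (n:ℝ) * ε / 2 < |∑ k ∈ Finset.range n, (W k ω - pp)|} := by
      intro ω hω
      simp only [Set.mem_setOf_eq] at hω ⊢
      rw [hsumeq ω]
      have heq : |(∑ k ∈ Finset.range n, W k ω) - (n:ℝ) * pp|
          = (n:ℝ) * |(∑ k ∈ Finset.range n, W k ω) / (n:ℝ) - pp| := by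
        have hfs : (∑ k ∈ Finset.range n, W k ω) - (n:ℝ) * pp
            = (n:ℝ) * ((∑ k ∈ Finset.range n, W k ω) / (n:ℝ) - pp) := by
          field_simp
        rw [hfs, abs_mul, abs_of_pos hn0]
      rw [heq]
      calc (n:ℝ) * ε / 2 = (n:ℝ) * (ε / 2) := by ring
      _ < (n:ℝ) * |(∑ k ∈ Finset.range n, W k ω) / (n:ℝ) - pp| :=
          mul_lt_mul_of_pos_left hω hn0
    have hZm : ∀ k, Measurable fun ω => W k ω - pp := fun k =>
      (hWmeas k).sub measurable_const
    have hZbd : ∀ k ω, |W k ω - pp| ≤ 1 := by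
      intro k ω
      rw [abs_le]
      constructor
      · have := (hW01 k ω).1; linarith
      · have := (hW01 k ω).2; linarith
    have hfmeas : Measurable fun ω => ∑ k ∈ Finset.range n, (W k ω - pp) :=
      Finset.measurable_sum _ fun k _ => hZm k
    have hfsqint : Integrable (fun ω => (∑ k ∈ Finset.range n, (W k ω - pp)) ^ 2) P := by
      refine (integrable_const (((n:ℝ)) ^ 2)).mono'
        (hfmeas.pow_const 2).aestronglyMeasurable (ae_of_all _ fun ω => ?_)
      rw [Real.norm_eq_abs, abs_of_nonneg (sq_nonneg _)]
      have h1 : |∑ k ∈ Finset.range n, (W k ω - pp)| ≤ (n:ℝ) := by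
        calc |∑ k ∈ Finset.range n, (W k ω - pp)|
            ≤ ∑ k ∈ Finset.range n, |W k ω - pp| := Finset.abs_sum_le_sum_abs _ _
          _ ≤ ∑ _k ∈ Finset.range n, (1:ℝ) := Finset.sum_le_sum fun k _ => hZbd k ω
          _ = (n:ℝ) := by simp
      calc (∑ k ∈ Finset.range n, (W k ω - pp)) ^ 2
          = |∑ k ∈ Finset.range n, (W k ω - pp)| ^ 2 := (sq_abs _).symm
        _ ≤ ((n:ℝ)) ^ 2 := by apply pow_le_pow_left₀ (abs_nonneg _) h1
    have hZnull : ∀ k, ∫ ω, (W k ω - pp) ∂P = 0 := by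
      intro k
      rw [integral_sub (hWint k) (integrable_const pp), hWmean k, integral_const]
      simp
    have hprod : ∀ k l, k ∈ Finset.range n → l ∈ Finset.range n →
        Integrable (fun ω => (W k ω - pp) * (W l ω - pp)) P := by
      intro k l _ _
      refine (integrable_const (1:ℝ)).mono'
        ((hZm k).mul (hZm l)).aestronglyMeasurable (ae_of_all _ fun ω => ?_)
      simp only [Real.norm_eq_abs, abs_mul]
      calc |W k ω - pp| * |W l ω - pp| ≤ 1 * 1 :=
          mul_le_mul (hZbd k ω) (hZbd l ω) (abs_nonneg _) zero_le_one
      _ = 1 := mul_one 1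
    have hoff : ∀ k l, k ∈ Finset.range n → l ∈ Finset.range n → k ≠ l →
        ∫ ω, (W k ω - pp) * (W l ω - pp) ∂P = 0 := by
      intro k l _ _ hkl
      have hZint : ∀ k : ℕ, Integrable (fun ω => W k ω - pp) P := fun k =>
        (hWint k).sub (integrable_const pp)
      have hind : IndepFun (fun ω => W k ω - pp) (fun ω => W l ω - pp) P :=
        (hWindep k l hkl).comp (measurable_id.sub measurable_const)
          (measurable_id.sub measurable_const)
      have h' : ∫ ω, (W k ω - pp) * (W l ω - pp) ∂P
          = (∫ ω, (W k ω - pp) ∂P) * ∫ ω, (W l ω - pp) ∂P :=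
        hind.integral_mul_eq_mul_integral (hZint k).aestronglyMeasurable (hZint l).aestronglyMeasurable
      rw [h', hZnull k, hZnull l, mul_zero]
    have hdiag : ∀ k, k ∈ Finset.range n → ∫ ω, (W k ω - pp) * (W k ω - pp) ∂P ≤ 1 := by
      intro k _
      have hpt : ∀ ω, (W k ω - pp) * (W k ω - pp) ≤ 1 := by
        intro ω
        have h1 := hZbd k ω
        nlinarith [abs_nonneg (W k ω - pp), sq_abs (W k ω - pp)]
      calc ∫ ω, (W k ω - pp) * (W k ω - pp) ∂P ≤ ∫ _ω, (1:ℝ) ∂P :=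
          integral_mono (hprod k k (by assumption) (by assumption)) (integrable_const 1) hpt
      _ = 1 := by simp
    have hvar := integral_sq_sum_le (P := P) hprod hoff hdiag
    have hcheb := chebyshev_toReal (P := P) hfmeas hfsqint
      (t := (n:ℝ) * ε / 2) (by positivity)
    calc (P {ω | ε / 2 < |(∑ k ∈ Finset.range n, W k ω) / (n:ℝ) - pp|}).toReal
        ≤ (P {ω | (n:ℝ) * ε / 2 < |∑ k ∈ Finset.range n, (W k ω - pp)|}).toReal :=
          ENNReal.toReal_mono (measure_ne_top _ _) (measure_mono hsub)
      _ ≤ (∫ ω, (∑ k ∈ Finset.range n, (W k ω - pp)) ^ 2 ∂P) / ((n:ℝ) * ε / 2) ^ 2 := hcheb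
      _ ≤ ((n:ℝ) * 1) / ((n:ℝ) * ε / 2) ^ 2 :=
          (div_le_div_iff_of_pos_right (by positivity)).2 hvar
      _ = (4 / ε ^ 2) * (1 / (n:ℝ)) := by
          have hne : (n:ℝ) ≠ 0 := hn0.ne'
          have hεne : ε ≠ 0 := hε.ne'
          field_simp
          ring
    -- eventually n^(c-1) ≤ ε/2
  have hev_eps : ∀ᶠ n : ℕ in atTop, (n:ℝ) ^ (c - 1) ≤ ε / 2 := by
    have h1 : Tendsto (fun x : ℝ => x ^ (-(1 - c))) atTop (nhds 0) :=
      tendsto_rpow_neg_atTop (by linarith)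
    have h2 : Tendsto (fun n : ℕ => (n:ℝ) ^ (c - 1)) atTop (nhds 0) := by
      have h3 := h1.comp (tendsto_natCast_atTop_atTop (R := ℝ))
      simpa [Function.comp_def, show -(1 - c) = c - 1 by ring] using h3
    exact h2.eventually (eventually_le_nhds (by positivity))
  have hg2 : Tendsto (fun n : ℕ =>
      2 * (P {ω | ε / 2 < |(∑ k ∈ Finset.range n, W k ω) / (n:ℝ) - pp|}).toReal)
      atTop (nhds 0) := by simpa using hbad'.const_mul (2:ℝ)
  apply squeeze_zero' (Filter.Eventually.of_forall fun n => ENNReal.toReal_nonneg) ?_ hg2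
  filter_upwards [hev_eps, hev_half, eventually_ge_atTop 1] with n heps hhalf hn1
  have hn0 : (0:ℝ) < n := by exact_mod_cast hn1
  -- the perturbation bound: on the conditioning event the two empirical sums differ by
  -- at most |Δ_n| ≤ n^c terms
  have hsub : DsetF γ ξ κ δ0 n ∩ {ω | ε <
      |(∑ k ∈ Finset.range n,
        (if NF γ ξ π n k ω = i ∧ DF γ ξ π n k ω = j then (1 : ℝ) else 0)) / n - pp|}
      ⊆ {ω | ε / 2 < |(∑ k ∈ Finset.range n, W k ω) / (n:ℝ) - pp|} := by
    rintro ω ⟨hωD, hωb⟩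
    simp only [Set.mem_setOf_eq] at hωb ⊢
    have hωD' : |((Delta γ ξ n ω : ℤ) : ℝ)| ≤ (n:ℝ) ^ c := by
      rw [hc]
      exact hωD
    set S1 : ℝ := ∑ k ∈ Finset.range n,
      (if NF γ ξ π n k ω = i ∧ DF γ ξ π n k ω = j then (1 : ℝ) else 0) with hS1
    set S2 : ℝ := ∑ k ∈ Finset.range n, W k ω with hS2
    set dnat : ℕ := (Delta γ ξ n ω).natAbs with hdnatdef
    have hkey : |S1 - S2| ≤ (dnat : ℝ) := by
      have hterm : ∀ k ∈ Finset.range n,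
          |(if NF γ ξ π n k ω = i ∧ DF γ ξ π n k ω = j then (1 : ℝ) else 0) - W k ω|
          ≤ (if π n ω k < dnat then (1:ℝ) else 0) := by
        intro k _
        have e1 : W k ω = (if γ k ω = i ∧ ξ k ω = j then (1:ℝ) else 0) := rfl
        by_cases hπk : π n ω k < dnat
        · rw [if_pos hπk, e1]
          split_ifs <;> norm_num
        · rw [if_neg hπk]
          have hτ : tauF γ ξ π n k ω = 0 := by
            rw [tauF, if_neg]
            intro h
            exact hπk h.2.2
          have hχ : chiF γ ξ π n k ω = 0 := by
            rw [chiF, if_neg]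
            intro h
            exact hπk h.2.2
          have hNF : NF γ ξ π n k ω = γ k ω := by rw [NF, hτ, add_zero]
          have hDF : DF γ ξ π n k ω = ξ k ω := by rw [DF, hχ, add_zero]
          rw [hNF, hDF, e1, sub_self, abs_zero]
      calc |S1 - S2| = |∑ k ∈ Finset.range n,
            ((if NF γ ξ π n k ω = i ∧ DF γ ξ π n k ω = j then (1 : ℝ) else 0) - W k ω)| := by
              rw [hS1, hS2, ← Finset.sum_sub_distrib]
        _ ≤ ∑ k ∈ Finset.range n,
            |(if NF γ ξ π n k ω = i ∧ DF γ ξ π n k ω = j then (1 : ℝ) else 0) - W k ω| :=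
          Finset.abs_sum_le_sum_abs _ _
        _ ≤ ∑ k ∈ Finset.range n, (if π n ω k < dnat then (1:ℝ) else 0) :=
          Finset.sum_le_sum hterm
        _ = (((Finset.range n).filter fun k => π n ω k < dnat).card : ℝ) := by
          rw [Finset.sum_boole]
        _ ≤ (dnat : ℝ) := by
          have hcard : ((Finset.range n).filter fun k => π n ω k < dnat).card
              ≤ (Finset.range dnat).card := by
            apply Finset.card_le_card_of_injOn (π n ω)
            · intro k hk
              rw [Finset.mem_coe, Finset.mem_filter] at hk
              exact Finset.mem_coe.2 (Finset.mem_range.2 hk.2)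
            · apply Set.InjOn.mono ?_ (hπbij n ω).injOn
              intro k hk
              simp only [Finset.coe_filter, Set.mem_setOf_eq] at hk
              exact Finset.mem_range.1 hk.1
          rw [Finset.card_range] at hcard
          exact_mod_cast hcard
    have hdle : (dnat : ℝ) ≤ (n:ℝ) ^ c := by
      have h1 : ((dnat : ℕ) : ℝ) = |((Delta γ ξ n ω : ℤ) : ℝ)| := by
        rw [hdnatdef, Nat.cast_natAbs, Int.cast_abs]
      rw [h1]
      exact hωD'
    have hdiff : |S1 / (n:ℝ) - S2 / (n:ℝ)| ≤ (n:ℝ) ^ (c - 1) := by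
      rw [div_sub_div_same, abs_div, abs_of_pos hn0, Real.rpow_sub hn0, Real.rpow_one]
      exact div_le_div₀ (Real.rpow_nonneg hn0.le c) (le_trans hkey hdle) hn0 le_rfl
    have htri : |S1 / (n:ℝ) - pp| ≤ |S1 / (n:ℝ) - S2 / (n:ℝ)| + |S2 / (n:ℝ) - pp| :=
      abs_sub_le _ _ _
    have hlt : ε < |S1 / (n:ℝ) - S2 / (n:ℝ)| + |S2 / (n:ℝ) - pp| :=
      lt_of_lt_of_le hωb htri
    linarith
  -- conditional probability estimate
  have hinv : (P (DsetF γ ξ κ δ0 n))⁻¹ ≤ 2 := by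
    have h1 := ENNReal.inv_le_inv' hhalf
    rwa [inv_inv] at h1
  rw [cond_apply (hDmeas n) P]
  have hle : (P (DsetF γ ξ κ δ0 n))⁻¹ * P (DsetF γ ξ κ δ0 n ∩ {ω | ε <
      |(∑ k ∈ Finset.range n,
        (if NF γ ξ π n k ω = i ∧ DF γ ξ π n k ω = j then (1 : ℝ) else 0)) / n - pp|})
      ≤ 2 * P {ω | ε / 2 < |(∑ k ∈ Finset.range n, W k ω) / (n:ℝ) - pp|} :=
    mul_le_mul' hinv (le_trans (measure_mono hsub) le_rfl)
  calc ((P (DsetF γ ξ κ δ0 n))⁻¹ * P (DsetF γ ξ κ δ0 n ∩ {ω | ε <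
      |(∑ k ∈ Finset.range n,
        (if NF γ ξ π n k ω = i ∧ DF γ ξ π n k ω = j then (1 : ℝ) else 0)) / n - pp|})).toReal
      ≤ ((2 : ENNReal) * P {ω | ε / 2
          < |(∑ k ∈ Finset.range n, W k ω) / (n:ℝ) - pp|}).toReal :=
        ENNReal.toReal_mono
          (ENNReal.mul_ne_top (by norm_num) (measure_ne_top _ _)) hle
    _ = 2 * (P {ω | ε / 2 < |(∑ k ∈ Finset.range n, W k ω) / (n:ℝ) - pp|}).toReal := by
        rw [ENNReal.toReal_mul, ENNReal.toReal_ofNat]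
end

section
/- For the bi-degree-sequence (N, D) produced by the balancing algorithm with F, G having finite second moments, the empirical moments converge in probability: (1/n)∑ N_i → E[γ_1], (1/n)∑ D_i → E[ξ_1], (1/n)∑ N_i D_i → E[γ_1 ξ_1] = E[γ_1]E[ξ_1], (1/n)∑ N_i² → E[γ_1²], and (1/n)∑ D_i² → E[ξ_1²], as n → ∞. -/
open MeasureTheory ProbabilityTheory Filter

/-- `X n → c` in probability with respect to the (varying) measures `Pn n`. -/
def TendstoInProb {Ω : Type*} [MeasurableSpace Ω] (Pn : ℕ → MeasureTheory.Measure Ω)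
    (X : ℕ → Ω → ℝ) (c : ℝ) : Prop :=
  ∀ ε > (0 : ℝ), Filter.Tendsto (fun n => ((Pn n) {ω | ε < |X n ω - c|}).toReal)
    Filter.atTop (nhds 0)

section AuxLemmas
variable {Ω : Type*} [MeasurableSpace Ω]

/-- WLLN in probability, from the strong law. -/
lemma wlln_aux (P : Measure Ω) [IsProbabilityMeasure P] (Z : ℕ → Ω → ℝ)
    (hm : ∀ i, Measurable (Z i))
    (hind : Pairwise fun i j => IndepFun (Z i) (Z j) P)
    (hident : ∀ i, IdentDistrib (Z i) (Z 0) P P)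
    (hint : Integrable (Z 0) P) :
    ∀ ε > (0:ℝ), Tendsto
      (fun n => (P {ω | ε ≤ |(∑ i ∈ Finset.range n, Z i ω)/n - ∫ ω, Z 0 ω ∂P|}).toReal)
      atTop (nhds 0) := by
  intro ε hε
  have hae := ProbabilityTheory.strong_law_ae Z hint hind hident
  set c := ∫ ω, Z 0 ω ∂P with hc
  have hmeas : ∀ n : ℕ, AEStronglyMeasurable (fun ω => (∑ i ∈ Finset.range n, Z i ω)/n) P :=
    fun n => ((Finset.measurable_sum _ (fun i _ => hm i)).div_const _).aestronglyMeasurable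
  have hae' : ∀ᵐ ω ∂P, Tendsto (fun n => (∑ i ∈ Finset.range n, Z i ω)/n) atTop (nhds c) := by
    filter_upwards [hae] with ω hω
    convert hω using 2 with n
    rw [smul_eq_mul, ← div_eq_inv_mul]

  have h := tendstoInMeasure_iff_dist.1 (MeasureTheory.tendstoInMeasure_of_tendsto_ae hmeas hae') ε hε
  have h2 := (ENNReal.tendsto_toReal (by simp : (0:ENNReal) ≠ ⊤)).comp h
  simp only [ENNReal.toReal_zero] at h2
  have hset : ∀ n : ℕ, {ω | ε ≤ dist ((∑ i ∈ Finset.range n, Z i ω)/n) c}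
      = {ω | ε ≤ |(∑ i ∈ Finset.range n, Z i ω)/n - c|} := by
    intro n; ext ω; simp [Real.dist_eq]
  simp only [hset] at h2
  exact h2

/-- Reduce conditional-measure convergence to unconditional. -/
lemma cond_to_zero (P : Measure Ω) [IsProbabilityMeasure P] (D A B : ℕ → Set Ω)
    (hD : ∀ n, MeasurableSet (D n))
    (hPD : ∀ᶠ n in atTop, (2:ENNReal)⁻¹ ≤ P (D n))
    (hsub : ∀ᶠ n in atTop, A n ∩ D n ⊆ B n)
    (hB : Tendsto (fun n => (P (B n)).toReal) atTop (nhds 0)) :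
    Tendsto (fun n => ((ProbabilityTheory.cond P (D n)) (A n)).toReal) atTop (nhds 0) := by
  have key : ∀ᶠ n in atTop,
      ((ProbabilityTheory.cond P (D n)) (A n)).toReal ≤ 2 * (P (B n)).toReal := by
    filter_upwards [hPD, hsub] with n h1 h2
    rw [ProbabilityTheory.cond_apply (hD n)]
    have hb1 : P (D n ∩ A n) ≤ P (B n) :=
      measure_mono (fun x hx => h2 ⟨hx.2, hx.1⟩)
    have hinv : (P (D n))⁻¹ ≤ 2 := by
      rw [ENNReal.inv_le_iff_inv_le]
      simpa using h1
    calc ((P (D n))⁻¹ * P (D n ∩ A n)).toReal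
        ≤ ((2:ENNReal) * P (B n)).toReal := by
          apply ENNReal.toReal_mono
          · exact ENNReal.mul_ne_top (by simp) (measure_ne_top _ _)
          · exact mul_le_mul' hinv hb1
      _ = 2 * (P (B n)).toReal := by
          rw [ENNReal.toReal_mul]; norm_num
  refine squeeze_zero' ?_ key ?_
  · filter_upwards with n; exact ENNReal.toReal_nonneg
  · simpa using hB.const_mul 2

lemma tau_sum_le (γ ξ : ℕ → Ω → ℕ) (π : ℕ → Ω → ℕ → ℕ)
    (hπbij : ∀ n ω, Set.BijOn (π n ω) (Set.Iio n) (Set.Iio n)) (n : ℕ) (ω : Ω) :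
    ∑ i ∈ Finset.range n, tauF γ ξ π n i ω ≤ (Delta γ ξ n ω).natAbs := by
  classical
  set d := (Delta γ ξ n ω).natAbs with hd
  have h1 : ∑ i ∈ Finset.range n, tauF γ ξ π n i ω
      ≤ ((Finset.range n).filter (fun i => π n ω i < d)).card := by
    rw [Finset.card_filter]
    apply Finset.sum_le_sum
    intro i _
    unfold tauF
    split_ifs with h1 h2
    · exact le_refl 1
    · exact absurd h1.2.2 h2
    · exact Nat.zero_le _
    · exact Nat.zero_le _
  refine h1.trans ?_
  have h2 : ((Finset.range n).filter (fun i => π n ω i < d)).card ≤ (Finset.range d).card := by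
    apply Finset.card_le_card_of_injOn (fun i => π n ω i)
    · intro a ha
      simp only [Finset.mem_coe, Finset.mem_filter] at ha
      simpa using ha.2
    · intro a ha b hb hab
      simp only [Finset.coe_filter, Set.mem_setOf_eq, Finset.mem_range] at ha hb
      exact (hπbij n ω).injOn (by simpa using ha.1) (by simpa using hb.1) hab
  simpa using h2

lemma chi_sum_le (γ ξ : ℕ → Ω → ℕ) (π : ℕ → Ω → ℕ → ℕ)
    (hπbij : ∀ n ω, Set.BijOn (π n ω) (Set.Iio n) (Set.Iio n)) (n : ℕ) (ω : Ω) :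
    ∑ i ∈ Finset.range n, chiF γ ξ π n i ω ≤ (Delta γ ξ n ω).natAbs := by
  classical
  set d := (Delta γ ξ n ω).natAbs with hd
  have h1 : ∑ i ∈ Finset.range n, chiF γ ξ π n i ω
      ≤ ((Finset.range n).filter (fun i => π n ω i < d)).card := by
    rw [Finset.card_filter]
    apply Finset.sum_le_sum
    intro i _
    unfold chiF
    split_ifs with h1 h2
    · exact le_refl 1
    · exact absurd h1.2.2 h2
    · exact Nat.zero_le _
    · exact Nat.zero_le _
  refine h1.trans ?_
  have h2 : ((Finset.range n).filter (fun i => π n ω i < d)).card ≤ (Finset.range d).card := by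
    apply Finset.card_le_card_of_injOn (fun i => π n ω i)
    · intro a ha
      simp only [Finset.mem_coe, Finset.mem_filter] at ha
      simpa using ha.2
    · intro a ha b hb hab
      simp only [Finset.coe_filter, Set.mem_setOf_eq, Finset.mem_range] at ha hb
      exact (hπbij n ω).injOn (by simpa using ha.1) (by simpa using hb.1) hab
  simpa using h2

end AuxLemmas


/-- If `t` is a 0/1 indicator value then `g * t ≤ g²/T + T*t`. -/
lemma mul_ind_le {g T t : ℝ} (hg : 0 ≤ g) (hT : 0 < T) (ht : t = 0 ∨ t = 1) :
    g * t ≤ g ^ 2 / T + T * t := by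
  have hu : g ^ 2 / T * T = g ^ 2 := div_mul_cancel₀ _ hT.ne'
  rcases ht with h | h <;> subst h
  · simp only [mul_zero, add_zero]
    positivity
  · rw [mul_one, mul_one]
    nlinarith [sq_nonneg (g - T), hu, mul_nonneg hg hT.le]

set_option maxHeartbeats 4000000 in
/-- Convergence in probability of the empirical moments of the bi-degree-sequence
`(N, D)` produced by the balancing algorithm (with `F`, `G` having finite second
moments): `(1/n)∑ N_i → E[γ]`, `(1/n)∑ D_i → E[ξ]`,
`(1/n)∑ N_i D_i → E[γξ] = E[γ]E[ξ]`, `(1/n)∑ N_i² → E[γ²]`, `(1/n)∑ D_i² → E[ξ²]`. -/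
theorem stmt16
    {Ω : Type*} [MeasurableSpace Ω] (P : Measure Ω) [IsProbabilityMeasure P]
    (γ ξ : ℕ → Ω → ℕ)
    (hγmeas : ∀ i, Measurable (γ i)) (hξmeas : ∀ i, Measurable (ξ i))
    (hindep : iIndepFun (Sum.elim γ ξ) P)
    (hidγ : ∀ i, Measure.map (γ i) P = Measure.map (γ 0) P)
    (hidξ : ∀ i, Measure.map (ξ i) P = Measure.map (ξ 0) P)
    (μ : ℝ) (hμ : 0 < μ)
    (hintγ : Integrable (fun ω => (γ 0 ω : ℝ)) P)
    (hintξ : Integrable (fun ω => (ξ 0 ω : ℝ)) P)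
    (hEγ : ∫ ω, (γ 0 ω : ℝ) ∂P = μ) (hEξ : ∫ ω, (ξ 0 ω : ℝ) ∂P = μ)
    (α β : ℝ) (hα : 1 < α) (hβ : 1 < β)
    (LF LG : ℝ → ℝ)
    (hLFpos : ∀ x > (0 : ℝ), 0 < LF x) (hLGpos : ∀ x > (0 : ℝ), 0 < LG x)
    (hLFslow : ∀ t > (0 : ℝ), Tendsto (fun x => LF (t * x) / LF x) atTop (nhds 1))
    (hLGslow : ∀ t > (0 : ℝ), Tendsto (fun x => LG (t * x) / LG x) atTop (nhds 1))
    (htailF : ∀ x : ℝ, 0 < x → (P {ω | x < (γ 0 ω : ℝ)}).toReal ≤ x ^ (-α) * LF x)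
    (htailG : ∀ x : ℝ, 0 < x → (P {ω | x < (ξ 0 ω : ℝ)}).toReal ≤ x ^ (-β) * LG x)
    (κ δ0 : ℝ) (hκ : κ = min (min (1 - α⁻¹) (1 - β⁻¹)) (1 / 2))
    (hδ0 : 0 < δ0) (hδ0κ : δ0 < κ)
    (π : ℕ → Ω → ℕ → ℕ) (hπmeas : ∀ n, Measurable (π n))
    (hπbij : ∀ n ω, Set.BijOn (π n ω) (Set.Iio n) (Set.Iio n))
    (hπunif : ∀ n (g : Equiv.Perm (Fin n)),
      P {ω | ∀ i (h : i < n), π n ω i = (g ⟨i, h⟩ : Fin n)} = ((Nat.factorial n : ENNReal))⁻¹)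
    (hπindep : ∀ n, IndepFun (π n) (fun ω (i : ℕ) => (γ i ω, ξ i ω)) P)
    (hintγ2 : Integrable (fun ω => (γ 0 ω : ℝ) ^ 2) P)
    (hintξ2 : Integrable (fun ω => (ξ 0 ω : ℝ) ^ 2) P) :
    TendstoInProb (fun n => ProbabilityTheory.cond P (DsetF γ ξ κ δ0 n))
        (fun n ω => (∑ i ∈ Finset.range n, (NF γ ξ π n i ω : ℝ)) / n)
        (∫ ω, (γ 0 ω : ℝ) ∂P)
    ∧ TendstoInProb (fun n => ProbabilityTheory.cond P (DsetF γ ξ κ δ0 n))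
        (fun n ω => (∑ i ∈ Finset.range n, (DF γ ξ π n i ω : ℝ)) / n)
        (∫ ω, (ξ 0 ω : ℝ) ∂P)
    ∧ TendstoInProb (fun n => ProbabilityTheory.cond P (DsetF γ ξ κ δ0 n))
        (fun n ω => (∑ i ∈ Finset.range n, (NF γ ξ π n i ω : ℝ) * (DF γ ξ π n i ω : ℝ)) / n)
        (∫ ω, (γ 0 ω : ℝ) * (ξ 0 ω : ℝ) ∂P)
    ∧ (∫ ω, (γ 0 ω : ℝ) * (ξ 0 ω : ℝ) ∂P) = (∫ ω, (γ 0 ω : ℝ) ∂P) * ∫ ω, (ξ 0 ω : ℝ) ∂P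
    ∧ TendstoInProb (fun n => ProbabilityTheory.cond P (DsetF γ ξ κ δ0 n))
        (fun n ω => (∑ i ∈ Finset.range n, (NF γ ξ π n i ω : ℝ) ^ 2) / n)
        (∫ ω, (γ 0 ω : ℝ) ^ 2 ∂P)
    ∧ TendstoInProb (fun n => ProbabilityTheory.cond P (DsetF γ ξ κ δ0 n))
        (fun n ω => (∑ i ∈ Finset.range n, (DF γ ξ π n i ω : ℝ) ^ 2) / n)
        (∫ ω, (ξ 0 ω : ℝ) ^ 2 ∂P) := by
  classical
  have pairMeas : ∀ (f : ℕ → ℕ → ℝ) (i : ℕ), Measurable (fun ω => f (γ i ω) (ξ i ω)) :=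
    fun f i => (measurable_of_countable (fun p : ℕ × ℕ => f p.1 p.2)).comp
      ((hγmeas i).prodMk (hξmeas i))
  have pairIndep : ∀ (f : ℕ → ℕ → ℝ), Pairwise fun i j =>
      IndepFun (fun ω => f (γ i ω) (ξ i ω)) (fun ω => f (γ j ω) (ξ j ω)) P := by
    intro f i j hij
    have hdisj : Disjoint ({Sum.inl i, Sum.inr i} : Finset (ℕ ⊕ ℕ)) {Sum.inl j, Sum.inr j} := by
      simp [Finset.disjoint_left, hij, Ne.symm hij]
    have hmeasall : ∀ k : ℕ ⊕ ℕ, Measurable (Sum.elim γ ξ k) := by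
      rintro (k | k)
      exacts [hγmeas k, hξmeas k]
    have h := hindep.indepFun_finset _ _ hdisj hmeasall
    have hφ : ∀ (l : ℕ), Measurable (fun v : (({Sum.inl l, Sum.inr l} : Finset (ℕ ⊕ ℕ)) → ℕ) =>
        f (v ⟨Sum.inl l, by simp⟩) (v ⟨Sum.inr l, by simp⟩)) := by
      intro l
      have e1 : Measurable (fun v : (({Sum.inl l, Sum.inr l} : Finset (ℕ ⊕ ℕ)) → ℕ) =>
          v ⟨Sum.inl l, by simp⟩) := measurable_pi_apply _
      have e2 : Measurable (fun v : (({Sum.inl l, Sum.inr l} : Finset (ℕ ⊕ ℕ)) → ℕ) =>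
          v ⟨Sum.inr l, by simp⟩) := measurable_pi_apply _
      exact (measurable_of_countable (fun p : ℕ × ℕ => f p.1 p.2)).comp (e1.prodMk e2)
    exact h.comp (hφ i) (hφ j)
  have hpairmap : ∀ i, Measure.map (fun ω => (γ i ω, ξ i ω)) P
      = (Measure.map (γ 0) P).prod (Measure.map (ξ 0) P) := by
    intro i
    have hind : IndepFun (γ i) (ξ i) P :=
      hindep.indepFun (show (Sum.inl i : ℕ ⊕ ℕ) ≠ Sum.inr i by simp)
    rw [(indepFun_iff_map_prod_eq_prod_map_map (hγmeas i).aemeasurable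
      (hξmeas i).aemeasurable).1 hind, hidγ i, hidξ i]
  have pairIdent : ∀ (f : ℕ → ℕ → ℝ) (i : ℕ),
      IdentDistrib (fun ω => f (γ i ω) (ξ i ω)) (fun ω => f (γ 0 ω) (ξ 0 ω)) P P := by
    intro f i
    have base : IdentDistrib (fun ω => (γ i ω, ξ i ω)) (fun ω => (γ 0 ω, ξ 0 ω)) P P :=
      ⟨((hγmeas i).prodMk (hξmeas i)).aemeasurable,
       ((hγmeas 0).prodMk (hξmeas 0)).aemeasurable, by rw [hpairmap i, hpairmap 0]⟩
    exact base.comp (measurable_of_countable (fun p : ℕ × ℕ => f p.1 p.2))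
  have hint_mul : Integrable (fun ω => (γ 0 ω : ℝ) * (ξ 0 ω : ℝ)) P := by
    have hind : IndepFun (fun ω => (γ 0 ω : ℝ)) (fun ω => (ξ 0 ω : ℝ)) P :=
      (hindep.indepFun (show (Sum.inl 0 : ℕ ⊕ ℕ) ≠ Sum.inr 0 by simp)).comp
        measurable_from_top measurable_from_top
    exact hind.integrable_mul hintγ hintξ
  have W1 := wlln_aux P (fun i ω => (γ i ω : ℝ))
    (fun i => pairMeas (fun a b => (a : ℝ)) i) (pairIndep (fun a b => (a : ℝ)))
    (fun i => pairIdent (fun a b => (a : ℝ)) i) hintγ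
  have W2 := wlln_aux P (fun i ω => (ξ i ω : ℝ))
    (fun i => pairMeas (fun a b => (b : ℝ)) i) (pairIndep (fun a b => (b : ℝ)))
    (fun i => pairIdent (fun a b => (b : ℝ)) i) hintξ
  have W3 := wlln_aux P (fun i ω => (γ i ω : ℝ) * (ξ i ω : ℝ))
    (fun i => pairMeas (fun a b => (a : ℝ) * (b : ℝ)) i) (pairIndep (fun a b => (a : ℝ) * (b : ℝ)))
    (fun i => pairIdent (fun a b => (a : ℝ) * (b : ℝ)) i) hint_mul
  have W4 := wlln_aux P (fun i ω => (γ i ω : ℝ) ^ 2)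
    (fun i => pairMeas (fun a b => (a : ℝ) ^ 2) i) (pairIndep (fun a b => (a : ℝ) ^ 2))
    (fun i => pairIdent (fun a b => (a : ℝ) ^ 2) i) hintγ2
  have W5 := wlln_aux P (fun i ω => (ξ i ω : ℝ) ^ 2)
    (fun i => pairMeas (fun a b => (b : ℝ) ^ 2) i) (pairIndep (fun a b => (b : ℝ) ^ 2))
    (fun i => pairIdent (fun a b => (b : ℝ) ^ 2) i) hintξ2
  -- basic exponent facts
  have hκhalf : κ ≤ 1/2 := by rw [hκ]; exact min_le_right _ _
  have hκδ : 0 < κ - δ0 := by linarith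
  -- measurability of the conditioning event
  have hDelmeas : ∀ n, Measurable (Delta γ ξ n) := by
    intro n
    exact (Finset.measurable_sum _ (fun i _ => measurable_from_top.comp (hγmeas i))).sub
      (Finset.measurable_sum _ (fun i _ => measurable_from_top.comp (hξmeas i)))
  have hDmeas : ∀ n, MeasurableSet (DsetF γ ξ κ δ0 n) := by
    intro n
    have hf : Measurable (fun ω => |((Delta γ ξ n ω : ℤ) : ℝ)|) :=
      (measurable_from_top (f := fun z : ℤ => |(z : ℝ)|)).comp (hDelmeas n)
    exact measurableSet_le hf measurable_const
  -- second-moment data for γ - ξ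
  have hmemℓ2 : ∀ i : ℕ, MemLp (fun ω => (γ i ω : ℝ) - (ξ i ω : ℝ)) 2 P := by
    intro i
    have h1 : MemLp (fun ω => (γ i ω : ℝ)) 2 P := by
      rw [memLp_two_iff_integrable_sq (pairMeas (fun a b => (a : ℝ)) i).aestronglyMeasurable]
      exact ((pairIdent (fun a b => (a : ℝ) ^ 2) i).integrable_iff).2 hintγ2
    have h2 : MemLp (fun ω => (ξ i ω : ℝ)) 2 P := by
      rw [memLp_two_iff_integrable_sq (pairMeas (fun a b => (b : ℝ)) i).aestronglyMeasurable]
      exact ((pairIdent (fun a b => (b : ℝ) ^ 2) i).integrable_iff).2 hintξ2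
    exact h1.sub h2
  have hmean : ∀ i : ℕ, ∫ ω, ((γ i ω : ℝ) - (ξ i ω : ℝ)) ∂P = 0 := by
    intro i
    have i1 : Integrable (fun ω => (γ i ω : ℝ)) P :=
      ((pairIdent (fun a b => (a : ℝ)) i).integrable_iff).2 hintγ
    have i2 : Integrable (fun ω => (ξ i ω : ℝ)) P :=
      ((pairIdent (fun a b => (b : ℝ)) i).integrable_iff).2 hintξ
    rw [integral_sub i1 i2, (pairIdent (fun a b => (a : ℝ)) i).integral_eq,
      (pairIdent (fun a b => (b : ℝ)) i).integral_eq, hEγ, hEξ, sub_self]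
  set v := variance (fun ω => (γ 0 ω : ℝ) - (ξ 0 ω : ℝ)) P with hv
  have hPDc : ∀ n : ℕ, 1 ≤ n → P ((DsetF γ ξ κ δ0 n)ᶜ)
      ≤ ENNReal.ofReal ((n * v) / ((n : ℝ) ^ (1 - κ + δ0)) ^ 2) := by
    intro n hn
    have hnpos : (0:ℝ) < n := by exact_mod_cast hn
    have hcpos : (0:ℝ) < (n : ℝ) ^ (1 - κ + δ0) := Real.rpow_pos_of_pos hnpos _
    set X := fun ω => ∑ i ∈ Finset.range n, ((γ i ω : ℝ) - (ξ i ω : ℝ)) with hX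
    have hfun : X = ∑ i ∈ Finset.range n, (fun ω => (γ i ω : ℝ) - (ξ i ω : ℝ)) := by
      ext ω; rw [hX]; simp
    have hX2 : MemLp X 2 P := by
      have h := memLp_finset_sum' (Finset.range n) (fun i (_ : i ∈ Finset.range n) => hmemℓ2 i)
      rwa [← hfun] at h
    have hEX : ∫ ω, X ω ∂P = 0 := by
      rw [hX, integral_finset_sum _ (fun i _ => (hmemℓ2 i).integrable (by norm_num))]
      simp [hmean]
    have hvarX : variance X P = n * v := by
      rw [hfun, IndepFun.variance_sum (fun i _ => hmemℓ2 i)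
        ((pairIndep (fun a b => (a : ℝ) - (b : ℝ))).set_pairwise _)]
      have : ∀ i : ℕ, variance (fun ω => (γ i ω : ℝ) - (ξ i ω : ℝ)) P = v :=
        fun i => (pairIdent (fun a b => (a : ℝ) - (b : ℝ)) i).variance_eq
      simp [this, mul_comm]
    have hcheb := meas_ge_le_variance_div_sq (μ := P) hX2 hcpos
    rw [hEX, hvarX] at hcheb
    refine le_trans (measure_mono ?_) hcheb
    intro ω hω
    simp only [DsetF, Set.mem_compl_iff, Set.mem_setOf_eq, not_le] at hω
    have hXω : X ω = ((Delta γ ξ n ω : ℤ) : ℝ) := by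
      rw [hX]
      simp only [Delta]
      push_cast
      rw [Finset.sum_sub_distrib]
    simp only [Set.mem_setOf_eq, sub_zero, hXω]
    exact le_of_lt hω
  -- the bound tends to zero
  set q : ℝ := 2 * (1 - κ + δ0) - 1 with hqdef
  have hq : 0 < q := by simp only [hqdef]; linarith
  have hbd_eq : ∀ n : ℕ, 1 ≤ n →
      (n : ℝ) * v / ((n : ℝ) ^ (1 - κ + δ0)) ^ 2 = v * (n : ℝ) ^ (-q) := by
    intro n hn
    have hnpos : (0:ℝ) < n := by exact_mod_cast hn
    have h1 : ((n : ℝ) ^ (1 - κ + δ0)) ^ 2 = (n : ℝ) ^ (2 * (1 - κ + δ0)) := by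
      rw [← Real.rpow_natCast ((n : ℝ) ^ (1 - κ + δ0)) 2, ← Real.rpow_mul hnpos.le]
      norm_num [mul_comm]
    have h2 := Real.rpow_sub hnpos 1 (2 * (1 - κ + δ0))
    rw [Real.rpow_one] at h2
    have h3 : 1 - 2 * (1 - κ + δ0) = -q := by rw [hqdef]; ring
    rw [h1]
    rw [h3] at h2
    rw [h2]
    ring
  have htendq : Tendsto (fun n : ℕ => v * (n : ℝ) ^ (-q)) atTop (nhds 0) := by
    have h := (tendsto_rpow_neg_atTop hq).comp tendsto_natCast_atTop_atTop
    have := h.const_mul v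
    simpa using this
  have hPD : ∀ᶠ n in atTop, (2:ENNReal)⁻¹ ≤ P (DsetF γ ξ κ δ0 n) := by
    have hsm : ∀ᶠ n : ℕ in atTop, v * (n : ℝ) ^ (-q) ≤ 1/2 :=
      htendq.eventually (eventually_le_nhds (by norm_num))
    filter_upwards [hsm, eventually_ge_atTop 1] with n h1 h2
    have hc : P ((DsetF γ ξ κ δ0 n)ᶜ) ≤ 2⁻¹ := by
      refine (hPDc n h2).trans ?_
      rw [hbd_eq n h2]
      calc ENNReal.ofReal (v * (n:ℝ) ^ (-q)) ≤ ENNReal.ofReal (1/2) :=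
            ENNReal.ofReal_le_ofReal h1
        _ = 2⁻¹ := by
            rw [show (1:ℝ)/2 = (2:ℝ)⁻¹ by norm_num,
              ENNReal.ofReal_inv_of_pos (by norm_num : (0:ℝ) < 2)]
            norm_num
    have hcompl := measure_compl (μ := P) (hDmeas n) (measure_ne_top P _)
    rw [measure_univ] at hcompl
    rw [hcompl] at hc
    calc (2:ENNReal)⁻¹ = 1 - 2⁻¹ := ENNReal.one_sub_inv_two.symm
      _ ≤ P (DsetF γ ξ κ δ0 n) := by
          rw [tsub_le_iff_right]
          rw [tsub_le_iff_right] at hc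
          rwa [add_comm] at hc
  -- exponent arithmetic facts
  have hexp1 : ∀ n : ℕ, 1 ≤ n → ((n:ℝ) ^ (1 - κ + δ0))/(n:ℝ) = (n:ℝ) ^ (-(κ - δ0)) := by
    intro n hn
    have hnpos : (0:ℝ) < n := by exact_mod_cast hn
    have h := Real.rpow_sub hnpos (1 - κ + δ0) 1
    rw [Real.rpow_one] at h
    rw [← h]
    congr 1
    ring
  have hexp3 : ∀ n : ℕ, 1 ≤ n → (((n:ℝ) ^ ((κ - δ0)/2)))⁻¹ = (n:ℝ) ^ (-((κ - δ0)/2)) := by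
    intro n hn
    have hnpos : (0:ℝ) < n := by exact_mod_cast hn
    rw [Real.rpow_neg hnpos.le]
  have hexp4 : ∀ n : ℕ, 1 ≤ n → (n:ℝ) ^ (-(κ - δ0)) = (n:ℝ) ^ (-((κ - δ0)/2)) * (n:ℝ) ^ (-((κ - δ0)/2)) := by
    intro n hn
    have hnpos : (0:ℝ) < n := by exact_mod_cast hn
    rw [← Real.rpow_add hnpos]
    congr 1
    ring
  have hexp2 : ∀ n : ℕ, 1 ≤ n → (n:ℝ) ^ ((κ - δ0)/2) * (n:ℝ) ^ (-(κ - δ0)) = (n:ℝ) ^ (-((κ - δ0)/2)) := by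
    intro n hn
    have hnpos : (0:ℝ) < n := by exact_mod_cast hn
    rw [← Real.rpow_add hnpos]
    congr 1
    ring
  have hr1 : ∀ n : ℕ, 1 ≤ n → (n:ℝ) ^ (-((κ - δ0)/2)) ≤ 1 := by
    intro n hn
    exact Real.rpow_le_one_of_one_le_of_nonpos (by exact_mod_cast hn) (by linarith)
  have hrnn : ∀ n : ℕ, (0:ℝ) ≤ (n:ℝ) ^ (-((κ - δ0)/2)) :=
    fun n => Real.rpow_nonneg (Nat.cast_nonneg n) _
  have hsmall : ∀ (C p : ℝ), 0 < p → ∀ (d : ℝ), 0 < d →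
      ∀ᶠ (n : ℕ) in atTop, C * (n:ℝ) ^ (-p) ≤ d := by
    intro C p hp d hd
    have h := ((tendsto_rpow_neg_atTop hp).comp tendsto_natCast_atTop_atTop).const_mul C
    simp only [mul_zero] at h
    exact h.eventually (eventually_le_nhds hd)
  -- indicator facts
  have htau01 : ∀ n i (ω : Ω), (tauF γ ξ π n i ω : ℝ) = 0 ∨ (tauF γ ξ π n i ω : ℝ) = 1 := by
    intro n i ω
    unfold tauF
    split_ifs <;> simp
  have hchi01 : ∀ n i (ω : Ω), (chiF γ ξ π n i ω : ℝ) = 0 ∨ (chiF γ ξ π n i ω : ℝ) = 1 := by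
    intro n i ω
    unfold chiF
    split_ifs <;> simp
  have htauchi : ∀ n i (ω : Ω), (tauF γ ξ π n i ω : ℝ) * (chiF γ ξ π n i ω : ℝ) = 0 := by
    intro n i ω
    unfold tauF chiF
    split_ifs with h1 h2
    · exact absurd h2.1 (not_le.2 h1.1)
    · simp
    · simp
    · simp
  -- sums of indicators on the conditioning event
  have hSτ : ∀ n (ω : Ω), ω ∈ DsetF γ ξ κ δ0 n →
      (∑ i ∈ Finset.range n, (tauF γ ξ π n i ω : ℝ)) ≤ (n:ℝ) ^ (1 - κ + δ0) := by
    intro n ω hD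
    have h1 : (∑ i ∈ Finset.range n, (tauF γ ξ π n i ω : ℝ))
        = ((∑ i ∈ Finset.range n, tauF γ ξ π n i ω : ℕ) : ℝ) := by
      push_cast
      rfl
    rw [h1]
    have h2 : ((∑ i ∈ Finset.range n, tauF γ ξ π n i ω : ℕ) : ℝ)
        ≤ (((Delta γ ξ n ω).natAbs : ℕ) : ℝ) := by
      exact_mod_cast tau_sum_le γ ξ π hπbij n ω
    refine h2.trans ?_
    rw [Nat.cast_natAbs]
    simp only [DsetF, Set.mem_setOf_eq] at hD
    exact_mod_cast hD
  have hSχ : ∀ n (ω : Ω), ω ∈ DsetF γ ξ κ δ0 n →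
      (∑ i ∈ Finset.range n, (chiF γ ξ π n i ω : ℝ)) ≤ (n:ℝ) ^ (1 - κ + δ0) := by
    intro n ω hD
    have h1 : (∑ i ∈ Finset.range n, (chiF γ ξ π n i ω : ℝ))
        = ((∑ i ∈ Finset.range n, chiF γ ξ π n i ω : ℕ) : ℝ) := by
      push_cast
      rfl
    rw [h1]
    have h2 : ((∑ i ∈ Finset.range n, chiF γ ξ π n i ω : ℕ) : ℝ)
        ≤ (((Delta γ ξ n ω).natAbs : ℕ) : ℝ) := by
      exact_mod_cast chi_sum_le γ ξ π hπbij n ω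
    refine h2.trans ?_
    rw [Nat.cast_natAbs]
    simp only [DsetF, Set.mem_setOf_eq] at hD
    exact_mod_cast hD
  have hτnn : ∀ n (ω : Ω), (0:ℝ) ≤ ∑ i ∈ Finset.range n, (tauF γ ξ π n i ω : ℝ) :=
    fun n ω => Finset.sum_nonneg (fun i _ => Nat.cast_nonneg _)
  have hχnn : ∀ n (ω : Ω), (0:ℝ) ≤ ∑ i ∈ Finset.range n, (chiF γ ξ π n i ω : ℝ) :=
    fun n ω => Finset.sum_nonneg (fun i _ => Nat.cast_nonneg _)
  refine ⟨?_, ?_, ?_, ?_, ?_, ?_⟩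
  · -- part 1 : (1/n) ∑ N → E γ
    intro ε hε
    refine cond_to_zero P _ _
      (fun n => {ω | ε/2 ≤ |(∑ i ∈ Finset.range n, (γ i ω : ℝ))/(n:ℝ) - ∫ ω, (γ 0 ω : ℝ) ∂P|})
      hDmeas hPD ?_ (W1 (ε/2) (by positivity))
    filter_upwards [hsmall 1 (κ - δ0) hκδ (ε/2) (by positivity), eventually_ge_atTop 1]
      with n hsm hn1
    rintro ω ⟨hA, hD⟩
    simp only [Set.mem_setOf_eq] at hA ⊢
    have hnpos : (0:ℝ) < n := by exact_mod_cast hn1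
    have hsplit : (∑ i ∈ Finset.range n, (NF γ ξ π n i ω : ℝ))
        = (∑ i ∈ Finset.range n, (γ i ω : ℝ)) + (∑ i ∈ Finset.range n, (tauF γ ξ π n i ω : ℝ)) := by
      rw [← Finset.sum_add_distrib]
      refine Finset.sum_congr rfl (fun i _ => ?_)
      simp [NF]
    have herr : (∑ i ∈ Finset.range n, (tauF γ ξ π n i ω : ℝ))/(n:ℝ) ≤ ε/2 := by
      have h3 : (∑ i ∈ Finset.range n, (tauF γ ξ π n i ω : ℝ))/(n:ℝ)
          ≤ ((n:ℝ) ^ (1-κ+δ0))/(n:ℝ) := by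
        gcongr
        exact hSτ n ω hD
      rw [hexp1 n hn1] at h3
      have h4 : (1:ℝ) * (n:ℝ)^(-(κ-δ0)) ≤ ε/2 := hsm
      linarith
    have hdiff : (∑ i ∈ Finset.range n, (NF γ ξ π n i ω : ℝ))/(n:ℝ)
        - (∑ i ∈ Finset.range n, (γ i ω : ℝ))/(n:ℝ)
        = (∑ i ∈ Finset.range n, (tauF γ ξ π n i ω : ℝ))/(n:ℝ) := by
      rw [hsplit]; ring
    have htri := abs_sub_le ((∑ i ∈ Finset.range n, (NF γ ξ π n i ω : ℝ))/(n:ℝ))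
      ((∑ i ∈ Finset.range n, (γ i ω : ℝ))/(n:ℝ)) (∫ ω, (γ 0 ω : ℝ) ∂P)
    have habs : |(∑ i ∈ Finset.range n, (NF γ ξ π n i ω : ℝ))/(n:ℝ)
        - (∑ i ∈ Finset.range n, (γ i ω : ℝ))/(n:ℝ)| ≤ ε/2 := by
      rw [hdiff, abs_of_nonneg (div_nonneg (hτnn n ω) hnpos.le)]
      exact herr
    linarith [hA]
  · -- part 2 : (1/n) ∑ D → E ξ
    intro ε hε
    refine cond_to_zero P _ _
      (fun n => {ω | ε/2 ≤ |(∑ i ∈ Finset.range n, (ξ i ω : ℝ))/(n:ℝ) - ∫ ω, (ξ 0 ω : ℝ) ∂P|})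
      hDmeas hPD ?_ (W2 (ε/2) (by positivity))
    filter_upwards [hsmall 1 (κ - δ0) hκδ (ε/2) (by positivity), eventually_ge_atTop 1]
      with n hsm hn1
    rintro ω ⟨hA, hD⟩
    simp only [Set.mem_setOf_eq] at hA ⊢
    have hnpos : (0:ℝ) < n := by exact_mod_cast hn1
    have hsplit : (∑ i ∈ Finset.range n, (DF γ ξ π n i ω : ℝ))
        = (∑ i ∈ Finset.range n, (ξ i ω : ℝ)) + (∑ i ∈ Finset.range n, (chiF γ ξ π n i ω : ℝ)) := by
      rw [← Finset.sum_add_distrib]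
      refine Finset.sum_congr rfl (fun i _ => ?_)
      simp [DF]
    have herr : (∑ i ∈ Finset.range n, (chiF γ ξ π n i ω : ℝ))/(n:ℝ) ≤ ε/2 := by
      have h3 : (∑ i ∈ Finset.range n, (chiF γ ξ π n i ω : ℝ))/(n:ℝ)
          ≤ ((n:ℝ) ^ (1-κ+δ0))/(n:ℝ) := by
        gcongr
        exact hSχ n ω hD
      rw [hexp1 n hn1] at h3
      have h4 : (1:ℝ) * (n:ℝ)^(-(κ-δ0)) ≤ ε/2 := hsm
      linarith
    have hdiff : (∑ i ∈ Finset.range n, (DF γ ξ π n i ω : ℝ))/(n:ℝ)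
        - (∑ i ∈ Finset.range n, (ξ i ω : ℝ))/(n:ℝ)
        = (∑ i ∈ Finset.range n, (chiF γ ξ π n i ω : ℝ))/(n:ℝ) := by
      rw [hsplit]; ring
    have htri := abs_sub_le ((∑ i ∈ Finset.range n, (DF γ ξ π n i ω : ℝ))/(n:ℝ))
      ((∑ i ∈ Finset.range n, (ξ i ω : ℝ))/(n:ℝ)) (∫ ω, (ξ 0 ω : ℝ) ∂P)
    have habs : |(∑ i ∈ Finset.range n, (DF γ ξ π n i ω : ℝ))/(n:ℝ)
        - (∑ i ∈ Finset.range n, (ξ i ω : ℝ))/(n:ℝ)| ≤ ε/2 := by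
      rw [hdiff, abs_of_nonneg (div_nonneg (hχnn n ω) hnpos.le)]
      exact herr
    linarith [hA]
  · -- part 3 : products
    intro ε hε
    have hm2γnn : (0:ℝ) ≤ ∫ ω, (γ 0 ω : ℝ)^2 ∂P := integral_nonneg (fun ω => by positivity)
    have hm2ξnn : (0:ℝ) ≤ ∫ ω, (ξ 0 ω : ℝ)^2 ∂P := integral_nonneg (fun ω => by positivity)
    set B1 : ℕ → Set Ω := fun n => {ω | ε/2 ≤ |(∑ i ∈ Finset.range n, (γ i ω : ℝ) * (ξ i ω : ℝ))/(n:ℝ)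
        - ∫ ω, (γ 0 ω : ℝ) * (ξ 0 ω : ℝ) ∂P|} with hB1def
    set B2 : ℕ → Set Ω := fun n => {ω | (1:ℝ) ≤ |(∑ i ∈ Finset.range n, (γ i ω : ℝ)^2)/(n:ℝ)
        - ∫ ω, (γ 0 ω : ℝ)^2 ∂P|} with hB2def
    set B3 : ℕ → Set Ω := fun n => {ω | (1:ℝ) ≤ |(∑ i ∈ Finset.range n, (ξ i ω : ℝ)^2)/(n:ℝ)
        - ∫ ω, (ξ 0 ω : ℝ)^2 ∂P|} with hB3def
    refine cond_to_zero P _ _ (fun n => B1 n ∪ B2 n ∪ B3 n) hDmeas hPD ?_ ?_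
    · -- inclusion
      filter_upwards [hsmall ((∫ ω, (γ 0 ω : ℝ)^2 ∂P) + (∫ ω, (ξ 0 ω : ℝ)^2 ∂P) + 4)
        ((κ-δ0)/2) (by linarith) (ε/2) (by positivity), eventually_ge_atTop 1] with n hsm hn1
      rintro ω ⟨hA, hD⟩
      simp only [Set.mem_setOf_eq] at hA
      by_contra hBc
      simp only [Set.mem_union, Set.mem_setOf_eq, hB1def, hB2def, hB3def, not_or, not_le] at hBc
      obtain ⟨⟨hB1, hB2⟩, hB3⟩ := hBc
      have hnpos : (0:ℝ) < n := by exact_mod_cast hn1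
      have hn0 : (n:ℝ) ≠ 0 := hnpos.ne'
      set m := ∫ ω, (γ 0 ω : ℝ) * (ξ 0 ω : ℝ) ∂P with hmdef
      set m2 := ∫ ω, (γ 0 ω : ℝ)^2 ∂P with hm2def
      set m2' := ∫ ω, (ξ 0 ω : ℝ)^2 ∂P with hm2'def
      set T := (n:ℝ)^((κ-δ0)/2) with hTdef
      have hTpos : 0 < T := Real.rpow_pos_of_pos hnpos _
      have hT0 : T ≠ 0 := hTpos.ne'
      set r := (n:ℝ)^(-((κ-δ0)/2)) with hrdef
      set SP := ∑ i ∈ Finset.range n, (NF γ ξ π n i ω : ℝ) * (DF γ ξ π n i ω : ℝ) with hSPdef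
      set SM := ∑ i ∈ Finset.range n, (γ i ω : ℝ) * (ξ i ω : ℝ) with hSMdef
      set S2 := ∑ i ∈ Finset.range n, (γ i ω : ℝ)^2 with hS2def
      set S2' := ∑ i ∈ Finset.range n, (ξ i ω : ℝ)^2 with hS2'def
      set Sτ := ∑ i ∈ Finset.range n, (tauF γ ξ π n i ω : ℝ) with hSτdef
      set Sχ := ∑ i ∈ Finset.range n, (chiF γ ξ π n i ω : ℝ) with hSχdef
      have hτsum : Sτ ≤ (n:ℝ)^(1-κ+δ0) := hSτ n ω hD
      have hχsum : Sχ ≤ (n:ℝ)^(1-κ+δ0) := hSχ n ω hD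
      have hτsumnn : 0 ≤ Sτ := hτnn n ω
      have hχsumnn : 0 ≤ Sχ := hχnn n ω
      have hlow : SM ≤ SP := by
        apply Finset.sum_le_sum
        intro i _
        have h1 : (γ i ω : ℝ) ≤ (NF γ ξ π n i ω : ℝ) := by
          exact_mod_cast Nat.le_add_right _ _
        have h2 : (ξ i ω : ℝ) ≤ (DF γ ξ π n i ω : ℝ) := by
          exact_mod_cast Nat.le_add_right _ _
        exact mul_le_mul h1 h2 (Nat.cast_nonneg _) (le_trans (Nat.cast_nonneg _) h1)
      have hup : SP ≤ SM + (S2/T + T*Sχ) + (S2'/T + T*Sτ) := by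
        have hper : ∀ i ∈ Finset.range n, (NF γ ξ π n i ω : ℝ) * (DF γ ξ π n i ω : ℝ)
            ≤ (γ i ω : ℝ) * (ξ i ω : ℝ) + ((γ i ω : ℝ)^2/T + T*(chiF γ ξ π n i ω : ℝ))
              + ((ξ i ω : ℝ)^2/T + T*(tauF γ ξ π n i ω : ℝ)) := by
          intro i _
          have hNFc : (NF γ ξ π n i ω : ℝ) = (γ i ω : ℝ) + (tauF γ ξ π n i ω : ℝ) := by
            simp [NF]
          have hDFc : (DF γ ξ π n i ω : ℝ) = (ξ i ω : ℝ) + (chiF γ ξ π n i ω : ℝ) := by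
            simp [DF]
          have hm1 := mul_ind_le (Nat.cast_nonneg (γ i ω) : (0:ℝ) ≤ (γ i ω : ℝ))
            hTpos (hchi01 n i ω)
          have hm2 := mul_ind_le (Nat.cast_nonneg (ξ i ω) : (0:ℝ) ≤ (ξ i ω : ℝ))
            hTpos (htau01 n i ω)
          have h0 := htauchi n i ω
          rw [hNFc, hDFc]
          have hexpand : ((γ i ω : ℝ) + (tauF γ ξ π n i ω : ℝ))
              * ((ξ i ω : ℝ) + (chiF γ ξ π n i ω : ℝ))
              = (γ i ω : ℝ) * (ξ i ω : ℝ) + (γ i ω : ℝ) * (chiF γ ξ π n i ω : ℝ)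
                + (ξ i ω : ℝ) * (tauF γ ξ π n i ω : ℝ)
                + (tauF γ ξ π n i ω : ℝ) * (chiF γ ξ π n i ω : ℝ) := by ring
          rw [hexpand, h0, add_zero]
          linarith [hm1, hm2]
        calc SP ≤ ∑ i ∈ Finset.range n, ((γ i ω : ℝ) * (ξ i ω : ℝ)
              + ((γ i ω : ℝ)^2/T + T*(chiF γ ξ π n i ω : ℝ))
              + ((ξ i ω : ℝ)^2/T + T*(tauF γ ξ π n i ω : ℝ))) := Finset.sum_le_sum hper
          _ = SM + (S2/T + T*Sχ) + (S2'/T + T*Sτ) := by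
              simp only [Finset.sum_add_distrib, ← Finset.sum_div, ← Finset.mul_sum]; rfl
      have hS2n : S2/(n:ℝ) ≤ m2 + 1 := by
        have h5 := abs_lt.1 hB2
        linarith [h5.2]
      have hS2'n : S2'/(n:ℝ) ≤ m2' + 1 := by
        have h5 := abs_lt.1 hB3
        linarith [h5.2]
      have hS2nn : 0 ≤ S2 := Finset.sum_nonneg fun i _ => by positivity
      have hS2'nn : 0 ≤ S2' := Finset.sum_nonneg fun i _ => by positivity
      have hτn : Sτ/(n:ℝ) ≤ r * r := by
        have h3 : Sτ/(n:ℝ) ≤ ((n:ℝ)^(1-κ+δ0))/(n:ℝ) := by gcongr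
        rw [hexp1 n hn1, hexp4 n hn1] at h3
        exact h3
      have hχn : Sχ/(n:ℝ) ≤ r * r := by
        have h3 : Sχ/(n:ℝ) ≤ ((n:ℝ)^(1-κ+δ0))/(n:ℝ) := by gcongr
        rw [hexp1 n hn1, hexp4 n hn1] at h3
        exact h3
      have hrle1 := hr1 n hn1
      have hrnn' := hrnn n
      have hTinv : T⁻¹ = r := hexp3 n hn1
      have hTr : T * (r * r) = r := by
        have h5 : r * r = (n:ℝ)^(-(κ-δ0)) := (hexp4 n hn1).symm
        rw [h5, hTdef, hrdef]
        exact hexp2 n hn1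
      have hbound : |SP/(n:ℝ) - m| ≤ |SM/(n:ℝ) - m|
          + ((S2/T + T*Sχ) + (S2'/T + T*Sτ))/(n:ℝ) := by
        have h0 : SP/(n:ℝ) - m = (SM/(n:ℝ) - m) + (SP - SM)/(n:ℝ) := by ring
        rw [h0]
        refine (abs_add_le _ _).trans ?_
        have h6 : |(SP - SM)/(n:ℝ)| = (SP - SM)/(n:ℝ) :=
          abs_of_nonneg (div_nonneg (by linarith) hnpos.le)
        rw [h6]
        have h7 : (SP - SM)/(n:ℝ) ≤ ((S2/T + T*Sχ) + (S2'/T + T*Sτ))/(n:ℝ) := by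
          gcongr
          linarith
        linarith
      have herr : ((S2/T + T*Sχ) + (S2'/T + T*Sτ))/(n:ℝ) ≤ (m2 + m2' + 4)*r := by
        have e0 : ((S2/T + T*Sχ) + (S2'/T + T*Sτ))/(n:ℝ)
            = (S2/(n:ℝ))*T⁻¹ + T*(Sχ/(n:ℝ)) + ((S2'/(n:ℝ))*T⁻¹ + T*(Sτ/(n:ℝ))) := by
          field_simp
        rw [e0, hTinv]
        have e1 : S2/(n:ℝ)*r ≤ (m2+1)*r := mul_le_mul_of_nonneg_right hS2n hrnn'
        have e1' : S2'/(n:ℝ)*r ≤ (m2'+1)*r := mul_le_mul_of_nonneg_right hS2'n hrnn'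
        have e2 : T*(Sχ/(n:ℝ)) ≤ T*(r*r) := mul_le_mul_of_nonneg_left hχn hTpos.le
        have e2' : T*(Sτ/(n:ℝ)) ≤ T*(r*r) := mul_le_mul_of_nonneg_left hτn hTpos.le
        rw [hTr] at e2 e2'
        linarith
      linarith [hA, hB1, hbound, herr, hsm]
    · -- the union has small probability
      have h1 := W3 (ε/2) (by positivity)
      have h2 := W4 1 one_pos
      have h3 := W5 1 one_pos
      have hle : ∀ n : ℕ, (P (B1 n ∪ B2 n ∪ B3 n)).toReal
          ≤ (P (B1 n)).toReal + (P (B2 n)).toReal + (P (B3 n)).toReal := by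
        intro n
        have hu : P (B1 n ∪ B2 n ∪ B3 n) ≤ P (B1 n) + P (B2 n) + P (B3 n) :=
          le_trans (measure_union_le _ _) (add_le_add_left (measure_union_le _ _) _)
        have h6 := ENNReal.toReal_mono (a := P (B1 n ∪ B2 n ∪ B3 n)) ?_ hu
        · rwa [ENNReal.toReal_add, ENNReal.toReal_add] at h6
          · exact measure_ne_top _ _
          · exact measure_ne_top _ _
          · exact ENNReal.add_ne_top.2 ⟨measure_ne_top _ _, measure_ne_top _ _⟩
          · exact measure_ne_top _ _
        · exact ENNReal.add_ne_top.2 ⟨ENNReal.add_ne_top.2 ⟨measure_ne_top _ _,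
            measure_ne_top _ _⟩, measure_ne_top _ _⟩
      refine squeeze_zero (fun n => ENNReal.toReal_nonneg) hle ?_
      have h4 := (h1.add h2).add h3
      simpa using h4
  · -- part 4 : independence identity
    have hind : IndepFun (fun ω => (γ 0 ω : ℝ)) (fun ω => (ξ 0 ω : ℝ)) P :=
      (hindep.indepFun (show (Sum.inl 0 : ℕ ⊕ ℕ) ≠ Sum.inr 0 by simp)).comp
        measurable_from_top measurable_from_top
    exact hind.integral_mul_eq_mul_integral (pairMeas (fun a b => (a : ℝ)) 0).aestronglyMeasurable
      (pairMeas (fun a b => (b : ℝ)) 0).aestronglyMeasurable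
  · -- part 5 : squares of N
    intro ε hε
    have hm2nn : (0:ℝ) ≤ ∫ ω, (γ 0 ω : ℝ)^2 ∂P := integral_nonneg (fun ω => by positivity)
    have hε' : (0:ℝ) < min (ε/2) 1 := lt_min (by positivity) one_pos
    refine cond_to_zero P _ _
      (fun n => {ω | min (ε/2) 1 ≤ |(∑ i ∈ Finset.range n, (γ i ω : ℝ)^2)/(n:ℝ)
        - ∫ ω, (γ 0 ω : ℝ)^2 ∂P|})
      hDmeas hPD ?_ (W4 _ hε')
    filter_upwards [hsmall (2*(∫ ω, (γ 0 ω : ℝ)^2 ∂P)+5) ((κ-δ0)/2) (by linarith) (ε/2)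
      (by positivity), eventually_ge_atTop 1] with n hsm hn1
    rintro ω ⟨hA, hD⟩
    simp only [Set.mem_setOf_eq] at hA ⊢
    by_contra hBc
    push_neg at hBc
    have hnpos : (0:ℝ) < n := by exact_mod_cast hn1
    have hn0 : (n:ℝ) ≠ 0 := hnpos.ne'
    set m2 := ∫ ω, (γ 0 ω : ℝ)^2 ∂P with hm2def
    set T := (n:ℝ)^((κ-δ0)/2) with hTdef
    have hTpos : 0 < T := Real.rpow_pos_of_pos hnpos _
    have hT0 : T ≠ 0 := hTpos.ne'
    set r := (n:ℝ)^(-((κ-δ0)/2)) with hrdef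
    set S2 := ∑ i ∈ Finset.range n, (γ i ω : ℝ)^2 with hS2def
    set Sτ := ∑ i ∈ Finset.range n, (tauF γ ξ π n i ω : ℝ) with hSτdef
    set SN := ∑ i ∈ Finset.range n, (NF γ ξ π n i ω : ℝ)^2 with hSNdef
    have hS2nn : 0 ≤ S2 := Finset.sum_nonneg fun i _ => by positivity
    have hτsum : Sτ ≤ (n:ℝ)^(1-κ+δ0) := hSτ n ω hD
    have hτsumnn : 0 ≤ Sτ := hτnn n ω
    have hlow : S2 ≤ SN := by
      apply Finset.sum_le_sum
      intro i _
      have hle : (γ i ω : ℝ) ≤ (NF γ ξ π n i ω : ℝ) := by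
        exact_mod_cast Nat.le_add_right _ _
      exact pow_le_pow_left₀ (Nat.cast_nonneg _) hle 2
    have hup : SN ≤ S2 + 2*(S2/T + T*Sτ) + Sτ := by
      have hper : ∀ i ∈ Finset.range n, (NF γ ξ π n i ω : ℝ)^2
          ≤ (γ i ω : ℝ)^2 + 2*((γ i ω : ℝ)^2/T + T*(tauF γ ξ π n i ω : ℝ))
            + (tauF γ ξ π n i ω : ℝ) := by
        intro i _
        have hNFc : (NF γ ξ π n i ω : ℝ) = (γ i ω : ℝ) + (tauF γ ξ π n i ω : ℝ) := by
          simp [NF]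
        have hmul := mul_ind_le (Nat.cast_nonneg (γ i ω) : (0:ℝ) ≤ (γ i ω : ℝ))
          hTpos (htau01 n i ω)
        have hτsq : (tauF γ ξ π n i ω : ℝ)^2 = (tauF γ ξ π n i ω : ℝ) := by
          rcases htau01 n i ω with h | h <;> rw [h] <;> norm_num
        rw [hNFc]
        nlinarith [hmul, hτsq]
      calc SN ≤ ∑ i ∈ Finset.range n, ((γ i ω : ℝ)^2
            + 2*((γ i ω : ℝ)^2/T + T*(tauF γ ξ π n i ω : ℝ))
            + (tauF γ ξ π n i ω : ℝ)) := Finset.sum_le_sum hper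
        _ = S2 + 2*(S2/T + T*Sτ) + Sτ := by
            rw [Finset.sum_add_distrib, Finset.sum_add_distrib, ← Finset.mul_sum,
              Finset.sum_add_distrib, Finset.sum_div, ← Finset.mul_sum]
    have hS2n : S2/(n:ℝ) ≤ m2 + 1 := by
      have h5 := abs_lt.1 (lt_of_lt_of_le hBc (min_le_right _ _))
      linarith [h5.2]
    have hτn : Sτ/(n:ℝ) ≤ r * r := by
      have h3 : Sτ/(n:ℝ) ≤ ((n:ℝ)^(1-κ+δ0))/(n:ℝ) := by
        gcongr
      rw [hexp1 n hn1, hexp4 n hn1] at h3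
      exact h3
    have hrle1 := hr1 n hn1
    have hrnn' := hrnn n
    have hTinv : T⁻¹ = r := hexp3 n hn1
    have hTr : T * (r * r) = r := by
      have h5 : r * r = (n:ℝ)^(-(κ-δ0)) := (hexp4 n hn1).symm
      rw [h5, hTdef, hrdef]
      exact hexp2 n hn1
    have hbound : |SN/(n:ℝ) - m2| ≤ |S2/(n:ℝ) - m2| + (2*(S2/T + T*Sτ) + Sτ)/(n:ℝ) := by
      have h0 : SN/(n:ℝ) - m2 = (S2/(n:ℝ) - m2) + (SN - S2)/(n:ℝ) := by ring
      rw [h0]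
      refine (abs_add_le _ _).trans ?_
      have h6 : |(SN - S2)/(n:ℝ)| = (SN - S2)/(n:ℝ) :=
        abs_of_nonneg (div_nonneg (by linarith) hnpos.le)
      rw [h6]
      have h7 : (SN - S2)/(n:ℝ) ≤ (2*(S2/T + T*Sτ) + Sτ)/(n:ℝ) := by
        gcongr
        linarith
      linarith
    have herr : (2*(S2/T + T*Sτ) + Sτ)/(n:ℝ) ≤ (2*m2+5)*r := by
      have e0 : (2*(S2/T + T*Sτ) + Sτ)/(n:ℝ)
          = 2*((S2/(n:ℝ))*T⁻¹) + 2*(T*(Sτ/(n:ℝ))) + Sτ/(n:ℝ) := by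
        field_simp
      rw [e0, hTinv]
      have e1 : S2/(n:ℝ)*r ≤ (m2+1)*r :=
        mul_le_mul_of_nonneg_right hS2n hrnn'
      have e2 : T*(Sτ/(n:ℝ)) ≤ T*(r*r) :=
        mul_le_mul_of_nonneg_left hτn hTpos.le
      rw [hTr] at e2
      have e3 : Sτ/(n:ℝ) ≤ r := hτn.trans (by nlinarith [hrle1, hrnn'])
      linarith
    have hεmin1 : min (ε/2) 1 ≤ ε/2 := min_le_left _ _
    linarith [hA, hBc, hbound, herr, hsm]
  · -- part 6 : squares of D
    intro ε hε
    have hm2nn : (0:ℝ) ≤ ∫ ω, (ξ 0 ω : ℝ)^2 ∂P := integral_nonneg (fun ω => by positivity)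
    have hε' : (0:ℝ) < min (ε/2) 1 := lt_min (by positivity) one_pos
    refine cond_to_zero P _ _
      (fun n => {ω | min (ε/2) 1 ≤ |(∑ i ∈ Finset.range n, (ξ i ω : ℝ)^2)/(n:ℝ)
        - ∫ ω, (ξ 0 ω : ℝ)^2 ∂P|})
      hDmeas hPD ?_ (W5 _ hε')
    filter_upwards [hsmall (2*(∫ ω, (ξ 0 ω : ℝ)^2 ∂P)+5) ((κ-δ0)/2) (by linarith) (ε/2)
      (by positivity), eventually_ge_atTop 1] with n hsm hn1
    rintro ω ⟨hA, hD⟩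
    simp only [Set.mem_setOf_eq] at hA ⊢
    by_contra hBc
    push_neg at hBc
    have hnpos : (0:ℝ) < n := by exact_mod_cast hn1
    have hn0 : (n:ℝ) ≠ 0 := hnpos.ne'
    set m2 := ∫ ω, (ξ 0 ω : ℝ)^2 ∂P with hm2def
    set T := (n:ℝ)^((κ-δ0)/2) with hTdef
    have hTpos : 0 < T := Real.rpow_pos_of_pos hnpos _
    have hT0 : T ≠ 0 := hTpos.ne'
    set r := (n:ℝ)^(-((κ-δ0)/2)) with hrdef
    set S2 := ∑ i ∈ Finset.range n, (ξ i ω : ℝ)^2 with hS2def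
    set Sχ := ∑ i ∈ Finset.range n, (chiF γ ξ π n i ω : ℝ) with hSχdef
    set SD := ∑ i ∈ Finset.range n, (DF γ ξ π n i ω : ℝ)^2 with hSDdef
    have hS2nn : 0 ≤ S2 := Finset.sum_nonneg fun i _ => by positivity
    have hχsum : Sχ ≤ (n:ℝ)^(1-κ+δ0) := hSχ n ω hD
    have hχsumnn : 0 ≤ Sχ := hχnn n ω
    have hlow : S2 ≤ SD := by
      apply Finset.sum_le_sum
      intro i _
      have hle : (ξ i ω : ℝ) ≤ (DF γ ξ π n i ω : ℝ) := by
        exact_mod_cast Nat.le_add_right _ _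
      exact pow_le_pow_left₀ (Nat.cast_nonneg _) hle 2
    have hup : SD ≤ S2 + 2*(S2/T + T*Sχ) + Sχ := by
      have hper : ∀ i ∈ Finset.range n, (DF γ ξ π n i ω : ℝ)^2
          ≤ (ξ i ω : ℝ)^2 + 2*((ξ i ω : ℝ)^2/T + T*(chiF γ ξ π n i ω : ℝ))
            + (chiF γ ξ π n i ω : ℝ) := by
        intro i _
        have hDFc : (DF γ ξ π n i ω : ℝ) = (ξ i ω : ℝ) + (chiF γ ξ π n i ω : ℝ) := by
          simp [DF]
        have hmul := mul_ind_le (Nat.cast_nonneg (ξ i ω) : (0:ℝ) ≤ (ξ i ω : ℝ))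
          hTpos (hchi01 n i ω)
        have hχsq : (chiF γ ξ π n i ω : ℝ)^2 = (chiF γ ξ π n i ω : ℝ) := by
          rcases hchi01 n i ω with h | h <;> rw [h] <;> norm_num
        rw [hDFc]
        nlinarith [hmul, hχsq]
      calc SD ≤ ∑ i ∈ Finset.range n, ((ξ i ω : ℝ)^2
            + 2*((ξ i ω : ℝ)^2/T + T*(chiF γ ξ π n i ω : ℝ))
            + (chiF γ ξ π n i ω : ℝ)) := Finset.sum_le_sum hper
        _ = S2 + 2*(S2/T + T*Sχ) + Sχ := by
            rw [Finset.sum_add_distrib, Finset.sum_add_distrib, ← Finset.mul_sum,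
              Finset.sum_add_distrib, Finset.sum_div, ← Finset.mul_sum]
    have hS2n : S2/(n:ℝ) ≤ m2 + 1 := by
      have h5 := abs_lt.1 (lt_of_lt_of_le hBc (min_le_right _ _))
      linarith [h5.2]
    have hχn : Sχ/(n:ℝ) ≤ r * r := by
      have h3 : Sχ/(n:ℝ) ≤ ((n:ℝ)^(1-κ+δ0))/(n:ℝ) := by
        gcongr
      rw [hexp1 n hn1, hexp4 n hn1] at h3
      exact h3
    have hrle1 := hr1 n hn1
    have hrnn' := hrnn n
    have hTinv : T⁻¹ = r := hexp3 n hn1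
    have hTr : T * (r * r) = r := by
      have h5 : r * r = (n:ℝ)^(-(κ-δ0)) := (hexp4 n hn1).symm
      rw [h5, hTdef, hrdef]
      exact hexp2 n hn1
    have hbound : |SD/(n:ℝ) - m2| ≤ |S2/(n:ℝ) - m2| + (2*(S2/T + T*Sχ) + Sχ)/(n:ℝ) := by
      have h0 : SD/(n:ℝ) - m2 = (S2/(n:ℝ) - m2) + (SD - S2)/(n:ℝ) := by ring
      rw [h0]
      refine (abs_add_le _ _).trans ?_
      have h6 : |(SD - S2)/(n:ℝ)| = (SD - S2)/(n:ℝ) :=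
        abs_of_nonneg (div_nonneg (by linarith) hnpos.le)
      rw [h6]
      have h7 : (SD - S2)/(n:ℝ) ≤ (2*(S2/T + T*Sχ) + Sχ)/(n:ℝ) := by
        gcongr
        linarith
      linarith
    have herr : (2*(S2/T + T*Sχ) + Sχ)/(n:ℝ) ≤ (2*m2+5)*r := by
      have e0 : (2*(S2/T + T*Sχ) + Sχ)/(n:ℝ)
          = 2*((S2/(n:ℝ))*T⁻¹) + 2*(T*(Sχ/(n:ℝ))) + Sχ/(n:ℝ) := by
        field_simp
      rw [e0, hTinv]
      have e1 : S2/(n:ℝ)*r ≤ (m2+1)*r :=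
        mul_le_mul_of_nonneg_right hS2n hrnn'
      have e2 : T*(Sχ/(n:ℝ)) ≤ T*(r*r) :=
        mul_le_mul_of_nonneg_left hχn hTpos.le
      rw [hTr] at e2
      have e3 : Sχ/(n:ℝ) ≤ r := hχn.trans (by nlinarith [hrle1, hrnn'])
      linarith
    have hεmin1 : min (ε/2) 1 ≤ ε/2 := min_le_left _ _
    linarith [hA, hBc, hbound, herr, hsm]
end
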